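/- arXiv:2101.08356 — 8 statements merged into one kernel-verified Lean document; each statement's English description precedes it below -/
import Mathlib

section
/- For any b ∈ ℝ, the energy E(t) = (1/2)ẏ_b(t)² + (1/4)y_b(t)⁴ − (1/2)y_b(t)² of the solution y_b is differentiable on (0,∞) with Ė(t) = −(2/t)ẏ_b(t)², and in particular E is nonincreasing on [0,∞) with E(t) ≤ E(0) = b⁴/4 − b²/2 for all t ≥ 0. -/
noncomputable section

/-- `y` solves the ODE `y'' + (2/t) y' + (y^3 - y) = 0` on `(0,∞)` with
`y(0) = b`, `y'(0) = 0`. -/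
def IsSolution (b : ℝ) (y : ℝ → ℝ) : Prop :=
  y 0 = b ∧ deriv y 0 = 0 ∧
  (∀ t : ℝ, 0 ≤ t → DifferentiableAt ℝ y t) ∧
  (∀ t : ℝ, 0 < t → DifferentiableAt ℝ (deriv y) t) ∧
  ∀ t : ℝ, 0 < t →
    deriv (deriv y) t + (2 / t) * deriv y t + ((y t) ^ 3 - y t) = 0

/-- The energy `E(t) = (1/2) y'(t)^2 + (1/4) y(t)^4 - (1/2) y(t)^2`. -/
def energy (y : ℝ → ℝ) (t : ℝ) : ℝ :=
  (1 / 2) * (deriv y t) ^ 2 + (1 / 4) * (y t) ^ 4 - (1 / 2) * (y t) ^ 2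

open Set Filter Topology

/-- By the mean value theorem and `y'(0) = 0`, there are points arbitrarily close to `0`
where `deriv y` is small. -/
lemma exists_deriv_small (y : ℝ → ℝ)
    (hdiff : ∀ t : ℝ, 0 ≤ t → DifferentiableAt ℝ y t)
    (hd0 : deriv y 0 = 0) {s ε : ℝ} (hs : 0 < s) (hε : 0 < ε) :
    ∃ ξ ∈ Set.Ioo 0 s, |deriv y ξ| < ε := by
  have h0 : HasDerivAt y 0 0 := by
    have := (hdiff 0 le_rfl).hasDerivAt
    rwa [hd0] at this
  have hslope : Tendsto (slope y 0) (𝓝[>] (0:ℝ)) (𝓝 0) :=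
    (hasDerivAt_iff_tendsto_slope.1 h0).mono_left
      (nhdsWithin_mono _ (fun x hx => ne_of_gt hx))
  have h1 : ∀ᶠ t in 𝓝[>] (0:ℝ), |slope y 0 t| < ε := by
    have := hslope (Metric.ball_mem_nhds (0:ℝ) hε)
    filter_upwards [this] with t ht
    simpa [Real.dist_eq] using ht
  have h2 : ∀ᶠ t in 𝓝[>] (0:ℝ), t ∈ Set.Ioo 0 s :=
    eventually_of_mem (Ioo_mem_nhdsGT_of_mem ⟨le_rfl, hs⟩) (fun x hx => hx)
  obtain ⟨t, ht1, ht2⟩ := (h1.and h2).exists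
  obtain ⟨ξ, hξ, hξd⟩ := exists_hasDerivAt_eq_slope y (deriv y) ht2.1
    (fun x hx => (hdiff x hx.1).continuousAt.continuousWithinAt)
    (fun x hx => (hdiff x hx.1.le).hasDerivAt)
  refine ⟨ξ, ⟨hξ.1, hξ.2.trans ht2.2⟩, ?_⟩
  rw [hξd]
  have : slope y 0 t = (y t - y 0) / (t - 0) := slope_def_field y 0 t
  rw [this] at ht1
  exact ht1

theorem energy_dissipation (b : ℝ) (y : ℝ → ℝ) (hy : IsSolution b y) :
    (∀ t : ℝ, 0 < t →
      HasDerivAt (energy y) (-(2 / t) * (deriv y t) ^ 2) t) ∧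
    AntitoneOn (energy y) (Set.Ici 0) ∧
    energy y 0 = b ^ 4 / 4 - b ^ 2 / 2 ∧
    ∀ t : ℝ, 0 ≤ t → energy y t ≤ energy y 0 := by
  obtain ⟨h0, hd0, hdiff, hdiff2, hode⟩ := hy
  -- Part 1 : derivative of the energy
  have hE : ∀ t : ℝ, 0 < t →
      HasDerivAt (energy y) (-(2 / t) * (deriv y t) ^ 2) t := by
    intro t ht
    have hyt : HasDerivAt y (deriv y t) t := (hdiff t ht.le).hasDerivAt
    have hdt : HasDerivAt (deriv y) (deriv (deriv y) t) t := (hdiff2 t ht).hasDerivAt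
    have h1 : HasDerivAt (energy y)
        ((1/2) * (2 * deriv y t ^ 1 * deriv (deriv y) t)
          + (1/4) * (4 * y t ^ 3 * deriv y t)
          - (1/2) * (2 * y t ^ 1 * deriv y t)) t := by
      have := (((hdt.pow 2).const_mul (1/2:ℝ)).add
        ((hyt.pow 4).const_mul (1/4:ℝ))).sub ((hyt.pow 2).const_mul (1/2:ℝ))
      exact this.congr_deriv (by norm_num)
    convert h1 using 1
    have hod := hode t ht
    have h2 : deriv (deriv y) t = -((2/t) * deriv y t) - ((y t)^3 - y t) := by linarith
    rw [h2]
    ring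
  -- bound on y - y^3 near 0
  have hc : ContinuousAt y 0 := (hdiff 0 le_rfl).continuousAt
  obtain ⟨δ₀, hδ₀, hball⟩ := Metric.continuousAt_iff.1 hc 1 one_pos
  set δ := δ₀ / 2 with hδdef
  have hδpos : 0 < δ := by positivity
  have hyb : ∀ x ∈ Set.Ioc 0 δ, |y x| ≤ |b| + 1 := by
    intro x hx
    have : dist x 0 < δ₀ := by
      rw [Real.dist_eq, sub_zero, abs_of_pos hx.1]
      calc x ≤ δ := hx.2
        _ < δ₀ := by rw [hδdef]; linarith
    have := hball this
    rw [Real.dist_eq, h0] at this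
    have h1 : |y x| - |b| ≤ |y x - b| := by
      have := abs_sub_abs_le_abs_sub (y x) b; linarith
    linarith
  set M : ℝ := (|b| + 1) + (|b| + 1)^3 with hMdef
  have hM0 : 0 ≤ M := by positivity
  have hbound : ∀ x ∈ Set.Ioc 0 δ, |y x - (y x)^3| ≤ M := by
    intro x hx
    have h1 := hyb x hx
    calc |y x - (y x)^3| ≤ |y x| + |(y x)^3| := abs_sub _ _
      _ = |y x| + |y x|^3 := by rw [abs_pow]
      _ ≤ (|b| + 1) + (|b| + 1)^3 := by
          gcongr
      _ = M := rfl
  -- derivative of φ(t) = t^2 * deriv y t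
  have hφ : ∀ t : ℝ, 0 < t →
      HasDerivAt (fun s => s^2 * deriv y s) (t^2 * (y t - (y t)^3)) t := by
    intro t ht
    have hdt : HasDerivAt (deriv y) (deriv (deriv y) t) t := (hdiff2 t ht).hasDerivAt
    have := (hasDerivAt_pow 2 t).mul hdt
    refine this.congr_deriv ?_
    have hod := hode t ht
    have h2 : deriv (deriv y) t = -((2/t) * deriv y t) - ((y t)^3 - y t) := by linarith
    rw [h2]
    have ht' : t ≠ 0 := ne_of_gt ht
    field_simp
    try ring
  -- derivative of cubic correction
  have hcub : ∀ t : ℝ, HasDerivAt (fun s : ℝ => M * s^3 / 3) (M * (3 * t^2) / 3) t := by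
    intro t
    have := ((hasDerivAt_pow 3 t).const_mul M).div_const 3
    exact this.congr_deriv (by norm_num)
  have huDer : ∀ t : ℝ, 0 < t →
      HasDerivAt (fun s => s^2 * deriv y s - M * s^3 / 3)
        (t^2 * (y t - (y t)^3) - M * (3 * t^2) / 3) t :=
    fun t ht => (hφ t ht).sub (hcub t)
  have hvDer : ∀ t : ℝ, 0 < t →
      HasDerivAt (fun s => s^2 * deriv y s + M * s^3 / 3)
        (t^2 * (y t - (y t)^3) + M * (3 * t^2) / 3) t :=
    fun t ht => (hφ t ht).add (hcub t)
  -- monotonicity of the corrected functions on (0, δ]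
  have hu : AntitoneOn (fun s => s^2 * deriv y s - M * s^3 / 3) (Set.Ioc 0 δ) := by
    apply antitoneOn_of_deriv_nonpos (convex_Ioc 0 δ)
    · exact fun t ht => (huDer t ht.1).differentiableAt.continuousAt.continuousWithinAt
    · rw [interior_Ioc]
      exact fun t ht => (huDer t ht.1).differentiableAt.differentiableWithinAt
    · rw [interior_Ioc]
      intro x hx
      rw [(huDer x hx.1).deriv]
      have h1 := hbound x ⟨hx.1, hx.2.le⟩
      have h2 : y x - (y x)^3 ≤ M := (abs_le.1 h1).2
      nlinarith [sq_nonneg x]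
  have hv : MonotoneOn (fun s => s^2 * deriv y s + M * s^3 / 3) (Set.Ioc 0 δ) := by
    apply monotoneOn_of_deriv_nonneg (convex_Ioc 0 δ)
    · exact fun t ht => (hvDer t ht.1).differentiableAt.continuousAt.continuousWithinAt
    · rw [interior_Ioc]
      exact fun t ht => (hvDer t ht.1).differentiableAt.differentiableWithinAt
    · rw [interior_Ioc]
      intro x hx
      rw [(hvDer x hx.1).deriv]
      have h1 := hbound x ⟨hx.1, hx.2.le⟩
      have h2 : -M ≤ y x - (y x)^3 := (abs_le.1 h1).1
      nlinarith [sq_nonneg x]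
  -- key bound : |t^2 * deriv y t| ≤ M t^3/3 on (0, δ]
  have hφbound : ∀ s ∈ Set.Ioc 0 δ, |s^2 * deriv y s| ≤ M * s^3 / 3 := by
    intro s hs
    by_contra hcon
    push_neg at hcon
    have hcpos : 0 < |s^2 * deriv y s| - M * s^3 / 3 := by linarith
    have hεpos : 0 < (|s^2 * deriv y s| - M * s^3 / 3) / s^2 :=
      div_pos hcpos (pow_pos hs.1 2)
    obtain ⟨ξ, hξ, hξε⟩ := exists_deriv_small y hdiff hd0 hs.1 hεpos
    have hξmem : ξ ∈ Set.Ioc 0 δ := ⟨hξ.1, hξ.2.le.trans hs.2⟩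
    have h1 := hu hξmem hs hξ.2.le
    have h2 := hv hξmem hs hξ.2.le
    simp only at h1 h2
    have hMξ : 0 ≤ M * ξ^3 / 3 :=
      div_nonneg (mul_nonneg hM0 (pow_nonneg hξ.1.le 3)) (by norm_num)
    have habs1 := le_abs_self (deriv y ξ)
    have habs2 := neg_abs_le (deriv y ξ)
    have hξ2pos : (0:ℝ) < ξ^2 := pow_pos hξ.1 2
    have hξ2le : ξ^2 ≤ s^2 := by nlinarith [hξ.1, hξ.2]
    -- |φ ξ| ≥ |φ s| - M s^3/3
    have key : |s^2 * deriv y s| - M * s^3 / 3 ≤ ξ^2 * |deriv y ξ| := by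
      rcases abs_cases (s^2 * deriv y s) with ⟨habs, _⟩ | ⟨habs, _⟩ <;> rw [habs] <;>
        nlinarith [hξ2pos.le]
    have hcs : (|s^2 * deriv y s| - M * s^3 / 3) / s^2 ≤ |deriv y ξ| := by
      calc (|s^2 * deriv y s| - M * s^3 / 3) / s^2
          ≤ (|s^2 * deriv y s| - M * s^3 / 3) / ξ^2 := by gcongr
        _ ≤ |deriv y ξ| := by rw [div_le_iff₀ hξ2pos]; linarith
    linarith
  -- hence |deriv y s| ≤ M s / 3 near 0, so deriv y → 0 = deriv y 0 from the right
  have hdbound : ∀ s ∈ Set.Ioc 0 δ, |deriv y s| ≤ M * s / 3 := by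
    intro s hs
    have h1 := hφbound s hs
    rw [abs_mul, abs_of_nonneg (sq_nonneg s)] at h1
    have hs2 : (0:ℝ) < s^2 := pow_pos hs.1 2
    nlinarith
  have hdtend : Tendsto (deriv y) (𝓝[>] (0:ℝ)) (𝓝 0) := by
    apply squeeze_zero_norm' (a := fun s => M * s / 3)
    · filter_upwards [Ioc_mem_nhdsGT hδpos] with t ht
      simpa [Real.norm_eq_abs] using hdbound t ht
    · have : Tendsto (fun s : ℝ => M * s / 3) (𝓝 0) (𝓝 (M * 0 / 3)) :=
        ((continuous_const.mul continuous_id).div_const 3).tendsto 0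
      simpa using this.mono_left nhdsWithin_le_nhds
  -- continuity of the energy at 0 from the right
  have hE0cont : ContinuousWithinAt (energy y) (Set.Ici 0) 0 := by
    rw [← Set.Ioi_insert, continuousWithinAt_insert_self]
    have hytend : Tendsto y (𝓝[>] (0:ℝ)) (𝓝 (y 0)) :=
      hc.continuousWithinAt.tendsto
    have h1 : Tendsto (energy y) (𝓝[>] (0:ℝ))
        (𝓝 ((1/2) * (0:ℝ)^2 + (1/4) * (y 0)^4 - (1/2) * (y 0)^2)) := by
      unfold energy
      exact (((hdtend.pow 2).const_mul (1/2:ℝ)).add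
        ((hytend.pow 4).const_mul (1/4:ℝ))).sub ((hytend.pow 2).const_mul (1/2:ℝ))
    have h2 : energy y 0 = (1/2) * (0:ℝ)^2 + (1/4) * (y 0)^4 - (1/2) * (y 0)^2 := by
      simp [energy, hd0]
    rw [ContinuousWithinAt, h2]
    exact h1
  -- antitonicity on [0, ∞)
  have hanti : AntitoneOn (energy y) (Set.Ici 0) := by
    apply antitoneOn_of_deriv_nonpos (convex_Ici 0)
    · intro t ht
      rcases eq_or_lt_of_le (mem_Ici.1 ht) with h | h
      · rw [← h]; exact hE0cont
      · exact (hE t h).differentiableAt.continuousAt.continuousWithinAt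
    · rw [interior_Ici]
      exact fun t ht => (hE t ht).differentiableAt.differentiableWithinAt
    · rw [interior_Ici]
      intro t ht
      have ht' : (0:ℝ) < t := ht
      rw [(hE t ht').deriv]
      have h1 : 0 ≤ 2 / t * (deriv y t)^2 := by positivity
      linarith
  refine ⟨hE, hanti, ?_, ?_⟩
  · simp [energy, hd0, h0]; ring
  · intro t ht
    exact hanti self_mem_Ici ht ht
end
end

section
/- If b ≥ √2, then the solution y_b satisfies y_b(t)²(y_b(t)² − 2) ≤ b²(b² − 2) and hence |y_b(t)| ≤ b for all t ≥ 0. -/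
noncomputable section

lemma energy_hasDerivAt {b : ℝ} {y : ℝ → ℝ} (hy : IsSolution b y) {t : ℝ} (ht : 0 < t) :
    HasDerivAt (energy y) (-(2 / t) * (deriv y t) ^ 2) t := by
  have h1 : HasDerivAt y (deriv y t) t := (hy.2.2.1 t ht.le).hasDerivAt
  have h2 : HasDerivAt (deriv y) (deriv (deriv y) t) t := (hy.2.2.2.1 t ht).hasDerivAt
  have h := (((h2.pow 2).const_mul ((1:ℝ)/2)).add ((h1.pow 4).const_mul ((1:ℝ)/4))).sub
      ((h1.pow 2).const_mul ((1:ℝ)/2))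
  have heq := hy.2.2.2.2 t ht
  convert h using 1
  · rfl
  · rfl
  · funext s; simp only [energy, Pi.add_apply, Pi.sub_apply, Pi.pow_apply]
  have hdd : deriv (deriv y) t = -(2 / t) * deriv y t - ((y t) ^ 3 - y t) := by linarith
  rw [hdd]; ring

lemma energy_antitone {b : ℝ} {y : ℝ → ℝ} (hy : IsSolution b y) :
    AntitoneOn (energy y) (Set.Ioi 0) := by
  have hint : interior (Set.Ioi (0:ℝ)) = Set.Ioi 0 := interior_Ioi
  apply antitoneOn_of_deriv_nonpos (convex_Ioi 0)
  · exact fun t ht => ((energy_hasDerivAt hy ht).continuousAt).continuousWithinAt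
  · rw [hint]; exact fun t ht => ((energy_hasDerivAt hy ht).differentiableAt).differentiableWithinAt
  · rw [hint]; intro t ht
    simp only [Set.mem_Ioi] at ht
    rw [(energy_hasDerivAt hy ht).deriv]
    have h2t : (0:ℝ) < 2 / t := by positivity
    nlinarith [sq_nonneg (deriv y t)]

lemma energy_le {b : ℝ} {y : ℝ → ℝ} (hy : IsSolution b y) {t : ℝ} (ht : 0 < t) :
    energy y t ≤ energy y 0 := by
  apply le_of_forall_pos_le_add
  intro ε hε
  set η : ℝ := min 1 ε with hη
  have hη0 : 0 < η := lt_min one_pos hε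
  set g : ℝ → ℝ := fun s => (1 / 4) * (y s) ^ 4 - (1 / 2) * (y s) ^ 2 with hg
  have hgc : ContinuousAt g 0 := by
    have hyc := (hy.2.2.1 0 le_rfl).continuousAt
    fun_prop
  obtain ⟨δ, hδ0, hδ⟩ := Metric.continuousAt_iff.mp hgc (ε / 2) (by positivity)
  have hd : HasDerivAt y 0 0 := by
    have := (hy.2.2.1 0 le_rfl).hasDerivAt
    rwa [hy.2.1] at this
  have hslope := hasDerivAt_iff_tendsto_slope.mp hd
  have hsl : ∀ᶠ s in nhdsWithin (0:ℝ) {(0:ℝ)}ᶜ, |slope y 0 s| < η := by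
    have := Metric.tendsto_nhds.mp hslope η hη0
    filter_upwards [this] with s hs
    simpa [Real.dist_eq] using hs
  have hsl' : ∀ᶠ s in nhdsWithin (0:ℝ) (Set.Ioi 0), |slope y 0 s| < η :=
    hsl.filter_mono (nhdsWithin_mono 0 (fun x hx => ne_of_gt hx))
  have hmem : Set.Ioo (0:ℝ) (min δ t) ∈ nhdsWithin (0:ℝ) (Set.Ioi 0) :=
    Ioo_mem_nhdsGT_of_mem ⟨le_rfl, lt_min hδ0 ht⟩
  obtain ⟨s, hs1, hs2⟩ := (hsl'.and (Filter.eventually_of_mem hmem (fun x hx => hx))).exists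
  obtain ⟨hs0, hsm⟩ := hs2
  have hcont : ContinuousOn y (Set.Icc 0 s) := fun x hx =>
    ((hy.2.2.1 x hx.1).continuousAt).continuousWithinAt
  have hdiff : DifferentiableOn ℝ y (Set.Ioo 0 s) := fun x hx =>
    ((hy.2.2.1 x hx.1.le).differentiableWithinAt)
  obtain ⟨c, hc, hcd⟩ := exists_deriv_eq_slope y hs0 hcont hdiff
  have hc0 : 0 < c := hc.1
  have hcδ : c < δ := lt_of_lt_of_le (hc.2.trans hsm) (min_le_left _ _)
  have hct : c ≤ t := le_of_lt (lt_of_lt_of_le (hc.2.trans hsm) (min_le_right _ _))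
  have hslc : |deriv y c| < η := by
    have heq2 : (y s - y 0) / (s - 0) = slope y 0 s := (slope_def_field y 0 s).symm
    rw [hcd, heq2]
    exact hs1
  have hgc2 : |g c - g 0| < ε / 2 := by
    have := hδ (x := c) (by simpa [Real.dist_eq, abs_of_pos hc0] using hcδ)
    simpa [Real.dist_eq] using this
  have hEt : energy y t ≤ energy y c := energy_antitone hy hc0 (lt_of_lt_of_le hc0 hct) hct
  have hEc : energy y c ≤ ε / 2 + g c := by
    have h1 : (deriv y c) ^ 2 ≤ η ^ 2 := by
      nlinarith [sq_abs (deriv y c), abs_nonneg (deriv y c)]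
    have h2 : η ^ 2 ≤ ε := by
      have h3 : η ≤ 1 := min_le_left _ _
      have h4 : η ≤ ε := min_le_right _ _
      nlinarith
    simp only [energy, hg]
    nlinarith
  have hE0 : energy y 0 = g 0 := by simp [energy, hy.2.1, hg]
  have hgg : g c ≤ g 0 + ε / 2 := by
    have := abs_lt.mp hgc2
    linarith [this.1, this.2]
  calc energy y t ≤ energy y c := hEt
    _ ≤ ε / 2 + g c := hEc
    _ ≤ ε / 2 + (g 0 + ε / 2) := by linarith
    _ = energy y 0 + ε := by rw [hE0]; ring

theorem solution_bounded (b : ℝ) (hb : Real.sqrt 2 ≤ b)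
    (y : ℝ → ℝ) (hy : IsSolution b y) :
    ∀ t : ℝ, 0 ≤ t →
      (y t) ^ 2 * ((y t) ^ 2 - 2) ≤ b ^ 2 * (b ^ 2 - 2) ∧ |y t| ≤ b := by
  have hb0 : (0:ℝ) ≤ b := le_trans (Real.sqrt_nonneg 2) hb
  have hb2 : (2:ℝ) ≤ b ^ 2 := by
    have := Real.sq_sqrt (by norm_num : (0:ℝ) ≤ 2)
    nlinarith [Real.sqrt_nonneg 2]
  intro t ht
  have key : (y t) ^ 2 * ((y t) ^ 2 - 2) ≤ b ^ 2 * (b ^ 2 - 2) := by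
    rcases eq_or_lt_of_le ht with h | h
    · rw [← h, hy.1]
    · have hE := energy_le hy h
      have hE0 : energy y 0 = (1/4) * b ^ 4 - (1/2) * b ^ 2 := by
        simp [energy, hy.1, hy.2.1]
      rw [hE0] at hE
      have := sq_nonneg (deriv y t)
      simp only [energy] at hE
      nlinarith
  refine ⟨key, ?_⟩
  have hy2 : (y t) ^ 2 ≤ b ^ 2 := by
    by_contra hlt
    push_neg at hlt
    nlinarith
  calc |y t| = Real.sqrt ((y t) ^ 2) := (Real.sqrt_sq_eq_abs _).symm
    _ ≤ Real.sqrt (b ^ 2) := Real.sqrt_le_sqrt hy2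
    _ = b := Real.sqrt_sq hb0
end
end

section
/- If b ≥ √2, then for all t ≥ 0 the solution y_b satisfies |ẏ_b(t)| ≤ (t/3)·f(b) and 0 ≤ b − y_b(t) ≤ (t²/6)·f(b), where f(b) = b³ − b. -/
noncomputable section

namespace Apriori

variable {b : ℝ} {y : ℝ → ℝ}

/-- the forcing integrand -/
def g (y : ℝ → ℝ) (s : ℝ) : ℝ := s ^ 2 * ((y s) ^ 3 - y s)

lemma cont_y (hy : IsSolution b y) : ∀ t : ℝ, 0 ≤ t → ContinuousAt y t :=
  fun t ht => (hy.2.2.1 t ht).continuousAt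

lemma cont_g (hy : IsSolution b y) : ∀ t : ℝ, 0 ≤ t → ContinuousAt (g y) t := by
  intro t ht
  exact ((continuous_pow 2).continuousAt (x := t)).mul (((cont_y hy t ht).pow 3).sub (cont_y hy t ht))

lemma cont_dy (hy : IsSolution b y) : ∀ t : ℝ, 0 < t → ContinuousAt (deriv y) t :=
  fun t ht => (hy.2.2.2.1 t ht).continuousAt

/-- derivative of `t ↦ t^2 * y'(t)` -/
lemma hasDeriv_G (hy : IsSolution b y) {t : ℝ} (ht : 0 < t) :
    HasDerivAt (fun s => s ^ 2 * deriv y s) (-(g y t)) t := by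
  have h1 : HasDerivAt (fun s : ℝ => s ^ 2) (2 * t) t := by
    simpa using (hasDerivAt_pow 2 t)
  have h2 : HasDerivAt (deriv y) (deriv (deriv y) t) t :=
    (hy.2.2.2.1 t ht).hasDerivAt
  have := h1.mul h2
  convert this using 1
  · exact rfl
  · exact rfl
  · exact rfl
  have hode := hy.2.2.2.2 t ht
  have ht' : t ≠ 0 := ne_of_gt ht
  have : deriv (deriv y) t = -(2 / t) * deriv y t - ((y t) ^ 3 - y t) := by linarith
  rw [this]
  unfold g
  field_simp [g]
  ring

lemma ftc_G (hy : IsSolution b y) {ε t : ℝ} (hε : 0 < ε) (hεt : ε ≤ t) :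
    t ^ 2 * deriv y t - ε ^ 2 * deriv y ε = -∫ s in ε..t, g y s := by
  have h := intervalIntegral.integral_eq_sub_of_hasDerivAt
    (f := fun s => s ^ 2 * deriv y s) (f' := fun s => -(g y s)) (a := ε) (b := t)
    (fun x hx => by
      rw [Set.uIcc_of_le hεt] at hx
      exact hasDeriv_G hy (lt_of_lt_of_le hε hx.1))
    (by
      apply ContinuousOn.intervalIntegrable
      intro x hx
      rw [Set.uIcc_of_le hεt] at hx
      exact ((cont_g hy x (le_trans hε.le hx.1)).neg).continuousWithinAt)
  rw [intervalIntegral.integral_neg] at h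
  simpa using h.symm

lemma intg (hy : IsSolution b y) {u v : ℝ} (hu : 0 ≤ u) (hv : 0 ≤ v) :
    IntervalIntegrable (g y) MeasureTheory.volume u v := by
  apply ContinuousOn.intervalIntegrable
  intro x hx
  have : (0:ℝ) ≤ x := le_trans (le_min hu hv) hx.1
  exact (cont_g hy x this).continuousWithinAt

lemma intdy (hy : IsSolution b y) {u v : ℝ} (hu : 0 < u) (hv : u ≤ v) :
    IntervalIntegrable (deriv y) MeasureTheory.volume u v := by
  apply ContinuousOn.intervalIntegrable
  intro x hx
  rw [Set.uIcc_of_le hv] at hx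
  exact (cont_dy hy x (lt_of_lt_of_le hu hx.1)).continuousWithinAt

/-- the limit of `t² y'(t)` as `t → 0⁺`. -/
def L (y : ℝ → ℝ) : ℝ := deriv y 1 + ∫ s in (0:ℝ)..1, g y s

lemma key (hy : IsSolution b y) {t : ℝ} (ht : 0 < t) :
    t ^ 2 * deriv y t = L y - ∫ s in (0:ℝ)..t, g y s := by
  rcases le_or_gt t 1 with h | h
  · have h1 := ftc_G hy ht h
    have h2 : (∫ s in t..(1:ℝ), g y s)
        = (∫ s in (0:ℝ)..1, g y s) - ∫ s in (0:ℝ)..t, g y s :=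
      (intervalIntegral.integral_interval_sub_left (intg hy le_rfl zero_le_one)
        (intg hy le_rfl ht.le)).symm
    simp only [L, one_pow, one_mul] at *
    linarith
  · have h1 := ftc_G hy one_pos h.le
    have h2 : (∫ s in (1:ℝ)..t, g y s)
        = (∫ s in (0:ℝ)..t, g y s) - ∫ s in (0:ℝ)..1, g y s :=
      (intervalIntegral.integral_interval_sub_left (intg hy le_rfl ht.le)
        (intg hy le_rfl zero_le_one)).symm
    simp only [L, one_pow, one_mul] at *
    linarith

/-- A bound for `|∫₀^ε g|` when `0 ≤ ε ≤ 1`. -/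
lemma I_small (hy : IsSolution b y) {C : ℝ}
    (hC : ∀ s ∈ Set.Icc (0:ℝ) 1, |g y s| ≤ C) {ε : ℝ} (hε : 0 ≤ ε) (hε1 : ε ≤ 1) :
    |∫ s in (0:ℝ)..ε, g y s| ≤ C * ε := by
  have := intervalIntegral.norm_integral_le_of_norm_le_const
    (C := C) (f := g y) (a := 0) (b := ε) (fun x hx => by
      rw [Set.uIoc_of_le hε] at hx
      exact hC x ⟨hx.1.le, le_trans hx.2 hε1⟩)
  rw [Real.norm_eq_abs] at this
  calc |∫ s in (0:ℝ)..ε, g y s| ≤ C * |ε - 0| := this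
    _ = C * ε := by rw [sub_zero, abs_of_nonneg hε]

lemma integral_inv_sq {c ε δ : ℝ} (hε : 0 < ε) (hεδ : ε ≤ δ) :
    ∫ s in ε..δ, c * (s ^ 2)⁻¹ = c * (ε⁻¹ - δ⁻¹) := by
  have h : ∀ x ∈ Set.uIcc ε δ, HasDerivAt (fun s => -(c * s⁻¹)) (c * (x ^ 2)⁻¹) x := by
    intro x hx
    rw [Set.uIcc_of_le hεδ] at hx
    have hx0 : x ≠ 0 := ne_of_gt (lt_of_lt_of_le hε hx.1)
    have := ((hasDerivAt_inv hx0).const_mul c).neg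
    convert this using 1
    · exact rfl
    · exact rfl
    · exact rfl
    field_simp
  have hint : IntervalIntegrable (fun s => c * (s ^ 2)⁻¹) MeasureTheory.volume ε δ := by
    apply ContinuousOn.intervalIntegrable
    intro x hx
    rw [Set.uIcc_of_le hεδ] at hx
    have hx0 : x ≠ 0 := ne_of_gt (lt_of_lt_of_le hε hx.1)
    exact (continuousAt_const.mul (((continuous_pow 2).continuousAt (x := x)).inv₀ (by positivity))).continuousWithinAt
  rw [intervalIntegral.integral_eq_sub_of_hasDerivAt h hint]
  field_simp
  ring

lemma ftc_y (hy : IsSolution b y) {ε t : ℝ} (hε : 0 < ε) (hεt : ε ≤ t) :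
    y t - y ε = ∫ s in ε..t, deriv y s := by
  refine (intervalIntegral.integral_eq_sub_of_hasDerivAt (fun x hx => ?_) (intdy hy hε hεt)).symm
  rw [Set.uIcc_of_le hεt] at hx
  exact (hy.2.2.1 x (le_trans hε.le hx.1)).hasDerivAt

lemma L_eq_zero (hy : IsSolution b y) : L y = 0 := by
  by_contra hL
  obtain ⟨C, hC⟩ : ∃ C, ∀ s ∈ Set.Icc (0:ℝ) 1, |g y s| ≤ C := by
    obtain ⟨C, hC⟩ := (isCompact_Icc (a := (0:ℝ)) (b := 1)).exists_bound_of_continuousOn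
      (f := g y) (fun x hx => (cont_g hy x hx.1).continuousWithinAt)
    exact ⟨C, fun s hs => by simpa [Real.norm_eq_abs] using hC s hs⟩
  have hC0 : 0 ≤ C := le_trans (abs_nonneg _) (hC 0 ⟨le_rfl, zero_le_one⟩)
  have hLpos : 0 < |L y| := abs_pos.mpr hL
  set δ : ℝ := min 1 (|L y| / (2 * (C + 1))) with hδdef
  have hδpos : 0 < δ := lt_min one_pos (by positivity)
  have hδ1 : δ ≤ 1 := min_le_left _ _
  have hCδ : C * δ ≤ |L y| / 2 := by
    have h1 : δ ≤ |L y| / (2 * (C + 1)) := min_le_right _ _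
    have h2 : C * δ ≤ C * (|L y| / (2 * (C + 1))) := by
      exact mul_le_mul_of_nonneg_left h1 hC0
    have h3 : C * (|L y| / (2 * (C + 1))) ≤ |L y| / 2 := by
      rw [mul_div_assoc', div_le_div_iff₀ (by positivity) (by norm_num : (0:ℝ) < 2)]
      nlinarith [hLpos.le, hC0]
    linarith
  -- pointwise deviation bound on (0, δ]
  have hdev : ∀ s : ℝ, 0 < s → s ≤ δ →
      |deriv y s - L y * (s ^ 2)⁻¹| ≤ |L y| / 2 * (s ^ 2)⁻¹ := by
    intro s hs hsδ
    have hs2 : (0:ℝ) < s ^ 2 := by positivity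
    have hk := key hy hs
    have hdy : deriv y s = (L y - ∫ u in (0:ℝ)..s, g y u) * (s ^ 2)⁻¹ := by
      field_simp at hk ⊢
      linarith
    have hI : |∫ u in (0:ℝ)..s, g y u| ≤ |L y| / 2 :=
      le_trans (I_small hy hC hs.le (le_trans hsδ hδ1))
        (le_trans (mul_le_mul_of_nonneg_left hsδ hC0) hCδ)
    rw [hdy]
    have : (L y - ∫ u in (0:ℝ)..s, g y u) * (s ^ 2)⁻¹ - L y * (s ^ 2)⁻¹
        = -(∫ u in (0:ℝ)..s, g y u) * (s ^ 2)⁻¹ := by ring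
    rw [this, abs_mul, abs_neg, abs_of_nonneg (le_of_lt (inv_pos.mpr hs2))]
    exact mul_le_mul_of_nonneg_right hI (le_of_lt (inv_pos.mpr hs2))
  -- integral lower bound for ε ∈ (0, δ]
  have hmain : ∀ ε : ℝ, 0 < ε → ε ≤ δ →
      |L y| / 2 * (ε⁻¹ - δ⁻¹) ≤ |y δ - y ε| := by
    intro ε hε hεδ
    have hyδ := ftc_y hy hε hεδ
    have hconst := integral_inv_sq (c := L y) hε hεδ
    have hint1 : IntervalIntegrable (fun s => L y * (s ^ 2)⁻¹) MeasureTheory.volume ε δ := by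
      apply ContinuousOn.intervalIntegrable
      intro x hx
      rw [Set.uIcc_of_le hεδ] at hx
      exact (continuousAt_const.mul (((continuous_pow 2).continuousAt (x := x)).inv₀
        (pow_ne_zero 2 (ne_of_gt (lt_of_lt_of_le hε hx.1))))).continuousWithinAt
    have hint2 : IntervalIntegrable (fun s => |L y| / 2 * (s ^ 2)⁻¹) MeasureTheory.volume ε δ := by
      apply ContinuousOn.intervalIntegrable
      intro x hx
      rw [Set.uIcc_of_le hεδ] at hx
      exact (continuousAt_const.mul (((continuous_pow 2).continuousAt (x := x)).inv₀
        (pow_ne_zero 2 (ne_of_gt (lt_of_lt_of_le hε hx.1))))).continuousWithinAt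
    have hsub : (∫ s in ε..δ, (deriv y s - L y * (s ^ 2)⁻¹))
        = (y δ - y ε) - L y * (ε⁻¹ - δ⁻¹) := by
      rw [intervalIntegral.integral_sub (intdy hy hε hεδ) hint1, ← hyδ, hconst]
    have hnorm : |(y δ - y ε) - L y * (ε⁻¹ - δ⁻¹)| ≤ |L y| / 2 * (ε⁻¹ - δ⁻¹) := by
      rw [← hsub]
      calc |∫ s in ε..δ, (deriv y s - L y * (s ^ 2)⁻¹)|
          ≤ ∫ s in ε..δ, |deriv y s - L y * (s ^ 2)⁻¹| := by
            simpa [Real.norm_eq_abs] using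
              intervalIntegral.norm_integral_le_integral_norm
                (f := fun s => deriv y s - L y * (s ^ 2)⁻¹) (a := ε) (b := δ)
                (μ := MeasureTheory.volume) hεδ
        _ ≤ ∫ s in ε..δ, |L y| / 2 * (s ^ 2)⁻¹ := by
            apply intervalIntegral.integral_mono_on hεδ _ hint2
              (fun x hx => hdev x (lt_of_lt_of_le hε hx.1) hx.2)
            exact ((intdy hy hε hεδ).sub hint1).abs
        _ = |L y| / 2 * (ε⁻¹ - δ⁻¹) := integral_inv_sq hε hεδ
    have habs : |L y| * (ε⁻¹ - δ⁻¹) = |L y * (ε⁻¹ - δ⁻¹)| := by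
      have hge : (0:ℝ) ≤ ε⁻¹ - δ⁻¹ := sub_nonneg.mpr (inv_anti₀ hε hεδ)
      rw [abs_mul, abs_of_nonneg hge]
    have htri : |L y * (ε⁻¹ - δ⁻¹)| - |y δ - y ε| ≤ |(y δ - y ε) - L y * (ε⁻¹ - δ⁻¹)| := by
      have := abs_sub_abs_le_abs_sub (L y * (ε⁻¹ - δ⁻¹)) (y δ - y ε)
      have h2 : |L y * (ε⁻¹ - δ⁻¹) - (y δ - y ε)| = |(y δ - y ε) - L y * (ε⁻¹ - δ⁻¹)| :=
        abs_sub_comm _ _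
      linarith
    rw [← habs] at htri
    linarith
  -- contradiction via limits
  have hev : ∀ᶠ ε in nhdsWithin (0:ℝ) (Set.Ioi 0),
      |L y| / 2 * (ε⁻¹ - δ⁻¹) ≤ |y δ - y ε| := by
    filter_upwards [Ioc_mem_nhdsGT_of_mem (Set.mem_Ico.mpr ⟨le_rfl, hδpos⟩)] with ε hε
    exact hmain ε hε.1 hε.2
  have h1 : Filter.Tendsto (fun ε : ℝ => |L y| / 2 * (ε⁻¹ - δ⁻¹))
      (nhdsWithin (0:ℝ) (Set.Ioi 0)) Filter.atTop := by
    apply Filter.Tendsto.const_mul_atTop (half_pos hLpos)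
    simpa [sub_eq_add_neg] using
      Filter.tendsto_atTop_add_const_right _ (-δ⁻¹) tendsto_inv_nhdsGT_zero
  have h2 : Filter.Tendsto (fun ε : ℝ => |y δ - y ε|)
      (nhdsWithin (0:ℝ) (Set.Ioi 0)) (nhds (|y δ - b|)) := by
    have hy0 : Filter.Tendsto y (nhdsWithin (0:ℝ) (Set.Ioi 0)) (nhds b) := by
      have := (cont_y hy 0 le_rfl).tendsto
      rw [hy.1] at this
      exact this.mono_left nhdsWithin_le_nhds
    exact (Filter.Tendsto.sub tendsto_const_nhds hy0).abs
  have h3 : Filter.Tendsto (fun ε : ℝ => |y δ - y ε|)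
      (nhdsWithin (0:ℝ) (Set.Ioi 0)) Filter.atTop :=
    Filter.tendsto_atTop_mono' _ hev h1
  exact not_tendsto_nhds_of_tendsto_atTop h3 _ h2

lemma key0 (hy : IsSolution b y) {t : ℝ} (ht : 0 < t) :
    t ^ 2 * deriv y t = -∫ s in (0:ℝ)..t, g y s := by
  have := key hy ht
  rw [L_eq_zero hy] at this
  linarith

/-- crude bound `|y'(t)| ≤ C t` on `(0,1]` where `C` bounds `|y³ - y|` on `[0,1]`. -/
lemma dy_crude (hy : IsSolution b y) {C : ℝ}
    (hC : ∀ s ∈ Set.Icc (0:ℝ) 1, |(y s) ^ 3 - y s| ≤ C) {t : ℝ} (ht : 0 < t) (ht1 : t ≤ 1) :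
    |deriv y t| ≤ C * t := by
  have hC0 : 0 ≤ C := le_trans (abs_nonneg _) (hC 0 ⟨le_rfl, zero_le_one⟩)
  have hkey := key0 hy ht
  have hbound : |∫ s in (0:ℝ)..t, g y s| ≤ t ^ 2 * C * t := by
    have := intervalIntegral.norm_integral_le_of_norm_le_const
      (C := t ^ 2 * C) (f := g y) (a := 0) (b := t) (fun x hx => by
        rw [Set.uIoc_of_le ht.le] at hx
        have hx2 : x ^ 2 ≤ t ^ 2 := by nlinarith [hx.1.le, hx.2]
        have := hC x ⟨hx.1.le, le_trans hx.2 ht1⟩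
        rw [Real.norm_eq_abs, g, abs_mul, abs_of_nonneg (sq_nonneg x)]
        calc x ^ 2 * |(y x) ^ 3 - y x| ≤ t ^ 2 * C := by
              apply mul_le_mul hx2 this (abs_nonneg _) (sq_nonneg t)
          _ = t ^ 2 * C := rfl)
    rw [Real.norm_eq_abs, sub_zero, abs_of_nonneg ht.le] at this
    exact this
  have ht2 : (0:ℝ) < t ^ 2 := by positivity
  have h1 : |t ^ 2 * deriv y t| ≤ t ^ 2 * C * t := by
    rw [hkey, abs_neg]; exact hbound
  rw [abs_mul, abs_of_nonneg (sq_nonneg t)] at h1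
  nlinarith [h1, ht2, abs_nonneg (deriv y t)]

/-- `y' → 0` as `t → 0` within `[0,∞)`. -/
lemma dy_tendsto (hy : IsSolution b y) :
    Filter.Tendsto (deriv y) (nhdsWithin (0:ℝ) (Set.Ici 0)) (nhds 0) := by
  obtain ⟨C, hC⟩ : ∃ C, ∀ s ∈ Set.Icc (0:ℝ) 1, |(y s) ^ 3 - y s| ≤ C := by
    obtain ⟨C, hC⟩ := (isCompact_Icc (a := (0:ℝ)) (b := 1)).exists_bound_of_continuousOn
      (f := fun s => (y s) ^ 3 - y s)
      (fun x hx => (((cont_y hy x hx.1).pow 3).sub (cont_y hy x hx.1)).continuousWithinAt)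
    exact ⟨C, fun s hs => by simpa [Real.norm_eq_abs] using hC s hs⟩
  have hC0 : 0 ≤ C := le_trans (abs_nonneg _) (hC 0 ⟨le_rfl, zero_le_one⟩)
  have hev : ∀ᶠ t in nhdsWithin (0:ℝ) (Set.Ici 0), ‖deriv y t‖ ≤ C * t := by
    filter_upwards [Icc_mem_nhdsGE_of_mem (Set.mem_Ico.mpr ⟨le_rfl, one_pos⟩)] with t ht
    rcases eq_or_lt_of_le ht.1 with h | h
    · rw [Real.norm_eq_abs, ← h, hy.2.1, abs_zero]
      positivity
    · exact dy_crude hy hC h ht.2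
  refine squeeze_zero_norm' hev ?_
  have : Filter.Tendsto (fun t : ℝ => C * t) (nhds 0) (nhds (C * 0)) :=
    (continuous_const.mul continuous_id).tendsto 0
  rw [mul_zero] at this
  exact this.mono_left nhdsWithin_le_nhds

lemma hasDeriv_E (hy : IsSolution b y) {t : ℝ} (ht : 0 < t) :
    HasDerivAt (energy y) (-(2 / t) * (deriv y t) ^ 2) t := by
  have h1 : HasDerivAt y (deriv y t) t := (hy.2.2.1 t ht.le).hasDerivAt
  have h2 : HasDerivAt (deriv y) (deriv (deriv y) t) t := (hy.2.2.2.1 t ht).hasDerivAt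
  have hE' := ((h2.pow 2).const_mul ((1:ℝ)/2)).add
      (((h1.pow 4).const_mul ((1:ℝ)/4)).sub ((h1.pow 2).const_mul ((1:ℝ)/2)))
  have hfun : energy y
      = fun x => 1/2 * (deriv y x) ^ 2 + (1/4 * (y x) ^ 4 - 1/2 * (y x) ^ 2) := by
    funext x; unfold energy; ring
  rw [hfun]
  convert hE' using 1
  · exact rfl
  · exact rfl
  · exact rfl
  have hode := hy.2.2.2.2 t ht
  have ht' : t ≠ 0 := ne_of_gt ht
  have hd2 : deriv (deriv y) t = -(2 / t) * deriv y t - ((y t) ^ 3 - y t) := by linarith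
  rw [hd2]
  push_cast
  field_simp
  ring

lemma E_mono (hy : IsSolution b y) {s t : ℝ} (hs : 0 < s) (hst : s ≤ t) :
    energy y t ≤ energy y s := by
  have hA : AntitoneOn (energy y) (Set.Icc s t) := by
    apply antitoneOn_of_deriv_nonpos (convex_Icc s t)
    · intro x hx
      exact (hasDeriv_E hy (lt_of_lt_of_le hs hx.1)).differentiableAt.continuousAt.continuousWithinAt
    · intro x hx
      rw [interior_Icc] at hx
      exact (hasDeriv_E hy (lt_trans hs hx.1)).differentiableAt.differentiableWithinAt
    · intro x hx
      rw [interior_Icc] at hx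
      have hx0 : 0 < x := lt_trans hs hx.1
      rw [(hasDeriv_E hy hx0).deriv]
      have : (0:ℝ) < 2 / x := by positivity
      nlinarith [sq_nonneg (deriv y x)]
  exact hA (Set.mem_Icc.mpr ⟨le_rfl, hst⟩) (Set.mem_Icc.mpr ⟨hst, le_rfl⟩) hst

lemma E_le (hy : IsSolution b y) {t : ℝ} (ht : 0 ≤ t) : energy y t ≤ energy y 0 := by
  rcases eq_or_lt_of_le ht with h | h
  · rw [← h]
  · have hEt : Filter.Tendsto (energy y) (nhdsWithin (0:ℝ) (Set.Ioi 0))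
        (nhds (energy y 0)) := by
      have hdy : Filter.Tendsto (deriv y) (nhdsWithin (0:ℝ) (Set.Ioi 0)) (nhds 0) :=
        (dy_tendsto hy).mono_left (nhdsWithin_mono 0 Set.Ioi_subset_Ici_self)
      have hyy : Filter.Tendsto y (nhdsWithin (0:ℝ) (Set.Ioi 0)) (nhds (y 0)) :=
        ((cont_y hy 0 le_rfl).tendsto).mono_left nhdsWithin_le_nhds
      have : Filter.Tendsto (energy y) (nhdsWithin (0:ℝ) (Set.Ioi 0))
          (nhds ((1/2) * 0 ^ 2 + (1/4) * (y 0) ^ 4 - (1/2) * (y 0) ^ 2)) := by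
        unfold energy
        exact (((hdy.pow 2).const_mul _).add (((hyy.pow 4).const_mul _))).sub
          ((hyy.pow 2).const_mul _)
      convert this using 2
      unfold energy
      rw [hy.2.1]
    have hev : ∀ᶠ ε in nhdsWithin (0:ℝ) (Set.Ioi 0), energy y t ≤ energy y ε := by
      filter_upwards [Ioc_mem_nhdsGT_of_mem (Set.mem_Ico.mpr ⟨le_rfl, h⟩)] with ε hε
      exact E_mono hy hε.1 hε.2
    exact ge_of_tendsto hEt hev

lemma y_bound (hb : Real.sqrt 2 ≤ b) (hy : IsSolution b y) {t : ℝ} (ht : 0 ≤ t) :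
    |y t| ≤ b ∧ |(y t) ^ 3 - y t| ≤ b ^ 3 - b := by
  have hb0 : 0 ≤ b := le_trans (Real.sqrt_nonneg 2) hb
  have hb2 : 2 ≤ b ^ 2 := by
    nlinarith [Real.sq_sqrt (by norm_num : (0:ℝ) ≤ 2), Real.sqrt_nonneg 2]
  have hE := E_le hy ht
  unfold energy at hE
  rw [hy.1, hy.2.1] at hE
  have hq : (1/4) * (y t) ^ 4 - (1/2) * (y t) ^ 2 ≤ (1/4) * b ^ 4 - (1/2) * b ^ 2 := by
    nlinarith [sq_nonneg (deriv y t)]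
  set u := y t with hu
  have hu2 : u ^ 2 ≤ b ^ 2 := by nlinarith [sq_nonneg (u ^ 2 - b ^ 2), sq_nonneg (u ^ 2 + b ^ 2 - 2)]
  have habs : |u| ≤ b := by
    rw [abs_le]; constructor <;> nlinarith [hu2, hb0, sq_nonneg (u - b), sq_nonneg (u + b)]
  constructor
  · exact habs
  · have h1 : -b ≤ u := (abs_le.mp habs).1
    have h2 : u ≤ b := (abs_le.mp habs).2
    rw [abs_le]
    constructor
    · have hf : 0 ≤ u ^ 2 - u * b + b ^ 2 - 1 := by nlinarith [sq_nonneg (2 * u - b)]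
      nlinarith [mul_nonneg (by linarith : (0:ℝ) ≤ u + b) hf]
    · have hf : 0 ≤ b ^ 2 + b * u + u ^ 2 - 1 := by nlinarith [sq_nonneg (b + 2 * u)]
      nlinarith [mul_nonneg (by linarith : (0:ℝ) ≤ b - u) hf]

end Apriori

theorem apriori_bounds (b : ℝ) (hb : Real.sqrt 2 ≤ b)
    (y : ℝ → ℝ) (hy : IsSolution b y) :
    ∀ t : ℝ, 0 ≤ t →
      |deriv y t| ≤ (t / 3) * (b ^ 3 - b) ∧
      0 ≤ b - y t ∧ b - y t ≤ (t ^ 2 / 6) * (b ^ 3 - b) := by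
  intro t ht
  set M := b ^ 3 - b with hM
  have hb0 : 0 ≤ b := le_trans (Real.sqrt_nonneg 2) hb
  have hb2 : 2 ≤ b ^ 2 := by
    nlinarith [Real.sq_sqrt (by norm_num : (0:ℝ) ≤ 2), Real.sqrt_nonneg 2]
  have hM0 : 0 ≤ M := by nlinarith
  have hf : ∀ s : ℝ, 0 ≤ s → |(y s) ^ 3 - y s| ≤ M := fun s hs =>
    (Apriori.y_bound hb hy hs).2
  -- derivative bound at every nonnegative time
  have hdy : ∀ s : ℝ, 0 ≤ s → |deriv y s| ≤ M / 3 * s := by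
    intro s hs
    rcases eq_or_lt_of_le hs with h | h
    · rw [← h, hy.2.1, abs_zero, mul_zero]
    · have hkey := Apriori.key0 hy h
      have hintg := Apriori.intg hy le_rfl hs (v := s)
      have hintMs : IntervalIntegrable (fun u : ℝ => M * u ^ 2) MeasureTheory.volume 0 s :=
        (continuous_const.mul (continuous_pow 2)).intervalIntegrable 0 s
      have hbound : |∫ u in (0:ℝ)..s, Apriori.g y u| ≤ M * s ^ 3 / 3 := by
        calc |∫ u in (0:ℝ)..s, Apriori.g y u|
            ≤ ∫ u in (0:ℝ)..s, |Apriori.g y u| := by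
              simpa [Real.norm_eq_abs] using
                intervalIntegral.norm_integral_le_integral_norm
                  (f := Apriori.g y) (a := 0) (b := s) (μ := MeasureTheory.volume) hs
          _ ≤ ∫ u in (0:ℝ)..s, M * u ^ 2 := by
              apply intervalIntegral.integral_mono_on hs hintg.abs hintMs
              intro x hx
              rw [Apriori.g, abs_mul, abs_of_nonneg (sq_nonneg x)]
              calc x ^ 2 * |(y x) ^ 3 - y x| ≤ x ^ 2 * M :=
                    mul_le_mul_of_nonneg_left (hf x hx.1) (sq_nonneg x)
                _ = M * x ^ 2 := mul_comm _ _
          _ = M * s ^ 3 / 3 := by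
              rw [intervalIntegral.integral_const_mul, integral_pow]
              norm_num
              ring
      have hs2 : (0:ℝ) < s ^ 2 := by positivity
      have h1 : s ^ 2 * |deriv y s| ≤ M * s ^ 3 / 3 := by
        rw [← abs_of_nonneg (sq_nonneg s), ← abs_mul, hkey, abs_neg]
        exact hbound
      nlinarith [abs_nonneg (deriv y s), h1, hs2]
  -- FTC on [0, t]
  have hcont : ContinuousOn (deriv y) (Set.Icc 0 t) := by
    intro x hx
    rcases eq_or_lt_of_le hx.1 with h | h
    · have h0 : Filter.Tendsto (deriv y) (nhdsWithin x (Set.Icc 0 t)) (nhds (deriv y x)) := by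
        rw [← h, hy.2.1]
        exact (Apriori.dy_tendsto hy).mono_left
          (nhdsWithin_mono 0 (fun z hz => hz.1))
      exact h0
    · exact (Apriori.cont_dy hy x h).continuousWithinAt
  have hintdy : IntervalIntegrable (deriv y) MeasureTheory.volume 0 t := by
    apply ContinuousOn.intervalIntegrable
    rwa [Set.uIcc_of_le ht]
  have hftc : y t - b = ∫ s in (0:ℝ)..t, deriv y s := by
    have := intervalIntegral.integral_eq_sub_of_hasDerivAt
      (f := y) (f' := deriv y) (a := 0) (b := t) (fun x hx => by
        rw [Set.uIcc_of_le ht] at hx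
        exact (hy.2.2.1 x hx.1).hasDerivAt) hintdy
    rw [this, hy.1]
  have hintMs3 : IntervalIntegrable (fun u : ℝ => M / 3 * u) MeasureTheory.volume 0 t :=
    (continuous_const.mul continuous_id).intervalIntegrable 0 t
  have hyb : |y t - b| ≤ M / 3 * (t ^ 2 / 2) := by
    rw [hftc]
    calc |∫ s in (0:ℝ)..t, deriv y s|
        ≤ ∫ s in (0:ℝ)..t, |deriv y s| := by
          simpa [Real.norm_eq_abs] using
            intervalIntegral.norm_integral_le_integral_norm
              (f := deriv y) (a := 0) (b := t) (μ := MeasureTheory.volume) ht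
      _ ≤ ∫ s in (0:ℝ)..t, M / 3 * s := by
          exact intervalIntegral.integral_mono_on ht hintdy.abs hintMs3
            (fun x hx => hdy x hx.1)
      _ = M / 3 * (t ^ 2 / 2) := by
          rw [intervalIntegral.integral_const_mul, integral_id]
          norm_num
  have hyt : y t ≤ b := by
    have := (Apriori.y_bound hb hy ht).1
    have := abs_le.mp this
    linarith [this.2]
  refine ⟨?_, by linarith, ?_⟩
  · calc |deriv y t| ≤ M / 3 * t := hdy t ht
      _ = t / 3 * M := by ring
  · have := abs_le.mp hyb
    have h1 : -(M / 3 * (t ^ 2 / 2)) ≤ y t - b := this.1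
    have : M / 3 * (t ^ 2 / 2) = t ^ 2 / 6 * M := by ring
    linarith
end
end

section
/- Suppose b ≥ √2. Let ỹ(t) = b − (t²/6)f(b) and let v(t) = −(t/3)f(b) be the second Picard iterates of the solution and its derivative. Then for all t ≥ 0: ỹ(t) ≤ y_b(t) ≤ ỹ(t) + (f(b)f′(b)/120)t⁴ ≤ ỹ(t) + (b⁵/40)t⁴, and v(t) ≤ ẏ_b(t) ≤ v(t) + (f(b)f′(b)/30)t³ ≤ v(t) + (b⁵/10)t³, where f(b) = b³ − b and f′(b) = 3b² − 1. -/
noncomputable section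

open Set Filter Topology

lemma aux_nonneg_of_deriv (u u' : ℝ → ℝ) (c : ℝ) (hc : 0 < c)
    (hcont : ContinuousOn u (Set.Ioc 0 c))
    (hd : ∀ t ∈ Set.Ioo (0:ℝ) c, HasDerivAt u (u' t) t)
    (hpos : ∀ t ∈ Set.Ioo (0:ℝ) c, 0 ≤ u' t)
    (hlim : Filter.Tendsto u (nhdsWithin 0 (Set.Ioi 0)) (nhds 0)) : 0 ≤ u c := by
  have hmono : MonotoneOn u (Set.Ioc 0 c) := by
    apply monotoneOn_of_deriv_nonneg (convex_Ioc 0 c) hcont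
    · rw [interior_Ioc]
      exact fun t ht => ((hd t ht).differentiableAt).differentiableWithinAt
    · rw [interior_Ioc]
      intro t ht
      rw [(hd t ht).deriv]
      exact hpos t ht
  have hev : ∀ᶠ s in nhdsWithin (0:ℝ) (Set.Ioi 0), u s ≤ u c := by
    filter_upwards [Ioo_mem_nhdsGT hc] with s hs
    exact hmono ⟨hs.1, hs.2.le⟩ (Set.right_mem_Ioc.2 hc) hs.2.le
  exact le_of_tendsto hlim hev

lemma aux_nonneg_of_deriv' (u u' : ℝ → ℝ)
    (hcont : ContinuousOn u (Set.Ici 0))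
    (hd : ∀ t : ℝ, 0 < t → HasDerivAt u (u' t) t)
    (hpos : ∀ t : ℝ, 0 < t → 0 ≤ u' t)
    (h0 : u 0 = 0) : ∀ t : ℝ, 0 ≤ t → 0 ≤ u t := by
  have hmono : MonotoneOn u (Set.Ici 0) := by
    apply monotoneOn_of_deriv_nonneg (convex_Ici 0) hcont
    · rw [interior_Ici]
      exact fun t ht => ((hd t ht).differentiableAt).differentiableWithinAt
    · rw [interior_Ici]
      intro t ht
      rw [(hd t ht).deriv]
      exact hpos t ht
  intro t ht
  have := hmono Set.self_mem_Ici ht ht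
  rwa [h0] at this

lemma aux_f_le (b x : ℝ) (hb1 : 1 ≤ b) (hb2 : 2 ≤ b^2) (h1 : -b ≤ x) (h2 : x ≤ b) :
    x^3 - x ≤ b^3 - b := by
  nlinarith [mul_nonneg (by linarith : (0:ℝ) ≤ b - x)
    (by nlinarith [sq_nonneg (2*x + b)] : (0:ℝ) ≤ b^2 + b*x + x^2 - 1)]

lemma aux_f_ge (b x : ℝ) (hb1 : 1 ≤ b) (hb2 : 2 ≤ b^2) (h1 : -b ≤ x) (h2 : x ≤ b) :
    (b^3 - b) - (3*b^2 - 1)*(b - x) ≤ x^3 - x := by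
  nlinarith [mul_nonneg (sq_nonneg (b - x)) (by linarith : (0:ℝ) ≤ 2*b + x)]

set_option maxHeartbeats 1000000 in
lemma stage5 (y : ℝ → ℝ) (b : ℝ) (hy0 : y 0 = b) (hy0' : deriv y 0 = 0)
    (hb1 : 1 ≤ b) (hb2 : 2 ≤ b^2)
    (hyc : ∀ t : ℝ, 0 ≤ t → ContinuousAt y t)
    (hy'c : ∀ t : ℝ, 0 < t → ContinuousAt (deriv y) t)
    (hdy : ∀ t : ℝ, 0 ≤ t → DifferentiableAt ℝ y t)
    (hgd : ∀ t : ℝ, 0 < t →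
      HasDerivAt (fun s => s^2 * deriv y s) (-(t^2) * ((y t)^3 - y t)) t)
    (hglim : Filter.Tendsto (fun s : ℝ => s^2 * deriv y s)
      (nhdsWithin 0 (Set.Ioi 0)) (nhds 0))
    (hybd : ∀ t : ℝ, 0 ≤ t → -b ≤ y t ∧ y t ≤ b) :
    ∀ t : ℝ, 0 ≤ t →
      (b - (t^2/6) * (b^3 - b) ≤ y t ∧
       y t ≤ b - (t^2/6) * (b^3 - b) + ((b^3 - b)*(3*b^2 - 1)/120) * t^4) ∧
      (-(t/3) * (b^3 - b) ≤ deriv y t ∧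
       deriv y t ≤ -(t/3) * (b^3 - b) + ((b^3 - b)*(3*b^2 - 1)/30) * t^3) := by
  set g : ℝ → ℝ := fun s => s^2 * deriv y s with hgdef
  have hgc : ∀ t : ℝ, 0 < t → ContinuousAt g t :=
    fun t ht => ((continuous_pow 2).continuousAt).mul (hy'c t ht)
  have hF0 : 0 ≤ b^3 - b := by nlinarith
  have hD0 : 0 ≤ 3*b^2 - 1 := by nlinarith
  have hfub : ∀ s : ℝ, 0 ≤ s → (y s)^3 - y s ≤ b^3 - b :=
    fun s hs => aux_f_le b (y s) hb1 hb2 (hybd s hs).1 (hybd s hs).2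
  have hpolylim : ∀ (c : ℝ) (n : ℕ), 0 < n → Filter.Tendsto (fun s : ℝ => c*s^n)
      (nhdsWithin 0 (Set.Ioi 0)) (nhds 0) := by
    intro c n hn
    have hc : Continuous fun s : ℝ => c*s^n := by continuity
    have := (hc.tendsto 0).mono_left (nhdsWithin_le_nhds (s := Set.Ioi (0:ℝ)))
    have hz : c * (0:ℝ)^n = 0 := by
      rw [zero_pow (by omega : n ≠ 0)]
      ring
    rwa [hz] at this
  -- lower bound for deriv y
  have hy'lb : ∀ t : ℝ, 0 < t → -(t/3) * (b^3 - b) ≤ deriv y t := by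
    intro t ht
    have key : 0 ≤ g t + (b^3-b)/3*t^3 := by
      apply aux_nonneg_of_deriv _ (fun s => -(s^2) * ((y s)^3 - y s) + (b^3-b)*s^2) t ht
      · exact fun s hs => ((hgc s hs.1).add (by fun_prop)).continuousWithinAt
      · intro s hs
        have hp : HasDerivAt (fun x : ℝ => (b^3-b)/3*x^3) ((b^3-b)*s^2) s := by
          have := (hasDerivAt_pow 3 s).const_mul ((b^3-b)/3)
          exact this.congr_deriv (by ring)
        exact (hgd s hs.1).add hp
      · intro s hs
        have hf := hfub s hs.1.le
        nlinarith [sq_nonneg s]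
      · simpa using hglim.add (hpolylim ((b^3-b)/3) 3 (by norm_num))
    have ht2 : (0:ℝ) < t^2 := pow_pos ht 2
    have h2 : 0 ≤ t^2 * (deriv y t + (t/3)*(b^3-b)) := by
      have hgt : g t = t^2 * deriv y t := rfl
      nlinarith [key]
    have := (mul_nonneg_iff_of_pos_left ht2).1 h2
    linarith
  -- lower bound for y
  have hylb : ∀ t : ℝ, 0 ≤ t → b - (t^2/6) * (b^3 - b) ≤ y t := by
    intro t ht
    have key := aux_nonneg_of_deriv' (fun s => y s - b + (b^3-b)/6*s^2)
      (fun s => deriv y s + (b^3-b)/3*s) ?_ ?_ ?_ ?_ t ht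
    · linarith [key]
    · intro s hs
      exact (((hyc s hs).sub continuousAt_const).add (by fun_prop)).continuousWithinAt
    · intro s hs
      have hp : HasDerivAt (fun x : ℝ => (b^3-b)/6*x^2) ((b^3-b)/3*s) s := by
        have := (hasDerivAt_pow 2 s).const_mul ((b^3-b)/6)
        exact this.congr_deriv (by ring)
      exact (((hdy s hs.le).hasDerivAt).sub_const b).add hp
    · intro s hs
      have := hy'lb s hs
      nlinarith
    · simp [hy0]
  -- lower bound for f(y s)
  have hflb : ∀ s : ℝ, 0 ≤ s →
      (b^3 - b) - (3*b^2-1)*((s^2/6)*(b^3-b)) ≤ (y s)^3 - y s := by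
    intro s hs
    have h1 := aux_f_ge b (y s) hb1 hb2 (hybd s hs).1 (hybd s hs).2
    have h2 : b - y s ≤ (s^2/6)*(b^3-b) := by linarith [hylb s hs]
    have h3 : (3*b^2-1)*(b - y s) ≤ (3*b^2-1)*((s^2/6)*(b^3-b)) :=
      mul_le_mul_of_nonneg_left h2 hD0
    linarith
  -- upper bound for deriv y
  have hy'ub : ∀ t : ℝ, 0 < t →
      deriv y t ≤ -(t/3) * (b^3 - b) + ((b^3 - b)*(3*b^2 - 1)/30) * t^3 := by
    intro t ht
    have key : 0 ≤ -(g t) - (b^3-b)/3*t^3 + (b^3-b)*(3*b^2-1)/30*t^5 := by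
      apply aux_nonneg_of_deriv _
        (fun s => s^2 * ((y s)^3 - y s) - (b^3-b)*s^2 + (b^3-b)*(3*b^2-1)/6*s^4) t ht
      · exact fun s hs => (((hgc s hs.1).neg.sub (by fun_prop)).add (by fun_prop)).continuousWithinAt
      · intro s hs
        have hp1 : HasDerivAt (fun x : ℝ => (b^3-b)/3*x^3) ((b^3-b)*s^2) s := by
          have := (hasDerivAt_pow 3 s).const_mul ((b^3-b)/3)
          exact this.congr_deriv (by ring)
        have hp2 : HasDerivAt (fun x : ℝ => (b^3-b)*(3*b^2-1)/30*x^5)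
            ((b^3-b)*(3*b^2-1)/6*s^4) s := by
          have := (hasDerivAt_pow 5 s).const_mul ((b^3-b)*(3*b^2-1)/30)
          exact this.congr_deriv (by ring)
        refine (((hgd s hs.1).neg.sub hp1).add hp2).congr_deriv ?_
        ring
      · intro s hs
        have hf := hflb s hs.1.le
        nlinarith [sq_nonneg s, sq_nonneg (s^2)]
      · have h1 := (hglim.neg.sub (hpolylim ((b^3-b)/3) 3 (by norm_num))).add
          (hpolylim ((b^3-b)*(3*b^2-1)/30) 5 (by norm_num))
        simpa using h1
    have ht2 : (0:ℝ) < t^2 := pow_pos ht 2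
    have h2 : 0 ≤ t^2 * (-(t/3) * (b^3 - b) + ((b^3 - b)*(3*b^2 - 1)/30) * t^3 - deriv y t) := by
      have hgt : g t = t^2 * deriv y t := rfl
      nlinarith [key]
    have := (mul_nonneg_iff_of_pos_left ht2).1 h2
    linarith
  -- upper bound for y
  have hyub : ∀ t : ℝ, 0 ≤ t →
      y t ≤ b - (t^2/6) * (b^3 - b) + ((b^3 - b)*(3*b^2 - 1)/120) * t^4 := by
    intro t ht
    have key := aux_nonneg_of_deriv'
      (fun s => b - (b^3-b)/6*s^2 + (b^3-b)*(3*b^2-1)/120*s^4 - y s)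
      (fun s => -((b^3-b)/3*s) + (b^3-b)*(3*b^2-1)/30*s^3 - deriv y s) ?_ ?_ ?_ ?_ t ht
    · linarith [key]
    · intro s hs
      exact ((by fun_prop : ContinuousAt (fun x : ℝ => b - (b^3-b)/6*x^2
        + (b^3-b)*(3*b^2-1)/120*x^4) s).sub (hyc s hs)).continuousWithinAt
    · intro s hs
      have hp1 : HasDerivAt (fun x : ℝ => (b^3-b)/6*x^2) ((b^3-b)/3*s) s := by
        have := (hasDerivAt_pow 2 s).const_mul ((b^3-b)/6)
        exact this.congr_deriv (by ring)
      have hp2 : HasDerivAt (fun x : ℝ => (b^3-b)*(3*b^2-1)/120*x^4)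
          ((b^3-b)*(3*b^2-1)/30*s^3) s := by
        have := (hasDerivAt_pow 4 s).const_mul ((b^3-b)*(3*b^2-1)/120)
        exact this.congr_deriv (by ring)
      refine (((hasDerivAt_const s b).sub hp1).add hp2).sub
        ((hdy s hs.le).hasDerivAt) |>.congr_deriv ?_
      ring
    · intro s hs
      have := hy'ub s hs
      nlinarith
    · simp [hy0]
  intro t ht
  refine ⟨⟨hylb t ht, hyub t ht⟩, ?_, ?_⟩
  · rcases ht.eq_or_lt with rfl | ht'
    · simp [hy0']
    · exact hy'lb t ht'
  · rcases ht.eq_or_lt with rfl | ht'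
    · simp [hy0']
    · exact hy'ub t ht'

lemma aux_g_tendsto (y : ℝ → ℝ) (b M : ℝ) (hy0 : y 0 = b)
    (hyc : ∀ t : ℝ, 0 ≤ t → ContinuousAt y t)
    (hy'c : ∀ t : ℝ, 0 < t → ContinuousAt (deriv y) t)
    (hdy : ∀ t : ℝ, 0 ≤ t → DifferentiableAt ℝ y t)
    (hgd : ∀ t : ℝ, 0 < t →
      HasDerivAt (fun s => s^2 * deriv y s) (-(t^2) * ((y t)^3 - y t)) t)
    (hM0 : 0 ≤ M) (hM : ∀ s ∈ Set.Icc (0:ℝ) 2, |(y s)^3 - y s| ≤ M) :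
    Filter.Tendsto (fun s : ℝ => s^2 * deriv y s) (nhdsWithin 0 (Set.Ioi 0)) (nhds 0) := by
  set g : ℝ → ℝ := fun s => s^2 * deriv y s with hgdef
  have hgc : ∀ t : ℝ, 0 < t → ContinuousAt g t :=
    fun t ht => ((continuous_pow 2).continuousAt).mul (hy'c t ht)
  -- G monotone, H antitone on Ioo 0 2
  have hGd : ∀ t ∈ Set.Ioo (0:ℝ) 2,
      HasDerivAt (fun s => g s + M/3*s^3) (-(t^2) * ((y t)^3 - y t) + M*t^2) t := by
    intro t ht
    have hp : HasDerivAt (fun s : ℝ => M/3*s^3) (M*t^2) t := by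
      have := (hasDerivAt_pow 3 t).const_mul (M/3)
      exact this.congr_deriv (by ring)
    exact (hgd t ht.1).add hp
  have hHd : ∀ t ∈ Set.Ioo (0:ℝ) 2,
      HasDerivAt (fun s => g s - M/3*s^3) (-(t^2) * ((y t)^3 - y t) - M*t^2) t := by
    intro t ht
    have hp : HasDerivAt (fun s : ℝ => M/3*s^3) (M*t^2) t := by
      have := (hasDerivAt_pow 3 t).const_mul (M/3)
      exact this.congr_deriv (by ring)
    exact (hgd t ht.1).sub hp
  have hGmono : MonotoneOn (fun s => g s + M/3*s^3) (Set.Ioo 0 2) := by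
    apply monotoneOn_of_deriv_nonneg (convex_Ioo 0 2)
    · exact fun t ht => ((hGd t ht).differentiableAt.continuousAt).continuousWithinAt
    · rw [interior_Ioo]
      exact fun t ht => (hGd t ht).differentiableAt.differentiableWithinAt
    · rw [interior_Ioo]
      intro t ht
      rw [(hGd t ht).deriv]
      have hf : (y t)^3 - y t ≤ M := le_trans (le_abs_self _) (hM t ⟨ht.1.le, ht.2.le⟩)
      nlinarith [sq_nonneg t]
  have hHanti : AntitoneOn (fun s => g s - M/3*s^3) (Set.Ioo 0 2) := by
    apply antitoneOn_of_deriv_nonpos (convex_Ioo 0 2)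
    · exact fun t ht => ((hHd t ht).differentiableAt.continuousAt).continuousWithinAt
    · rw [interior_Ioo]
      exact fun t ht => (hHd t ht).differentiableAt.differentiableWithinAt
    · rw [interior_Ioo]
      intro t ht
      rw [(hHd t ht).deriv]
      have hf : -M ≤ (y t)^3 - y t := neg_le_of_abs_le (hM t ⟨ht.1.le, ht.2.le⟩)
      nlinarith [sq_nonneg t]
  have hbdd : BddBelow ((fun s => g s + M/3*s^3) '' Set.Ioo 0 1) := by
    refine ⟨g 1 - M/3, ?_⟩
    rintro _ ⟨t, ht, rfl⟩
    have h1 : (fun s => g s - M/3*s^3) 1 ≤ (fun s => g s - M/3*s^3) t :=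
      hHanti ⟨ht.1, by linarith [ht.2]⟩ (by norm_num : (1:ℝ) ∈ Set.Ioo (0:ℝ) 2) ht.2.le
    simp only at h1 ⊢
    nlinarith [pow_nonneg ht.1.le 3]
  have hLex : Filter.Tendsto (fun s => g s + M/3*s^3) (nhdsWithin 0 (Set.Ioi 0))
      (nhds (sInf ((fun s => g s + M/3*s^3) '' Set.Ioo 0 1))) := by
    apply MonotoneOn.tendsto_nhdsWithin_Ioo_right ⟨1/2, by norm_num⟩
      (hGmono.mono (Set.Ioo_subset_Ioo le_rfl one_le_two)) hbdd
  set L := sInf ((fun s => g s + M/3*s^3) '' Set.Ioo 0 1) with hLdef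
  have hpoly : Filter.Tendsto (fun s : ℝ => M/3*s^3) (nhdsWithin 0 (Set.Ioi 0)) (nhds 0) := by
    have hc : Continuous fun s : ℝ => M/3*s^3 := by continuity
    have := (hc.tendsto 0).mono_left (nhdsWithin_le_nhds (s := Set.Ioi (0:ℝ)))
    simpa using this
  have hglim' : Filter.Tendsto g (nhdsWithin 0 (Set.Ioi 0)) (nhds L) := by
    have := hLex.sub hpoly
    rw [sub_zero] at this
    exact this.congr (fun s => by ring)
  -- y tends to b
  have hylim : Filter.Tendsto y (nhdsWithin 0 (Set.Ioi 0)) (nhds b) := by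
    have := ((hyc 0 le_rfl).tendsto).mono_left (nhdsWithin_le_nhds (s := Set.Ioi (0:ℝ)))
    rwa [hy0] at this
  -- L = 0
  have hL0 : L = 0 := by
    by_contra hL
    rcases lt_or_gt_of_ne hL with hneg | hpos
    · -- L < 0
      have hev : ∀ᶠ t in nhdsWithin (0:ℝ) (Set.Ioi 0), g t < L/2 :=
        hglim'.eventually (eventually_lt_nhds (by linarith))
      obtain ⟨δ, hδ0, hδ⟩ : ∃ δ, 0 < δ ∧ ∀ t ∈ Set.Ioc (0:ℝ) δ, g t < L/2 := by
        rcases mem_nhdsGT_iff_exists_Ioc_subset.1 hev with ⟨u, hu, hsub⟩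
        exact ⟨u, hu, fun t ht => hsub ht⟩
      have hψd : ∀ t ∈ Set.Ioo (0:ℝ) δ,
          HasDerivAt (fun s => y s + (L/2)*s⁻¹) (deriv y t + (L/2)*(-(t^2)⁻¹)) t := by
        intro t ht
        exact ((hdy t ht.1.le).hasDerivAt).add ((hasDerivAt_inv (ne_of_gt ht.1)).const_mul (L/2))
      have hψanti : AntitoneOn (fun s => y s + (L/2)*s⁻¹) (Set.Ioc 0 δ) := by
        apply antitoneOn_of_deriv_nonpos (convex_Ioc 0 δ)
        · intro t ht
          exact ((hyc t ht.1.le).add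
            (continuousAt_const.mul (continuousAt_inv₀ (ne_of_gt ht.1)))).continuousWithinAt
        · rw [interior_Ioc]
          exact fun t ht => (hψd t ht).differentiableAt.differentiableWithinAt
        · rw [interior_Ioc]
          intro t ht
          rw [(hψd t ht).deriv]
          have h1 : g t ≤ L/2 := (hδ t ⟨ht.1, ht.2.le⟩).le
          have ht2 : (0:ℝ) < t^2 := pow_pos ht.1 2
          have h2 : deriv y t ≤ (L/2) * (t^2)⁻¹ := by
            rw [← div_eq_mul_inv, le_div_iff₀ ht2]
            calc deriv y t * t^2 = g t := by rw [hgdef]; ring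
            _ ≤ L/2 := h1
          have h3 : (L/2)*(-(t^2)⁻¹) = -((L/2)*(t^2)⁻¹) := by ring
          rw [h3]
          linarith
      -- ψ ε ≥ ψ δ for small ε, but LHS → -∞
      set C := y δ + (L/2)*δ⁻¹ with hCdef
      have hev2 : ∀ᶠ ε in nhdsWithin (0:ℝ) (Set.Ioi 0), C ≤ y ε + (L/2)*ε⁻¹ := by
        filter_upwards [Ioo_mem_nhdsGT hδ0] with ε hε
        exact hψanti ⟨hε.1, hε.2.le⟩ (Set.right_mem_Ioc.2 hδ0) hε.2.le
      have hbot : Filter.Tendsto (fun ε : ℝ => y ε + (L/2)*ε⁻¹)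
          (nhdsWithin 0 (Set.Ioi 0)) atBot := by
        apply tendsto_atBot_add_left_of_ge' _ (b+1)
        · exact hylim.eventually (eventually_le_nhds (by linarith))
        · exact Filter.Tendsto.const_mul_atTop_of_neg (by linarith) tendsto_inv_nhdsGT_zero
      have hev3 : ∀ᶠ ε in nhdsWithin (0:ℝ) (Set.Ioi 0), y ε + (L/2)*ε⁻¹ < C :=
        hbot.eventually (eventually_lt_atBot C)
      obtain ⟨ε, h1, h2⟩ := (hev2.and hev3).exists
      linarith
    · -- L > 0
      have hev : ∀ᶠ t in nhdsWithin (0:ℝ) (Set.Ioi 0), L/2 < g t :=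
        hglim'.eventually (eventually_gt_nhds (by linarith))
      obtain ⟨δ, hδ0, hδ⟩ : ∃ δ, 0 < δ ∧ ∀ t ∈ Set.Ioc (0:ℝ) δ, L/2 < g t := by
        rcases mem_nhdsGT_iff_exists_Ioc_subset.1 hev with ⟨u, hu, hsub⟩
        exact ⟨u, hu, fun t ht => hsub ht⟩
      have hψd : ∀ t ∈ Set.Ioo (0:ℝ) δ,
          HasDerivAt (fun s => y s + (L/2)*s⁻¹) (deriv y t + (L/2)*(-(t^2)⁻¹)) t := by
        intro t ht
        exact ((hdy t ht.1.le).hasDerivAt).add ((hasDerivAt_inv (ne_of_gt ht.1)).const_mul (L/2))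
      have hψmono : MonotoneOn (fun s => y s + (L/2)*s⁻¹) (Set.Ioc 0 δ) := by
        apply monotoneOn_of_deriv_nonneg (convex_Ioc 0 δ)
        · intro t ht
          exact ((hyc t ht.1.le).add
            (continuousAt_const.mul (continuousAt_inv₀ (ne_of_gt ht.1)))).continuousWithinAt
        · rw [interior_Ioc]
          exact fun t ht => (hψd t ht).differentiableAt.differentiableWithinAt
        · rw [interior_Ioc]
          intro t ht
          rw [(hψd t ht).deriv]
          have h1 : L/2 ≤ g t := (hδ t ⟨ht.1, ht.2.le⟩).le
          have ht2 : (0:ℝ) < t^2 := pow_pos ht.1 2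
          have h2 : (L/2) * (t^2)⁻¹ ≤ deriv y t := by
            rw [← div_eq_mul_inv, div_le_iff₀ ht2]
            calc L/2 ≤ g t := h1
            _ = deriv y t * t^2 := by rw [hgdef]; ring
          have h3 : (L/2)*(-(t^2)⁻¹) = -((L/2)*(t^2)⁻¹) := by ring
          rw [h3]
          linarith
      set C := y δ + (L/2)*δ⁻¹ with hCdef
      have hev2 : ∀ᶠ ε in nhdsWithin (0:ℝ) (Set.Ioi 0), y ε + (L/2)*ε⁻¹ ≤ C := by
        filter_upwards [Ioo_mem_nhdsGT hδ0] with ε hε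
        exact hψmono ⟨hε.1, hε.2.le⟩ (Set.right_mem_Ioc.2 hδ0) hε.2.le
      have htop : Filter.Tendsto (fun ε : ℝ => y ε + (L/2)*ε⁻¹)
          (nhdsWithin 0 (Set.Ioi 0)) atTop := by
        apply tendsto_atTop_add_left_of_le' _ (b-1)
        · exact hylim.eventually (eventually_ge_nhds (by linarith))
        · exact Filter.Tendsto.const_mul_atTop (by linarith) tendsto_inv_nhdsGT_zero
      have hev3 : ∀ᶠ ε in nhdsWithin (0:ℝ) (Set.Ioi 0), C < y ε + (L/2)*ε⁻¹ :=
        htop.eventually (eventually_gt_atTop C)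
      obtain ⟨ε, h1, h2⟩ := (hev2.and hev3).exists
      linarith
  rw [hL0] at hglim'
  exact hglim'

set_option maxHeartbeats 1000000 in
lemma aux_ybound (y : ℝ → ℝ) (b M : ℝ) (hy0 : y 0 = b) (hy0' : deriv y 0 = 0)
    (hb1 : 1 ≤ b) (hb2 : 2 ≤ b^2)
    (hyc : ∀ t : ℝ, 0 ≤ t → ContinuousAt y t)
    (hy'c : ∀ t : ℝ, 0 < t → ContinuousAt (deriv y) t)
    (hdy : ∀ t : ℝ, 0 ≤ t → DifferentiableAt ℝ y t)
    (hddy : ∀ t : ℝ, 0 < t → DifferentiableAt ℝ (deriv y) t)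
    (heq : ∀ t : ℝ, 0 < t →
      deriv (deriv y) t + (2 / t) * deriv y t + ((y t) ^ 3 - y t) = 0)
    (hgd : ∀ t : ℝ, 0 < t →
      HasDerivAt (fun s => s^2 * deriv y s) (-(t^2) * ((y t)^3 - y t)) t)
    (hM0 : 0 ≤ M) (hM : ∀ s ∈ Set.Icc (0:ℝ) 2, |(y s)^3 - y s| ≤ M)
    (hglim : Filter.Tendsto (fun s : ℝ => s^2 * deriv y s)
      (nhdsWithin 0 (Set.Ioi 0)) (nhds 0)) :
    ∀ t : ℝ, 0 ≤ t → -b ≤ y t ∧ y t ≤ b := by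
  set g : ℝ → ℝ := fun s => s^2 * deriv y s with hgdef
  have hgc : ∀ t : ℝ, 0 < t → ContinuousAt g t :=
    fun t ht => ((continuous_pow 2).continuousAt).mul (hy'c t ht)
  have hpolylim : ∀ c : ℝ, Filter.Tendsto (fun s : ℝ => c*s^3)
      (nhdsWithin 0 (Set.Ioi 0)) (nhds 0) := by
    intro c
    have hc : Continuous fun s : ℝ => c*s^3 := by continuity
    have := (hc.tendsto 0).mono_left (nhdsWithin_le_nhds (s := Set.Ioi (0:ℝ)))
    simpa using this
  have hpolyd : ∀ (c t : ℝ), HasDerivAt (fun s : ℝ => c*s^3) (3*c*t^2) t := by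
    intro c t
    have := (hasDerivAt_pow 3 t).const_mul c
    exact this.congr_deriv (by ring)
  -- |g t| ≤ M t^3/3 on (0,1]
  have hgub : ∀ t : ℝ, 0 < t → t ≤ 1 → |deriv y t| ≤ M/3*t := by
    intro t ht ht1
    have hlow : 0 ≤ g t + M/3*t^3 := by
      apply aux_nonneg_of_deriv _ (fun s => -(s^2) * ((y s)^3 - y s) + M*s^2) t ht
      · exact fun s hs => ((hgc s hs.1).add (by fun_prop)).continuousWithinAt
      · intro s hs
        have hp : HasDerivAt (fun x : ℝ => M/3*x^3) (M*s^2) s := by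
          have := hpolyd (M/3) s
          convert this using 1
          ring
        exact (hgd s hs.1).add hp
      · intro s hs
        have hf : (y s)^3 - y s ≤ M := le_trans (le_abs_self _)
          (hM s ⟨hs.1.le, by linarith [hs.2, ht1]⟩)
        nlinarith [sq_nonneg s]
      · simpa using hglim.add (hpolylim (M/3))
    have hhigh : 0 ≤ -(g t) + M/3*t^3 := by
      apply aux_nonneg_of_deriv _ (fun s => (s^2) * ((y s)^3 - y s) + M*s^2) t ht
      · exact fun s hs => ((hgc s hs.1).neg.add (by fun_prop)).continuousWithinAt
      · intro s hs
        have hp : HasDerivAt (fun x : ℝ => M/3*x^3) (M*s^2) s := by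
          have := hpolyd (M/3) s
          convert this using 1
          ring
        refine ((hgd s hs.1).neg.add hp).congr_deriv ?_
        ring
      · intro s hs
        have hf : -M ≤ (y s)^3 - y s := neg_le_of_abs_le
          (hM s ⟨hs.1.le, by linarith [hs.2, ht1]⟩)
        nlinarith [sq_nonneg s]
      · simpa using (hglim.neg.add (hpolylim (M/3)))
    have ht2 : (0:ℝ) < t^2 := pow_pos ht 2
    rw [abs_le]
    constructor
    · have h2 : 0 ≤ t^2 * (deriv y t + M/3*t) := by
        have hgt : g t = t^2 * deriv y t := rfl
        nlinarith [hlow]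
      have := (mul_nonneg_iff_of_pos_left ht2).1 h2
      linarith
    · have h2 : 0 ≤ t^2 * (M/3*t - deriv y t) := by
        have hgt : g t = t^2 * deriv y t := rfl
        nlinarith [hhigh]
      have := (mul_nonneg_iff_of_pos_left ht2).1 h2
      linarith
  have hy'lim : Filter.Tendsto (deriv y) (nhdsWithin 0 (Set.Ioi 0)) (nhds 0) := by
    apply squeeze_zero_norm' (a := fun t : ℝ => M/3*t)
    · filter_upwards [Ioo_mem_nhdsGT one_pos] with t ht
      simpa [Real.norm_eq_abs] using hgub t ht.1 ht.2.le
    · have hc : Continuous fun s : ℝ => M/3*s := by continuity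
      have := (hc.tendsto 0).mono_left (nhdsWithin_le_nhds (s := Set.Ioi (0:ℝ)))
      simpa using this
  -- energy
  have hEd : ∀ t : ℝ, 0 < t → HasDerivAt (energy y) (-(2/t)*(deriv y t)^2) t := by
    intro t ht
    have h1 : HasDerivAt (fun s => deriv y s) (deriv (deriv y) t) t := (hddy t ht).hasDerivAt
    have h2 : HasDerivAt y (deriv y t) t := (hdy t ht.le).hasDerivAt
    have h3 := (((h1.pow 2).const_mul (1/2:ℝ)).add ((h2.pow 4).const_mul (1/4:ℝ))).sub
      ((h2.pow 2).const_mul (1/2:ℝ))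
    have hfeq : energy y = fun t => (1/2) * (deriv y t)^2 + (1/4) * (y t)^4 - (1/2) * (y t)^2 :=
      rfl
    rw [hfeq]
    refine h3.congr_deriv ?_
    have hdd : deriv (deriv y) t = -(2/t)*deriv y t - ((y t)^3 - y t) := by
      linarith [heq t ht]
    rw [hdd]
    have ht' : t ≠ 0 := ne_of_gt ht
    field_simp
    ring
  have hylim : Filter.Tendsto y (nhdsWithin 0 (Set.Ioi 0)) (nhds b) := by
    have := ((hyc 0 le_rfl).tendsto).mono_left (nhdsWithin_le_nhds (s := Set.Ioi (0:ℝ)))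
    rwa [hy0] at this
  have hElim : Filter.Tendsto (energy y) (nhdsWithin 0 (Set.Ioi 0)) (nhds (energy y 0)) := by
    have h1 := ((hy'lim.pow 2).const_mul (1/2:ℝ)).add
      (((hylim.pow 4).const_mul (1/4:ℝ)).sub ((hylim.pow 2).const_mul (1/2:ℝ)))
    have heY : energy y 0 = (1/2)*(0:ℝ)^2 + ((1/4)*b^4 - (1/2)*b^2) := by
      unfold energy
      rw [hy0, hy0']
      ring
    rw [heY]
    exact h1.congr (fun s => by unfold energy; ring)
  have hEanti : AntitoneOn (energy y) (Set.Ioi 0) := by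
    apply antitoneOn_of_deriv_nonpos (convex_Ioi 0)
    · exact fun t ht => ((hEd t ht).differentiableAt.continuousAt).continuousWithinAt
    · rw [interior_Ioi]
      exact fun t ht => (hEd t ht).differentiableAt.differentiableWithinAt
    · rw [interior_Ioi]
      intro t ht
      rw [(hEd t ht).deriv]
      have ht0 : (0:ℝ) < t := ht
      have h1 : (0:ℝ) < 2/t := by positivity
      nlinarith [sq_nonneg (deriv y t)]
  have hEle : ∀ t : ℝ, 0 < t → energy y t ≤ energy y 0 := by
    intro t ht
    apply ge_of_tendsto hElim
    filter_upwards [Ioo_mem_nhdsGT ht] with s hs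
    exact hEanti hs.1 ht hs.2.le
  intro t ht
  rcases ht.eq_or_lt with rfl | ht'
  · rw [hy0]
    constructor <;> linarith
  · have hE := hEle t ht'
    unfold energy at hE
    rw [hy0, hy0'] at hE
    have h4 : (1/4)*(y t)^4 - (1/2)*(y t)^2 ≤ (1/4)*b^4 - (1/2)*b^2 := by
      nlinarith [sq_nonneg (deriv y t)]
    clear hE
    have hsq : (y t)^2 ≤ b^2 := by
      by_contra hc
      push_neg at hc
      nlinarith [mul_pos (sub_pos.2 hc) (show (0:ℝ) < (y t)^2 + b^2 - 2 by nlinarith)]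
    have habs : |y t| ≤ b := by
      by_contra hc
      push_neg at hc
      have h1 : 0 < |y t| - b := by linarith
      have h2 : 0 < |y t| + b := by
        have := abs_nonneg (y t)
        linarith
      have h3 := mul_pos h1 h2
      have h5 : |y t|^2 = (y t)^2 := sq_abs (y t)
      nlinarith [hsq]
    exact ⟨neg_le_of_abs_le habs, le_of_abs_le habs⟩


set_option maxHeartbeats 1000000 in
theorem picard_approx_y (b : ℝ) (hb : Real.sqrt 2 ≤ b)
    (y : ℝ → ℝ) (hy : IsSolution b y) :
    ∀ t : ℝ, 0 ≤ t →
      (b - (t ^ 2 / 6) * (b ^ 3 - b) ≤ y t ∧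
       y t ≤ b - (t ^ 2 / 6) * (b ^ 3 - b) +
         ((b ^ 3 - b) * (3 * b ^ 2 - 1) / 120) * t ^ 4 ∧
       b - (t ^ 2 / 6) * (b ^ 3 - b) +
         ((b ^ 3 - b) * (3 * b ^ 2 - 1) / 120) * t ^ 4 ≤
         b - (t ^ 2 / 6) * (b ^ 3 - b) + (b ^ 5 / 40) * t ^ 4) ∧
      (-(t / 3) * (b ^ 3 - b) ≤ deriv y t ∧
       deriv y t ≤ -(t / 3) * (b ^ 3 - b) +
         ((b ^ 3 - b) * (3 * b ^ 2 - 1) / 30) * t ^ 3 ∧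
       -(t / 3) * (b ^ 3 - b) +
         ((b ^ 3 - b) * (3 * b ^ 2 - 1) / 30) * t ^ 3 ≤
         -(t / 3) * (b ^ 3 - b) + (b ^ 5 / 10) * t ^ 3) := by
  obtain ⟨hy0, hy0', hdy, hddy, heq⟩ := hy
  have hsq2 : (1:ℝ) ≤ Real.sqrt 2 := by
    rw [show (1:ℝ) = Real.sqrt 1 from (Real.sqrt_one).symm]
    exact Real.sqrt_le_sqrt (by norm_num)
  have hb1 : 1 ≤ b := le_trans hsq2 hb
  have hb2 : 2 ≤ b^2 := by
    have h := Real.sq_sqrt (by norm_num : (0:ℝ) ≤ 2)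
    calc (2:ℝ) = (Real.sqrt 2)^2 := h.symm
    _ ≤ b^2 := by
      apply pow_le_pow_left₀ (Real.sqrt_nonneg 2) hb
  have hyc : ∀ t : ℝ, 0 ≤ t → ContinuousAt y t := fun t ht => (hdy t ht).continuousAt
  have hy'c : ∀ t : ℝ, 0 < t → ContinuousAt (deriv y) t := fun t ht => (hddy t ht).continuousAt
  have hgd : ∀ t : ℝ, 0 < t →
      HasDerivAt (fun s => s^2 * deriv y s) (-(t^2) * ((y t)^3 - y t)) t := by
    intro t ht
    have h1 : HasDerivAt (fun s : ℝ => s^2) (2*t) t := by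
      simpa using hasDerivAt_pow 2 t
    have h2 : HasDerivAt (deriv y) (deriv (deriv y) t) t := (hddy t ht).hasDerivAt
    have h3 := h1.mul h2
    refine h3.congr_deriv ?_
    have hdd : deriv (deriv y) t = -(2/t)*deriv y t - ((y t)^3 - y t) := by
      linarith [heq t ht]
    rw [hdd]
    have ht' : t ≠ 0 := ne_of_gt ht
    field_simp
    ring
  obtain ⟨M, hM0, hM⟩ : ∃ M : ℝ, 0 ≤ M ∧ ∀ s ∈ Set.Icc (0:ℝ) 2, |(y s)^3 - y s| ≤ M := by
    obtain ⟨M, hMb⟩ := (isCompact_Icc (a := (0:ℝ)) (b := 2)).exists_bound_of_continuousOn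
      (f := fun s => (y s)^3 - y s)
      (fun s hs => (((hyc s hs.1).pow 3).sub (hyc s hs.1)).continuousWithinAt)
    have h0 : |(y 0)^3 - y 0| ≤ M := by simpa using hMb 0 ⟨le_refl _, by norm_num⟩
    exact ⟨M, le_trans (abs_nonneg _) h0, fun s hs => by simpa using hMb s hs⟩
  have hglim := aux_g_tendsto y b M hy0 hyc hy'c hdy hgd hM0 hM
  have hybd := aux_ybound y b M hy0 hy0' hb1 hb2 hyc hy'c hdy hddy heq hgd hM0 hM hglim
  have hmain := stage5 y b hy0 hy0' hb1 hb2 hyc hy'c hdy hgd hglim hybd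
  have hFD : (b^3 - b)*(3*b^2 - 1) ≤ 3*b^5 := by nlinarith
  intro t ht
  obtain ⟨⟨hA, hB⟩, hD, hE⟩ := hmain t ht
  have ht4 : (0:ℝ) ≤ t^4 := pow_nonneg ht 4
  have ht3 : (0:ℝ) ≤ t^3 := pow_nonneg ht 3
  have hC : ((b^3 - b)*(3*b^2 - 1)/120) * t^4 ≤ (b^5/40) * t^4 :=
    mul_le_mul_of_nonneg_right (by linarith) ht4
  have hG : ((b^3 - b)*(3*b^2 - 1)/30) * t^3 ≤ (b^5/10) * t^3 :=
    mul_le_mul_of_nonneg_right (by linarith) ht3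
  exact ⟨⟨hA, hB, by linarith⟩, hD, hE, by linarith⟩
end
end

section
/- Suppose b ≥ √2. Let δ̃(t) = 1 − (t²/6)f′(b) and ṽ(t) = −(t/3)f′(b), where f′(b) = 3b² − 1, and set t* = min( √(6(√3·b − 1)/(√3·b·(b² − 1))), (log 4)/(√3·b) ). Then for all 0 ≤ t ≤ t*: δ̃(t) ≤ δ_b(t) ≤ δ̃(t) + (b⁴/8)t⁴ and ṽ(t) ≤ δ̇_b(t) ≤ ṽ(t) + (b⁴/2)t³. -/
noncomputable section
open Set intervalIntegral Filter Topology MeasureTheory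

/-- `δ` solves the equation of variation along `y`:
`δ'' + (2/t) δ' + f'(y(t)) δ = 0`, `δ(0) = 1`, `δ'(0) = 0`,
where `f'(y) = 3y^2 - 1`. -/
def IsVariation (y δ : ℝ → ℝ) : Prop :=
  δ 0 = 1 ∧ deriv δ 0 = 0 ∧
  (∀ t : ℝ, 0 ≤ t → DifferentiableAt ℝ δ t) ∧
  (∀ t : ℝ, 0 < t → DifferentiableAt ℝ (deriv δ) t) ∧
  ∀ t : ℝ, 0 < t →
    deriv (deriv δ) t + (2 / t) * deriv δ t + (3 * (y t) ^ 2 - 1) * δ t = 0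


lemma rep_deriv (w F : ℝ → ℝ) (T : ℝ) (hT : 0 < T)
    (hwd : ∀ s, 0 ≤ s → DifferentiableAt ℝ w s)
    (hwd2 : ∀ s, 0 < s → DifferentiableAt ℝ (deriv w) s)
    (hF : ContinuousOn F (Icc 0 T))
    (hode : ∀ s, 0 < s → deriv (deriv w) s + (2 / s) * deriv w s + F s = 0) :
    ∀ s ∈ Ioc (0:ℝ) T, s ^ 2 * deriv w s = - ∫ r in (0:ℝ)..s, r ^ 2 * F r := by
  -- continuity of integrand
  have hiF : ContinuousOn (fun r : ℝ => r ^ 2 * F r) (Icc 0 T) :=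
    (continuous_pow 2).continuousOn.mul hF
  have hint : ∀ a b : ℝ, a ∈ Icc (0:ℝ) T → b ∈ Icc (0:ℝ) T →
      IntervalIntegrable (fun r : ℝ => r ^ 2 * F r) volume a b := by
    intro a b ha hb
    apply (hiF.mono _).intervalIntegrable
    exact uIcc_subset_Icc ha hb
  set I : ℝ → ℝ := fun s => ∫ r in (0:ℝ)..s, r ^ 2 * F r with hI
  -- derivative of h s = s^2 * deriv w s
  have hder : ∀ s : ℝ, 0 < s →
      HasDerivAt (fun u => u ^ 2 * deriv w u) (-(s ^ 2 * F s)) s := by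
    intro s hs
    have h1 : HasDerivAt (deriv w) (deriv (deriv w) s) s := (hwd2 s hs).hasDerivAt
    have h2 : HasDerivAt (fun u : ℝ => u ^ 2) (2 * s) s := by
      simpa using (hasDerivAt_pow 2 s)
    have h3 := h2.mul h1
    refine h3.congr_deriv ?_
    have := hode s hs
    have hs' : s ≠ 0 := ne_of_gt hs
    field_simp at this
    linear_combination s * this
  -- constancy of φ s = s^2 * deriv w s + I s on (0, T]
  have hconst : ∀ s ∈ Ioc (0:ℝ) T, s ^ 2 * deriv w s + I s = T ^ 2 * deriv w T + I T := by
    intro s hs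
    have hsub : uIcc s T ⊆ Icc 0 T := by
      rw [uIcc_of_le hs.2]
      exact Icc_subset_Icc (le_of_lt hs.1) le_rfl
    have hFTC : ∫ r in s..T, -(r ^ 2 * F r) = (fun u => u ^ 2 * deriv w u) T
        - (fun u => u ^ 2 * deriv w u) s := by
      apply integral_eq_sub_of_hasDerivAt
      · intro x hx
        have hx0 : 0 < x := lt_of_lt_of_le hs.1 (by rw [uIcc_of_le hs.2] at hx; exact hx.1)
        exact hder x hx0
      · apply ((hiF.mono hsub).neg).intervalIntegrable
    have hadd : I s + ∫ r in s..T, r ^ 2 * F r = I T := by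
      apply integral_add_adjacent_intervals
      · exact hint 0 s ⟨le_rfl, le_of_lt hT⟩ ⟨le_of_lt hs.1, hs.2⟩
      · exact hint s T ⟨le_of_lt hs.1, hs.2⟩ ⟨le_of_lt hT, le_rfl⟩
    have : ∫ r in s..T, -(r ^ 2 * F r) = -(∫ r in s..T, r ^ 2 * F r) := by
      simp [intervalIntegral.integral_neg]
    rw [this] at hFTC
    simp only at hFTC
    linarith
  set L : ℝ := T ^ 2 * deriv w T + I T with hL
  -- bound for F
  obtain ⟨M, hM⟩ := isCompact_Icc.exists_bound_of_continuousOn hF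
  have hM0 : 0 ≤ M := le_trans (norm_nonneg _) (hM 0 ⟨le_rfl, le_of_lt hT⟩)
  -- bound for I
  have bI : ∀ s ∈ Icc (0:ℝ) T, |I s| ≤ M * s ^ 3 := by
    intro s hs
    have : ‖∫ r in (0:ℝ)..s, r ^ 2 * F r‖ ≤ (M * s ^ 2) * |s - 0| := by
      apply intervalIntegral.norm_integral_le_of_norm_le_const
      intro x hx
      rw [uIoc_of_le hs.1] at hx
      have hx1 : 0 < x := hx.1
      have hx2 : x ≤ s := hx.2
      have hFx : |F x| ≤ M := hM x ⟨le_of_lt hx1, le_trans hx2 hs.2⟩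
      have : ‖x ^ 2 * F x‖ = x ^ 2 * |F x| := by
        rw [norm_mul]
        simp [abs_of_nonneg (sq_nonneg x)]
      rw [this]
      have : x ^ 2 ≤ s ^ 2 := by nlinarith
      nlinarith [abs_nonneg (F x)]
    have h9 : |s - 0| = s := by rw [sub_zero, abs_of_nonneg hs.1]
    rw [h9] at this
    calc |I s| ≤ M * s ^ 2 * s := by simpa using this
    _ = M * s ^ 3 := by ring
  -- bound for w
  have hcw : ContinuousOn w (Icc 0 T) := fun x hx => ((hwd x hx.1).continuousAt).continuousWithinAt
  obtain ⟨W, hW⟩ := isCompact_Icc.exists_bound_of_continuousOn hcw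
  have hW0 : 0 ≤ W := le_trans (norm_nonneg _) (hW 0 ⟨le_rfl, le_of_lt hT⟩)
  have hLzero : L = 0 := by
    by_contra hLne
    set C0 : ℝ := 2 * W + M * T ^ 2 with hC0
    have hC0' : 0 ≤ C0 := by positivity
    have key : ∀ ε : ℝ, 0 < ε → ε < T → |L| / ε ≤ C0 + |L| / T := by
      intro ε hε hεT
      -- FTC for w on [ε, T]
      have hdw_cont : ContinuousOn (deriv w) (Icc ε T) := fun x hx =>
        ((hwd2 x (lt_of_lt_of_le hε hx.1)).continuousAt).continuousWithinAt
      have hdw_int : IntervalIntegrable (deriv w) volume ε T := by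
        apply hdw_cont.intervalIntegrable_of_Icc (le_of_lt hεT)
      have hFTCw : ∫ s in ε..T, deriv w s = w T - w ε := by
        apply integral_eq_sub_of_hasDerivAt
        · intro x hx
          rw [uIcc_of_le (le_of_lt hεT)] at hx
          exact (hwd x (le_trans (le_of_lt hε) hx.1)).hasDerivAt
        · exact hdw_int
      -- FTC for s ↦ L * (s^2)⁻¹
      have hFTCL : ∫ s in ε..T, L * (s ^ 2)⁻¹ = (-(L * T⁻¹)) - (-(L * ε⁻¹)) := by
        apply integral_eq_sub_of_hasDerivAt
        · intro x hx
          rw [uIcc_of_le (le_of_lt hεT)] at hx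
          have hx0 : x ≠ 0 := ne_of_gt (lt_of_lt_of_le hε hx.1)
          have := ((hasDerivAt_inv hx0).const_mul L).neg
          exact this.congr_deriv (by ring)
        · apply ContinuousOn.intervalIntegrable
          apply ContinuousOn.mul continuousOn_const
          apply ContinuousOn.inv₀ (by fun_prop)
          intro x hx
          rw [uIcc_of_le (le_of_lt hεT)] at hx
          exact pow_ne_zero 2 (ne_of_gt (lt_of_lt_of_le hε hx.1))
      have hLint : IntervalIntegrable (fun s => L * (s ^ 2)⁻¹) volume ε T := by
        apply ContinuousOn.intervalIntegrable
        apply ContinuousOn.mul continuousOn_const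
        apply ContinuousOn.inv₀ (by fun_prop)
        intro x hx
        rw [uIcc_of_le (le_of_lt hεT)] at hx
        exact pow_ne_zero 2 (ne_of_gt (lt_of_lt_of_le hε hx.1))
      -- pointwise bound for deriv w s - L/s²
      have hdiffbd : ‖∫ s in ε..T, (deriv w s - L * (s ^ 2)⁻¹)‖ ≤ (M * T) * |T - ε| := by
        apply intervalIntegral.norm_integral_le_of_norm_le_const
        intro x hx
        rw [uIoc_of_le (le_of_lt hεT)] at hx
        have hx0 : 0 < x := lt_trans hε hx.1
        have hxT : x ≤ T := hx.2
        have hxm : x ∈ Ioc (0:ℝ) T := ⟨hx0, hxT⟩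
        have hc := hconst x hxm
        have hx2 : (x:ℝ) ^ 2 ≠ 0 := pow_ne_zero 2 (ne_of_gt hx0)
        have hreq : deriv w x - L * (x ^ 2)⁻¹ = -(I x) * (x ^ 2)⁻¹ := by
          rw [hL] at *
          field_simp
          nlinarith [hc]
        rw [hreq]
        have hIb := bI x ⟨le_of_lt hx0, hxT⟩
        have : ‖-(I x) * (x ^ 2)⁻¹‖ = |I x| * (x ^ 2)⁻¹ := by
          rw [norm_mul]
          simp [abs_of_nonneg (le_of_lt (inv_pos.mpr (pow_pos hx0 2)))]
        rw [this]
        have h1 : |I x| ≤ M * x ^ 3 := hIb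
        have h2 : (x ^ 2)⁻¹ * x ^ 2 = 1 := inv_mul_cancel₀ hx2
        calc |I x| * (x ^ 2)⁻¹ ≤ (M * x ^ 3) * (x ^ 2)⁻¹ := by
              apply mul_le_mul_of_nonneg_right h1 (le_of_lt (inv_pos.mpr (pow_pos hx0 2)))
        _ = M * x * ((x ^ 2)⁻¹ * x ^ 2) := by ring
        _ = M * x := by rw [h2]; ring
        _ ≤ M * T := by nlinarith
      have hsplit : ∫ s in ε..T, (deriv w s - L * (s ^ 2)⁻¹)
          = (w T - w ε) - ((-(L * T⁻¹)) - (-(L * ε⁻¹))) := by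
        rw [intervalIntegral.integral_sub hdw_int hLint, hFTCw, hFTCL]
      rw [hsplit] at hdiffbd
      have hwT := hW T ⟨le_of_lt hT, le_rfl⟩
      have hwε := hW ε ⟨le_of_lt hε, le_of_lt hεT⟩
      have habs : |L * ε⁻¹ - L * T⁻¹| ≤ 2 * W + M * T * |T - ε| := by
        have h1 : |w T - w ε| ≤ 2 * W := by
          calc |w T - w ε| ≤ |w T| + |w ε| := abs_sub _ _
          _ ≤ W + W := add_le_add hwT hwε
          _ = 2 * W := by ring
        have h2 := abs_sub_abs_le_abs_sub (w T - w ε) ((w T - w ε) - (L * ε⁻¹ - L * T⁻¹))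
        have h3 : (w T - w ε) - ((-(L * T⁻¹)) - (-(L * ε⁻¹))) = (w T - w ε) - (L * ε⁻¹ - L * T⁻¹) := by ring
        rw [h3] at hdiffbd
        have h4 : |(w T - w ε) - (L * ε⁻¹ - L * T⁻¹)| ≤ M * T * |T - ε| := hdiffbd
        calc |L * ε⁻¹ - L * T⁻¹| = |(w T - w ε) - ((w T - w ε) - (L * ε⁻¹ - L * T⁻¹))| := by ring_nf
        _ ≤ |w T - w ε| + |(w T - w ε) - (L * ε⁻¹ - L * T⁻¹)| := abs_sub _ _
        _ ≤ 2 * W + M * T * |T - ε| := add_le_add h1 h4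
      have hTε : |T - ε| ≤ T := by
        rw [abs_of_nonneg (by linarith)]; linarith
      have h5 : |L * ε⁻¹ - L * T⁻¹| = |L| / ε - |L| / T := by
        have h6 : L * ε⁻¹ - L * T⁻¹ = L * (ε⁻¹ - T⁻¹) := by ring
        rw [h6, abs_mul]
        have h7 : (0:ℝ) ≤ ε⁻¹ - T⁻¹ := by
          have := one_div_le_one_div_of_le hε (le_of_lt hεT)
          simp only [one_div] at this
          linarith
        rw [abs_of_nonneg h7]
        field_simp
      rw [h5] at habs
      have h10 : M * T * |T - ε| ≤ M * T * T := by
        apply mul_le_mul_of_nonneg_left hTε (by positivity)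
      have h11 : M * T * T = M * T ^ 2 := by ring
      linarith
    -- derive contradiction
    have hLpos : 0 < |L| := abs_pos.mpr hLne
    set ε : ℝ := min (T / 2) (|L| / (C0 + |L| / T + 1)) with hε
    have hd0 : 0 < C0 + |L| / T + 1 := by positivity
    have hε0 : 0 < ε := lt_min (by linarith) (div_pos hLpos hd0)
    have hεT : ε < T := lt_of_le_of_lt (min_le_left _ _) (by linarith)
    have hεle : ε ≤ |L| / (C0 + |L| / T + 1) := min_le_right _ _
    have := key ε hε0 hεT
    have h8 : |L| / ε ≥ C0 + |L| / T + 1 := by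
      rw [ge_iff_le, le_div_iff₀ hε0]
      calc (C0 + |L| / T + 1) * ε ≤ (C0 + |L| / T + 1) * (|L| / (C0 + |L| / T + 1)) := by
            apply mul_le_mul_of_nonneg_left hεle (le_of_lt hd0)
      _ = |L| := by field_simp
    linarith
  intro s hs
  have h12 := hconst s hs
  rw [hLzero] at h12
  show s ^ 2 * deriv w s = - I s
  linarith

lemma poly_int (a c s : ℝ) :
    ∫ r in (0:ℝ)..s, (a * r ^ 2 + c * r ^ 4) = a * s ^ 3 / 3 + c * s ^ 5 / 5 := by
  have h1 : IntervalIntegrable (fun r : ℝ => a * r ^ 2) volume 0 s := by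
    apply Continuous.intervalIntegrable; fun_prop
  have h2 : IntervalIntegrable (fun r : ℝ => c * r ^ 4) volume 0 s := by
    apply Continuous.intervalIntegrable; fun_prop
  rw [intervalIntegral.integral_add h1 h2, intervalIntegral.integral_const_mul,
    intervalIntegral.integral_const_mul, integral_pow, integral_pow]
  ring

lemma w_upper (w F : ℝ → ℝ) (T a c : ℝ) (hT : 0 < T)
    (hwd : ∀ s, 0 ≤ s → DifferentiableAt ℝ w s)
    (hwd2 : ∀ s, 0 < s → DifferentiableAt ℝ (deriv w) s)
    (hF : ContinuousOn F (Icc 0 T))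
    (hode : ∀ s, 0 < s → deriv (deriv w) s + (2 / s) * deriv w s + F s = 0)
    (hlb : ∀ s ∈ Icc (0:ℝ) T, a + c * s ^ 2 ≤ F s) :
    (∀ s ∈ Ioc (0:ℝ) T, deriv w s ≤ -(a * s / 3) - c * s ^ 3 / 5) ∧
      w T ≤ w 0 - a * T ^ 2 / 6 - c * T ^ 4 / 20 := by
  have hiF : ContinuousOn (fun r : ℝ => r ^ 2 * F r) (Icc 0 T) :=
    (continuous_pow 2).continuousOn.mul hF
  have hrep := rep_deriv w F T hT hwd hwd2 hF hode
  have hderb : ∀ s ∈ Ioc (0:ℝ) T, deriv w s ≤ -(a * s / 3) - c * s ^ 3 / 5 := by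
    intro s hs
    have hIlow : a * s ^ 3 / 3 + c * s ^ 5 / 5 ≤ ∫ r in (0:ℝ)..s, r ^ 2 * F r := by
      rw [← poly_int a c s]
      apply intervalIntegral.integral_mono_on (le_of_lt hs.1)
      · apply Continuous.intervalIntegrable; fun_prop
      · exact (hiF.mono (by rw [uIcc_of_le (le_of_lt hs.1)]; exact Icc_subset_Icc le_rfl hs.2)).intervalIntegrable
      · intro x hx
        have hx' : x ∈ Icc (0:ℝ) T := ⟨hx.1, le_trans hx.2 hs.2⟩
        have := hlb x hx'
        nlinarith [sq_nonneg x]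
    have heq := hrep s hs
    have hs2 : (0:ℝ) < s ^ 2 := pow_pos hs.1 2
    have : s ^ 2 * deriv w s ≤ s ^ 2 * (-(a * s / 3) - c * s ^ 3 / 5) := by
      rw [heq]; nlinarith
    exact le_of_mul_le_mul_left (by linarith [this]) hs2
  refine ⟨hderb, ?_⟩
  -- integrate the derivative bound from ε to T and let ε → 0
  have hkey : ∀ ε ∈ Ioo (0:ℝ) T,
      w T ≤ w ε + (-(a * T ^ 2 / 6) - c * T ^ 4 / 20) - (-(a * ε ^ 2 / 6) - c * ε ^ 4 / 20) := by
    intro ε hε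
    have hεT : ε ≤ T := le_of_lt hε.2
    have hdw_cont : ContinuousOn (deriv w) (Icc ε T) := fun x hx =>
      ((hwd2 x (lt_of_lt_of_le hε.1 hx.1)).continuousAt).continuousWithinAt
    have hdw_int : IntervalIntegrable (deriv w) volume ε T :=
      hdw_cont.intervalIntegrable_of_Icc hεT
    have hFTCw : ∫ s in ε..T, deriv w s = w T - w ε := by
      apply integral_eq_sub_of_hasDerivAt
      · intro x hx
        rw [uIcc_of_le hεT] at hx
        exact (hwd x (le_trans (le_of_lt hε.1) hx.1)).hasDerivAt
      · exact hdw_int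
    have hQder : ∀ x : ℝ, HasDerivAt (fun u : ℝ => -(a * u ^ 2 / 6) - c * u ^ 4 / 20)
        (-(a * x / 3) - c * x ^ 3 / 5) x := by
      intro x
      have h1 : HasDerivAt (fun u : ℝ => u ^ 2) (2 * x) x := by simpa using hasDerivAt_pow 2 x
      have h2 : HasDerivAt (fun u : ℝ => u ^ 4) (4 * x ^ 3) x := by
        simpa using hasDerivAt_pow 4 x
      have := ((h1.const_mul (-(a/6))).add (h2.const_mul (-(c/20))))
      rw [show (fun u : ℝ => -(a * u ^ 2 / 6) - c * u ^ 4 / 20) = ((fun y => -(a / 6) * y ^ 2) + fun y => -(c / 20) * y ^ 4) by funext u; simp only [Pi.add_apply]; ring]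
      exact this.congr_deriv (by ring)
    have hFTCQ : ∫ s in ε..T, (-(a * s / 3) - c * s ^ 3 / 5)
        = (-(a * T ^ 2 / 6) - c * T ^ 4 / 20) - (-(a * ε ^ 2 / 6) - c * ε ^ 4 / 20) := by
      apply integral_eq_sub_of_hasDerivAt (fun x _ => hQder x)
      apply Continuous.intervalIntegrable; fun_prop
    have hmono : ∫ s in ε..T, deriv w s ≤ ∫ s in ε..T, (-(a * s / 3) - c * s ^ 3 / 5) := by
      apply intervalIntegral.integral_mono_on hεT hdw_int
      · apply Continuous.intervalIntegrable; fun_prop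
      · intro x hx
        exact hderb x ⟨lt_of_lt_of_le hε.1 hx.1, le_trans hx.2 le_rfl⟩
    rw [hFTCw, hFTCQ] at hmono
    linarith
  have htend : Tendsto (fun ε : ℝ => w ε + (-(a * T ^ 2 / 6) - c * T ^ 4 / 20)
      - (-(a * ε ^ 2 / 6) - c * ε ^ 4 / 20)) (𝓝[>] (0:ℝ))
      (𝓝 (w 0 - a * T ^ 2 / 6 - c * T ^ 4 / 20)) := by
    have hwc : ContinuousAt w 0 := (hwd 0 le_rfl).continuousAt
    have : Tendsto (fun ε : ℝ => w ε + (-(a * T ^ 2 / 6) - c * T ^ 4 / 20)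
        - (-(a * ε ^ 2 / 6) - c * ε ^ 4 / 20)) (𝓝 (0:ℝ))
        (𝓝 (w 0 + (-(a * T ^ 2 / 6) - c * T ^ 4 / 20) - (-(a * 0 ^ 2 / 6) - c * 0 ^ 4 / 20))) := by
      apply Tendsto.sub
      · exact (hwc.tendsto).add tendsto_const_nhds
      · exact Continuous.tendsto (by continuity) 0
    have h0 : w 0 + (-(a * T ^ 2 / 6) - c * T ^ 4 / 20) - (-(a * 0 ^ 2 / 6) - c * 0 ^ 4 / 20)
        = w 0 - a * T ^ 2 / 6 - c * T ^ 4 / 20 := by ring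
    rw [h0] at this
    exact this.mono_left nhdsWithin_le_nhds
  apply ge_of_tendsto htend
  filter_upwards [Ioo_mem_nhdsGT_of_mem (⟨le_rfl, hT⟩ : (0:ℝ) ∈ Ico 0 T)] with ε hε
  exact hkey ε hε

lemma w_lower (w F : ℝ → ℝ) (T a c : ℝ) (hT : 0 < T)
    (hwd : ∀ s, 0 ≤ s → DifferentiableAt ℝ w s)
    (hwd2 : ∀ s, 0 < s → DifferentiableAt ℝ (deriv w) s)
    (hF : ContinuousOn F (Icc 0 T))
    (hode : ∀ s, 0 < s → deriv (deriv w) s + (2 / s) * deriv w s + F s = 0)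
    (hub : ∀ s ∈ Icc (0:ℝ) T, F s ≤ a + c * s ^ 2) :
    (∀ s ∈ Ioc (0:ℝ) T, -(a * s / 3) - c * s ^ 3 / 5 ≤ deriv w s) ∧
      w 0 - a * T ^ 2 / 6 - c * T ^ 4 / 20 ≤ w T := by
  have hdneg : deriv (fun x => -w x) = fun x => -deriv w x := funext fun x => deriv.neg
  have h := w_upper (fun x => -w x) (fun x => -F x) T (-a) (-c) hT
    (fun s hs => (hwd s hs).neg)
    (by
      intro s hs
      rw [hdneg]
      exact (hwd2 s hs).neg)
    (hF.neg)
    (by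
      intro s hs
      rw [hdneg]
      have hd2 : deriv (fun x => -deriv w x) s = -deriv (deriv w) s := deriv.neg
      rw [hd2]
      have := hode s hs
      ring_nf
      ring_nf at this
      linarith)
    (by
      intro s hs
      have := hub s hs
      linarith)
  obtain ⟨h1, h2⟩ := h
  constructor
  · intro s hs
    have := h1 s hs
    rw [hdneg] at this
    simp only at this
    linarith
  · linarith

lemma marg (b T s : ℝ) (hb1 : (1.41:ℝ) ≤ b) (hT2 : 3 * b ^ 2 * T ^ 2 ≤ 2)
    (hs : 0 ≤ s) (hsT : s ≤ T) : (b ^ 3 - b) * s ^ 2 / 6 < b - 1 := by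
  have hs2 : s ^ 2 ≤ T ^ 2 := by nlinarith
  have hb3 : 0 ≤ b ^ 3 - b := by nlinarith
  have h1 : (b ^ 3 - b) * s ^ 2 ≤ (b ^ 3 - b) * T ^ 2 := mul_le_mul_of_nonneg_left hs2 hb3
  have h2 : (b ^ 3 - b) * (3 * b ^ 2 * T ^ 2) ≤ (b ^ 3 - b) * 2 := mul_le_mul_of_nonneg_left hT2 hb3
  nlinarith [sq_nonneg T, sq_nonneg (b - 1), sq_nonneg b]


lemma ybnd (b : ℝ) (hb1 : (1.41:ℝ) ≤ b) (y : ℝ → ℝ) (hy : IsSolution b y)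
    (T : ℝ) (hT : 0 < T) (hTs : 3 * b ^ 2 * T ^ 2 ≤ 2) :
    ∀ t ∈ Icc (0:ℝ) T, b - (b ^ 3 - b) * t ^ 2 / 6 ≤ y t ∧ y t ≤ b := by
  obtain ⟨hy0, hy0', hyd, hyd2, hyode⟩ := hy
  have hcy : ∀ x : ℝ, 0 ≤ x → ContinuousAt y x := fun x hx => (hyd x hx).continuousAt
  have hP0 : b - (b ^ 3 - b) * (0:ℝ) ^ 2 / 6 ≤ y 0 ∧ y 0 ≤ b := by
    rw [hy0]; norm_num
  by_contra hcon
  push_neg at hcon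
  obtain ⟨t0, ht0, hPt0⟩ := hcon
  set B : Set ℝ := {t | t ∈ Icc 0 T ∧ ¬(b - (b ^ 3 - b) * t ^ 2 / 6 ≤ y t ∧ y t ≤ b)} with hB
  have hBne : B.Nonempty :=
    ⟨t0, ht0, fun hP => lt_irrefl _ (lt_of_le_of_lt hP.2 (hPt0 hP.1))⟩
  have hBbdd : BddBelow B := ⟨0, fun x hx => hx.1.1⟩
  set u : ℝ := sInf B with hu
  have hu0 : 0 ≤ u := le_csInf hBne (fun x hx => hx.1.1)
  have huT : u ≤ T := by
    obtain ⟨x, hx⟩ := hBne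
    exact le_trans (csInf_le hBbdd hx) hx.1.2
  have hbelow : ∀ s, 0 ≤ s → s ≤ T → s < u →
      b - (b ^ 3 - b) * s ^ 2 / 6 ≤ y s ∧ y s ≤ b := by
    intro s hs1 hs2 hsu
    by_contra hPs
    exact absurd (csInf_le hBbdd ⟨⟨hs1, hs2⟩, hPs⟩) (not_le.mpr hsu)
  -- P holds at u
  have hPu : b - (b ^ 3 - b) * u ^ 2 / 6 ≤ y u ∧ y u ≤ b := by
    rcases eq_or_lt_of_le hu0 with h | h
    · rw [← h]; exact hP0
    · have hten : Tendsto y (𝓝[<] u) (𝓝 (y u)) :=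
        ((hcy u hu0).continuousWithinAt).tendsto
      have hmemIoo : Ioo (0:ℝ) u ∈ 𝓝[<] u := Ioo_mem_nhdsLT_of_mem ⟨h, le_rfl⟩
      constructor
      · have htpoly : Tendsto (fun s : ℝ => b - (b ^ 3 - b) * s ^ 2 / 6) (𝓝[<] u)
            (𝓝 (b - (b ^ 3 - b) * u ^ 2 / 6)) :=
          (Continuous.tendsto (by fun_prop) u).mono_left nhdsWithin_le_nhds
        apply le_of_tendsto_of_tendsto htpoly hten
        filter_upwards [hmemIoo] with s hs
        exact (hbelow s (le_of_lt hs.1) (le_trans (le_of_lt hs.2) huT) hs.2).1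
      · apply le_of_tendsto hten
        filter_upwards [hmemIoo] with s hs
        exact (hbelow s (le_of_lt hs.1) (le_trans (le_of_lt hs.2) huT) hs.2).2
  have hyu1 : 1 < y u := by
    have := marg b T u hb1 hTs hu0 huT
    linarith [hPu.1]
  have hev2 : ∀ᶠ x in 𝓝 u, 1 < y x := (hcy u hu0).eventually_const_lt hyu1
  obtain ⟨l, r, hulr, hsub⟩ := mem_nhds_iff_exists_Ioo_subset.mp hev2
  have hy1 : ∀ s, 0 ≤ s → s ≤ T → s < r → 1 ≤ y s := by
    intro s hs1 hs2 hsr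
    rcases lt_trichotomy s u with hc | hc | hc
    · have h6 := hbelow s hs1 hs2 hc
      have h7 := marg b T s hb1 hTs hs1 hs2
      linarith [h6.1]
    · rw [hc]; linarith
    · exact le_of_lt (hsub ⟨lt_trans hulr.1 hc, hsr⟩)
  have hcF : ∀ τ : ℝ, 0 < τ → τ ≤ T → ContinuousOn (fun s => y s ^ 3 - y s) (Icc 0 τ) := by
    intro τ h1 h2
    have hcy' : ContinuousOn y (Icc 0 τ) := fun x hx => (hcy x hx.1).continuousWithinAt
    exact (hcy'.pow 3).sub hcy'
  have stepA : ∀ τ, 0 < τ → τ ≤ T → τ < r → y τ ≤ b := by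
    intro τ h1 h2 h3
    have h4 := w_upper y (fun s => y s ^ 3 - y s) τ 0 0 h1 hyd hyd2 (hcF τ h1 h2)
      (fun s hs => hyode s hs)
      (by
        intro s hs
        have h5 := hy1 s hs.1 (le_trans hs.2 h2) (lt_of_le_of_lt hs.2 h3)
        show (0:ℝ) + 0 * s ^ 2 ≤ y s ^ 3 - y s
        nlinarith [mul_nonneg (mul_nonneg (by linarith : (0:ℝ) ≤ y s)
          (by linarith : (0:ℝ) ≤ y s - 1)) (by linarith : (0:ℝ) ≤ y s + 1)])
    have := h4.2
    rw [hy0] at this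
    linarith
  have stepB : ∀ τ, 0 < τ → τ ≤ T → τ < r → b - (b ^ 3 - b) * τ ^ 2 / 6 ≤ y τ := by
    intro τ h1 h2 h3
    have h4 := w_lower y (fun s => y s ^ 3 - y s) τ (b ^ 3 - b) 0 h1 hyd hyd2 (hcF τ h1 h2)
      (fun s hs => hyode s hs)
      (by
        intro s hs
        have h5 := hy1 s hs.1 (le_trans hs.2 h2) (lt_of_le_of_lt hs.2 h3)
        have h6 : y s ≤ b := by
          rcases eq_or_lt_of_le hs.1 with hc | hc
          · rw [← hc, hy0]
          · exact stepA s hc (le_trans hs.2 h2) (lt_of_le_of_lt hs.2 h3)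
        show y s ^ 3 - y s ≤ b ^ 3 - b + 0 * s ^ 2
        nlinarith [mul_nonneg (by linarith : (0:ℝ) ≤ b - y s)
          (by nlinarith : (0:ℝ) ≤ b ^ 2 + b * y s + y s ^ 2 - 1)])
    have := h4.2
    rw [hy0] at this
    linarith
  have hur : u < r := hulr.2
  obtain ⟨x, hxB, hxr⟩ := (csInf_lt_iff hBbdd hBne).mp hur
  obtain ⟨⟨hx0, hxT⟩, hnP⟩ := hxB
  apply hnP
  rcases eq_or_lt_of_le hx0 with hc | hc
  · rw [← hc]; exact hP0
  · exact ⟨stepB x hc hxT hxr, stepA x hc hxT hxr⟩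

lemma dbnd (b : ℝ) (hb1 : (1.41:ℝ) ≤ b) (y δ : ℝ → ℝ)
    (hcy : ∀ x : ℝ, 0 ≤ x → ContinuousAt y x) (hδ : IsVariation y δ)
    (T : ℝ) (hT : 0 < T) (hTs : 3 * b ^ 2 * T ^ 2 ≤ 2)
    (yb : ∀ t ∈ Icc (0:ℝ) T, b - (b ^ 3 - b) * t ^ 2 / 6 ≤ y t ∧ y t ≤ b) :
    ∀ t ∈ Icc (0:ℝ) T, 1 - (3 * b ^ 2 - 1) * t ^ 2 / 6 ≤ δ t ∧ δ t ≤ 1 := by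
  obtain ⟨hd0, hd0', hdd, hdd2, hdode⟩ := hδ
  have hcd : ∀ x : ℝ, 0 ≤ x → ContinuousAt δ x := fun x hx => (hdd x hx).continuousAt
  have hy1T : ∀ s ∈ Icc (0:ℝ) T, 1 ≤ y s ∧ y s ≤ b := by
    intro s hs
    have h1 := yb s hs
    have h2 := marg b T s hb1 hTs hs.1 hs.2
    exact ⟨by linarith [h1.1], h1.2⟩
  have hglow : ∀ s ∈ Icc (0:ℝ) T, (2:ℝ) ≤ 3 * y s ^ 2 - 1 := by
    intro s hs
    have := (hy1T s hs).1
    nlinarith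
  have hghigh : ∀ s ∈ Icc (0:ℝ) T, 3 * y s ^ 2 - 1 ≤ 3 * b ^ 2 - 1 := by
    intro s hs
    have h1 := (hy1T s hs).1
    have h2 := (hy1T s hs).2
    nlinarith
  have hmarg2 : ∀ s, 0 ≤ s → s ≤ T → (3 * b ^ 2 - 1) * s ^ 2 / 6 ≤ 1/3 := by
    intro s hs1 hs2
    have hs2' : s ^ 2 ≤ T ^ 2 := by nlinarith
    have hg0 : (0:ℝ) ≤ 3 * b ^ 2 - 1 := by nlinarith
    have := mul_le_mul_of_nonneg_left hs2' hg0
    nlinarith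
  have hP0 : 1 - (3 * b ^ 2 - 1) * (0:ℝ) ^ 2 / 6 ≤ δ 0 ∧ δ 0 ≤ 1 := by
    rw [hd0]; norm_num
  by_contra hcon
  push_neg at hcon
  obtain ⟨t0, ht0, hPt0⟩ := hcon
  set B : Set ℝ := {t | t ∈ Icc 0 T ∧ ¬(1 - (3 * b ^ 2 - 1) * t ^ 2 / 6 ≤ δ t ∧ δ t ≤ 1)} with hB
  have hBne : B.Nonempty :=
    ⟨t0, ht0, fun hP => lt_irrefl _ (lt_of_le_of_lt hP.2 (hPt0 hP.1))⟩
  have hBbdd : BddBelow B := ⟨0, fun x hx => hx.1.1⟩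
  set u : ℝ := sInf B with hu
  have hu0 : 0 ≤ u := le_csInf hBne (fun x hx => hx.1.1)
  have huT : u ≤ T := by
    obtain ⟨x, hx⟩ := hBne
    exact le_trans (csInf_le hBbdd hx) hx.1.2
  have hbelow : ∀ s, 0 ≤ s → s ≤ T → s < u →
      1 - (3 * b ^ 2 - 1) * s ^ 2 / 6 ≤ δ s ∧ δ s ≤ 1 := by
    intro s hs1 hs2 hsu
    by_contra hPs
    exact absurd (csInf_le hBbdd ⟨⟨hs1, hs2⟩, hPs⟩) (not_le.mpr hsu)
  have hPu : 1 - (3 * b ^ 2 - 1) * u ^ 2 / 6 ≤ δ u ∧ δ u ≤ 1 := by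
    rcases eq_or_lt_of_le hu0 with h | h
    · rw [← h]; exact hP0
    · have hten : Tendsto δ (𝓝[<] u) (𝓝 (δ u)) :=
        ((hcd u hu0).continuousWithinAt).tendsto
      have hmemIoo : Ioo (0:ℝ) u ∈ 𝓝[<] u := Ioo_mem_nhdsLT_of_mem ⟨h, le_rfl⟩
      constructor
      · have htpoly : Tendsto (fun s : ℝ => 1 - (3 * b ^ 2 - 1) * s ^ 2 / 6) (𝓝[<] u)
            (𝓝 (1 - (3 * b ^ 2 - 1) * u ^ 2 / 6)) :=
          (Continuous.tendsto (by fun_prop) u).mono_left nhdsWithin_le_nhds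
        apply le_of_tendsto_of_tendsto htpoly hten
        filter_upwards [hmemIoo] with s hs
        exact (hbelow s (le_of_lt hs.1) (le_trans (le_of_lt hs.2) huT) hs.2).1
      · apply le_of_tendsto hten
        filter_upwards [hmemIoo] with s hs
        exact (hbelow s (le_of_lt hs.1) (le_trans (le_of_lt hs.2) huT) hs.2).2
  have hδu : (0:ℝ) < δ u := by
    have := hmarg2 u hu0 huT
    linarith [hPu.1]
  have hev2 : ∀ᶠ x in 𝓝 u, 0 < δ x := (hcd u hu0).eventually_const_lt hδu
  obtain ⟨l, r, hulr, hsub⟩ := mem_nhds_iff_exists_Ioo_subset.mp hev2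
  have hdpos : ∀ s, 0 ≤ s → s ≤ T → s < r → 0 ≤ δ s := by
    intro s hs1 hs2 hsr
    rcases lt_trichotomy s u with hc | hc | hc
    · have h6 := hbelow s hs1 hs2 hc
      have h7 := hmarg2 s hs1 hs2
      linarith [h6.1]
    · rw [hc]; linarith
    · exact le_of_lt (hsub ⟨lt_trans hulr.1 hc, hsr⟩)
  have hcF : ∀ τ : ℝ, 0 < τ → τ ≤ T →
      ContinuousOn (fun s => (3 * y s ^ 2 - 1) * δ s) (Icc 0 τ) := by
    intro τ h1 h2
    have hcy' : ContinuousOn y (Icc 0 τ) := fun x hx => (hcy x hx.1).continuousWithinAt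
    have hcd' : ContinuousOn δ (Icc 0 τ) := fun x hx => (hcd x hx.1).continuousWithinAt
    exact ((continuousOn_const.mul (hcy'.pow 2)).sub continuousOn_const).mul hcd'
  have stepA : ∀ τ, 0 < τ → τ ≤ T → τ < r → δ τ ≤ 1 := by
    intro τ h1 h2 h3
    have h4 := w_upper δ (fun s => (3 * y s ^ 2 - 1) * δ s) τ 0 0 h1 hdd hdd2 (hcF τ h1 h2)
      (fun s hs => hdode s hs)
      (by
        intro s hs
        have h5 := hdpos s hs.1 (le_trans hs.2 h2) (lt_of_le_of_lt hs.2 h3)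
        have h6 := hglow s ⟨hs.1, le_trans hs.2 h2⟩
        show (0:ℝ) + 0 * s ^ 2 ≤ (3 * y s ^ 2 - 1) * δ s
        nlinarith)
    have := h4.2
    rw [hd0] at this
    linarith
  have stepB : ∀ τ, 0 < τ → τ ≤ T → τ < r →
      1 - (3 * b ^ 2 - 1) * τ ^ 2 / 6 ≤ δ τ := by
    intro τ h1 h2 h3
    have h4 := w_lower δ (fun s => (3 * y s ^ 2 - 1) * δ s) τ (3 * b ^ 2 - 1) 0 h1 hdd hdd2
      (hcF τ h1 h2) (fun s hs => hdode s hs)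
      (by
        intro s hs
        have h5 := hdpos s hs.1 (le_trans hs.2 h2) (lt_of_le_of_lt hs.2 h3)
        have h6 := hglow s ⟨hs.1, le_trans hs.2 h2⟩
        have h7 := hghigh s ⟨hs.1, le_trans hs.2 h2⟩
        have h8 : δ s ≤ 1 := by
          rcases eq_or_lt_of_le hs.1 with hc | hc
          · rw [← hc, hd0]
          · exact stepA s hc (le_trans hs.2 h2) (lt_of_le_of_lt hs.2 h3)
        show (3 * y s ^ 2 - 1) * δ s ≤ 3 * b ^ 2 - 1 + 0 * s ^ 2
        nlinarith)
    have := h4.2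
    rw [hd0] at this
    linarith
  have hur : u < r := hulr.2
  obtain ⟨x, hxB, hxr⟩ := (csInf_lt_iff hBbdd hBne).mp hur
  obtain ⟨⟨hx0, hxT⟩, hnP⟩ := hxB
  apply hnP
  rcases eq_or_lt_of_le hx0 with hc | hc
  · rw [← hc]; exact hP0
  · exact ⟨stepB x hc hxT hxr, stepA x hc hxT hxr⟩


lemma Fub_arith (b ys ds s t : ℝ) (hb141 : (1.41:ℝ) ≤ b) (hTs : 3 * b ^ 2 * t ^ 2 ≤ 2)
    (hs0 : 0 ≤ s) (hst : s ≤ t)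
    (hyl : b - (b ^ 3 - b) * s ^ 2 / 6 ≤ ys) (hyu : ys ≤ b)
    (hdl : 1 - (3 * b ^ 2 - 1) * s ^ 2 / 6 ≤ ds) (hdu : ds ≤ 1) :
    (3 * ys ^ 2 - 1) * ds ≤ (3 * b ^ 2 - 1) + 0 * s ^ 2 := by
  have hm := marg b t s hb141 hTs hs0 hst
  have hy1 : 1 ≤ ys := by linarith
  have q3 : (0:ℝ) ≤ 3 * ys ^ 2 - 1 := by nlinarith
  have q4 : 3 * ys ^ 2 - 1 ≤ 3 * b ^ 2 - 1 := by nlinarith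
  have hm2 : (3 * b ^ 2 - 1) * s ^ 2 / 6 ≤ 1 / 3 := by
    have hs2' : s ^ 2 ≤ t ^ 2 := by nlinarith
    have hg0 : (0:ℝ) ≤ 3 * b ^ 2 - 1 := by nlinarith
    have h7 := mul_le_mul_of_nonneg_left hs2' hg0
    nlinarith [sq_nonneg t]
  have hd0s : 0 ≤ ds := by linarith
  nlinarith [mul_le_mul_of_nonneg_left hdu q3]

lemma Flb_arith (b ys ds s t : ℝ) (hb141 : (1.41:ℝ) ≤ b) (hTs : 3 * b ^ 2 * t ^ 2 ≤ 2)
    (hs0 : 0 ≤ s) (hst : s ≤ t)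
    (hyl : b - (b ^ 3 - b) * s ^ 2 / 6 ≤ ys) (hyu : ys ≤ b)
    (hdl : 1 - (3 * b ^ 2 - 1) * s ^ 2 / 6 ≤ ds) (hdu : ds ≤ 1) :
    (3 * b ^ 2 - 1) + -(5 / 2 * b ^ 4) * s ^ 2 ≤ (3 * ys ^ 2 - 1) * ds := by
  have hm := marg b t s hb141 hTs hs0 hst
  have hy1 : 1 ≤ ys := by linarith
  have p1 : (0:ℝ) ≤ b - ys := by linarith
  have p2 : b - ys ≤ (b ^ 3 - b) * s ^ 2 / 6 := by linarith
  have p3 : 3 * (b ^ 2 - ys ^ 2) ≤ 6 * b * (b - ys) := by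
    nlinarith [sq_nonneg (b - ys)]
  have p4 : 6 * b * (b - ys) ≤ 6 * b * ((b ^ 3 - b) * s ^ 2 / 6) :=
    mul_le_mul_of_nonneg_left p2 (by linarith)
  have q1 : (0:ℝ) ≤ 1 - ds := by linarith
  have q2 : 1 - ds ≤ (3 * b ^ 2 - 1) * s ^ 2 / 6 := by linarith
  have q3 : (0:ℝ) ≤ 3 * ys ^ 2 - 1 := by nlinarith
  have q4 : 3 * ys ^ 2 - 1 ≤ 3 * b ^ 2 - 1 := by nlinarith
  have q5 : (3 * ys ^ 2 - 1) * (1 - ds) ≤ (3 * b ^ 2 - 1) * ((3 * b ^ 2 - 1) * s ^ 2 / 6) :=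
    mul_le_mul q4 q2 q1 (by nlinarith)
  nlinarith [p3, p4, q5, mul_nonneg (by nlinarith : (0:ℝ) ≤ 12 * b ^ 2 - 1) (sq_nonneg s)]

theorem picard_approx_delta (b : ℝ) (hb : Real.sqrt 2 ≤ b)
    (y δ : ℝ → ℝ) (hy : IsSolution b y) (hδ : IsVariation y δ) :
    ∀ t : ℝ, 0 ≤ t →
      t ≤ min (Real.sqrt (6 * (Real.sqrt 3 * b - 1) /
          (Real.sqrt 3 * b * (b ^ 2 - 1)))) (Real.log 4 / (Real.sqrt 3 * b)) →
      (1 - (t ^ 2 / 6) * (3 * b ^ 2 - 1) ≤ δ t ∧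
       δ t ≤ 1 - (t ^ 2 / 6) * (3 * b ^ 2 - 1) + (b ^ 4 / 8) * t ^ 4) ∧
      (-(t / 3) * (3 * b ^ 2 - 1) ≤ deriv δ t ∧
       deriv δ t ≤ -(t / 3) * (3 * b ^ 2 - 1) + (b ^ 4 / 2) * t ^ 3) := by
  intro t ht0 htm
  have hb141 : (1.41:ℝ) ≤ b := by
    have h1 : (1.41:ℝ) ≤ Real.sqrt 2 := (Real.le_sqrt (by norm_num) (by norm_num)).mpr (by norm_num)
    linarith
  rcases eq_or_lt_of_le ht0 with h0 | h0
  · rw [← h0]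
    norm_num [hδ.1, hδ.2.1]
  -- arithmetic: 3 b² t² ≤ 2
  have hlog : Real.log 4 ≤ 1.3863 := by
    have h2 : (4:ℝ) = 2 ^ 2 := by norm_num
    rw [h2, Real.log_pow]
    push_cast
    nlinarith [Real.log_two_lt_d9]
  have hlog0 : (0:ℝ) ≤ Real.log 4 := Real.log_nonneg (by norm_num)
  have hsb : 0 < Real.sqrt 3 * b := mul_pos (Real.sqrt_pos.mpr (by norm_num)) (by linarith)
  have ht2 : t ≤ Real.log 4 / (Real.sqrt 3 * b) := le_trans htm (min_le_right _ _)
  have h3 : Real.sqrt 3 * b * t ≤ Real.log 4 := by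
    rw [le_div_iff₀ hsb] at ht2
    linarith
  have hTs : 3 * b ^ 2 * t ^ 2 ≤ 2 := by
    have h4 : (Real.sqrt 3 * b * t) ^ 2 ≤ (Real.log 4) ^ 2 :=
      pow_le_pow_left₀ (by positivity) h3 2
    have h5 : Real.sqrt 3 ^ 2 = 3 := Real.sq_sqrt (by norm_num)
    nlinarith [h4, h5, hlog, hlog0]
  have hyb := ybnd b hb141 y hy t h0 hTs
  have hcy : ∀ x : ℝ, 0 ≤ x → ContinuousAt y x := fun x hx => (hy.2.2.1 x hx).continuousAt
  have hdb := dbnd b hb141 y δ hcy hδ t h0 hTs hyb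
  obtain ⟨hd0, hd0', hdd, hdd2, hdode⟩ := hδ
  have hcd : ∀ x : ℝ, 0 ≤ x → ContinuousAt δ x := fun x hx => (hdd x hx).continuousAt
  have hcF : ContinuousOn (fun s => (3 * y s ^ 2 - 1) * δ s) (Icc 0 t) := by
    have hcy' : ContinuousOn y (Icc 0 t) := fun x hx => (hcy x hx.1).continuousWithinAt
    have hcd' : ContinuousOn δ (Icc 0 t) := fun x hx => (hcd x hx.1).continuousWithinAt
    exact ((continuousOn_const.mul (hcy'.pow 2)).sub continuousOn_const).mul hcd'
  -- pointwise bounds on F = (3 y² - 1) δ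
  have hFub : ∀ s ∈ Icc (0:ℝ) t, (3 * y s ^ 2 - 1) * δ s ≤ (3 * b ^ 2 - 1) + 0 * s ^ 2 := by
    intro s hs
    obtain ⟨hyl, hyu⟩ := hyb s hs
    obtain ⟨hdl, hdu⟩ := hdb s hs
    exact Fub_arith b (y s) (δ s) s t hb141 hTs hs.1 hs.2 hyl hyu hdl hdu
  have hFlb : ∀ s ∈ Icc (0:ℝ) t,
      (3 * b ^ 2 - 1) + -(5 / 2 * b ^ 4) * s ^ 2 ≤ (3 * y s ^ 2 - 1) * δ s := by
    intro s hs
    obtain ⟨hyl, hyu⟩ := hyb s hs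
    obtain ⟨hdl, hdu⟩ := hdb s hs
    exact Flb_arith b (y s) (δ s) s t hb141 hTs hs.1 hs.2 hyl hyu hdl hdu
  have hU := w_upper δ (fun s => (3 * y s ^ 2 - 1) * δ s) t (3 * b ^ 2 - 1) (-(5 / 2 * b ^ 4))
    h0 hdd hdd2 hcF (fun s hs => hdode s hs) hFlb
  have hL := w_lower δ (fun s => (3 * y s ^ 2 - 1) * δ s) t (3 * b ^ 2 - 1) 0
    h0 hdd hdd2 hcF (fun s hs => hdode s hs) hFub
  have hU1 := hU.1 t ⟨h0, le_rfl⟩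
  have hU2 := hU.2
  have hL1 := hL.1 t ⟨h0, le_rfl⟩
  have hL2 := hL.2
  rw [hd0] at hU2 hL2
  refine ⟨⟨by nlinarith [hL2], by nlinarith [hU2]⟩, by nlinarith [hL1], by nlinarith [hU1]⟩
end
end

section
/- Suppose 0 < β ≤ 1/10, and let w be the solution of ẅ(s) + (2/s)ẇ(s) + w(s)³ − β²w(s) = 0 with w(0) = 1, ẇ(0) = 0. Let w̃(t) = 1 − ((1 − β²)/6)t² and u(t) = −((1 − β²)/3)t. Then for all t ≥ 0: w̃(t) ≤ w(t) ≤ w̃(t) + t⁴/40 and u(t) ≤ ẇ(t) ≤ u(t) + t³/10. -/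
open Set Filter MeasureTheory intervalIntegral
open scoped Topology

set_option maxHeartbeats 1000000


noncomputable section

/-- `w` solves the rescaled ODE `w'' + (2/s) w' + (w^3 - β^2 w) = 0` on
`(0,∞)` with `w(0) = 1`, `w'(0) = 0`. -/
def IsSolutionW (β : ℝ) (w : ℝ → ℝ) : Prop :=
  w 0 = 1 ∧ deriv w 0 = 0 ∧
  (∀ t : ℝ, 0 ≤ t → DifferentiableAt ℝ w t) ∧
  (∀ t : ℝ, 0 < t → DifferentiableAt ℝ (deriv w) t) ∧
  ∀ t : ℝ, 0 < t →
    deriv (deriv w) t + (2 / t) * deriv w t + ((w t) ^ 3 - β ^ 2 * w t) = 0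

theorem picard_approx_w (β : ℝ) (hβ0 : 0 < β) (hβ : β ≤ 1 / 10)
    (w : ℝ → ℝ) (hw : IsSolutionW β w) :
    ∀ t : ℝ, 0 ≤ t →
      (1 - ((1 - β ^ 2) / 6) * t ^ 2 ≤ w t ∧
       w t ≤ 1 - ((1 - β ^ 2) / 6) * t ^ 2 + t ^ 4 / 40) ∧
      (-((1 - β ^ 2) / 3) * t ≤ deriv w t ∧
       deriv w t ≤ -((1 - β ^ 2) / 3) * t + t ^ 3 / 10) := by
  obtain ⟨hw0, hdw0, hdiff, hdiff', hode⟩ := hw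
  set c : ℝ := 1 - β ^ 2 with hc
  have hβ2 : β ^ 2 ≤ 1 / 100 := by nlinarith
  have hc0 : 0 < c := by nlinarith
  have hc1 : c ≤ 1 := by nlinarith
  set F : ℝ → ℝ := fun r => (w r) ^ 3 - β ^ 2 * w r with hF
  set G : ℝ → ℝ := fun s => s ^ 2 * deriv w s with hG
  have hwc : ContinuousOn w (Ici 0) := fun t ht =>
    ((hdiff t ht).continuousAt).continuousWithinAt
  have hdwc : ContinuousOn (deriv w) (Ioi 0) := fun t ht =>
    ((hdiff' t ht).continuousAt).continuousWithinAt
  have hFc0 : ContinuousOn F (Ici 0) := (hwc.pow 3).sub (continuousOn_const.mul hwc)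
  have hFc : ContinuousOn (fun r => r ^ 2 * F r) (Ici 0) :=
    (continuousOn_pow 2).mul hFc0
  have hFint : ∀ a b : ℝ, 0 ≤ a → 0 ≤ b →
      IntervalIntegrable (fun r => r ^ 2 * F r) volume a b := by
    intro a b ha hb
    apply (hFc.mono ?_).intervalIntegrable
    intro x hx
    rcases Set.mem_uIcc.mp hx with h | h
    · exact le_trans ha h.1
    · exact le_trans hb h.1
  have hGd : ∀ s : ℝ, 0 < s → HasDerivAt G (-(s ^ 2 * F s)) s := by
    intro s hs
    have h1 : HasDerivAt (fun x : ℝ => x ^ 2) (2 * s) s := by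
      simpa using hasDerivAt_pow 2 s
    have h2 := (hdiff' s hs).hasDerivAt
    have h := h1.mul h2
    refine h.congr_deriv ?_
    have hode' : deriv (deriv w) s = -(2 / s) * deriv w s - F s := by
      have := hode s hs; simp only [hF]; linarith
    rw [hode']
    field_simp
    ring
  have hFTC : ∀ a b : ℝ, 0 < a → 0 < b →
      G b - G a = -∫ r in a..b, r ^ 2 * F r := by
    intro a b ha hb
    have hsub : uIcc a b ⊆ Ioi 0 := by
      intro x hx
      rcases Set.mem_uIcc.mp hx with h | h
      · exact lt_of_lt_of_le ha h.1
      · exact lt_of_lt_of_le hb h.1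
    have h := intervalIntegral.integral_eq_sub_of_hasDerivAt
      (f := G) (f' := fun r => -(r ^ 2 * F r))
      (fun x hx => hGd x (hsub hx)) ((hFint a b ha.le hb.le).neg)
    rw [intervalIntegral.integral_neg] at h
    linarith
  -- integral representation of the derivative
  obtain ⟨M, hM⟩ : ∃ M, ∀ x ∈ Icc (0:ℝ) 1, |F x| ≤ M := by
    obtain ⟨C, hC⟩ := isCompact_Icc.exists_bound_of_continuousOn
      (hFc0.mono (fun x hx => hx.1))
    exact ⟨C, fun x hx => hC x hx⟩
  have hM0 : 0 ≤ M := le_trans (abs_nonneg _) (hM 0 ⟨le_rfl, by norm_num⟩)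
  set H : ℝ → ℝ := fun s => ∫ r in (0:ℝ)..s, r ^ 2 * F r with hH
  have hHb : ∀ s : ℝ, 0 < s → s ≤ 1 → |H s| ≤ M * s ^ 3 := by
    intro s hs hs1
    have hb : ∀ x ∈ Set.uIoc (0:ℝ) s, ‖x ^ 2 * F x‖ ≤ M * s ^ 2 := by
      intro x hx
      rw [Set.uIoc_of_le hs.le] at hx
      have hx0 : 0 < x := hx.1
      have hxs : x ≤ s := hx.2
      have hFx : |F x| ≤ M := hM x ⟨hx0.le, le_trans hxs hs1⟩
      rw [Real.norm_eq_abs, abs_mul, abs_pow, abs_of_pos hx0]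
      have h2 : x ^ 2 ≤ s ^ 2 := by nlinarith
      nlinarith [abs_nonneg (F x)]
    have := intervalIntegral.norm_integral_le_of_norm_le_const hb
    rw [Real.norm_eq_abs] at this
    calc |H s| ≤ M * s ^ 2 * |s - 0| := this
      _ = M * s ^ 3 := by rw [sub_zero, abs_of_pos hs]; ring
  set A : ℝ := G 1 + H 1 with hA
  have hGs : ∀ s : ℝ, 0 < s → s ≤ 1 → G s = A - H s := by
    intro s hs hs1
    have h1 := hFTC s 1 hs one_pos
    have h2 : H s + ∫ r in s..(1:ℝ), r ^ 2 * F r = H 1 :=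
      intervalIntegral.integral_add_adjacent_intervals
        (hFint 0 s le_rfl hs.le) (hFint s 1 hs.le zero_le_one)
    have h3 : (∫ r in s..(1:ℝ), r ^ 2 * F r) = H 1 - H s := by linarith
    rw [h3] at h1
    linarith
  have hA0 : A = 0 := by
    by_contra hA0
    have habs : 0 < |A| := abs_pos.mpr hA0
    obtain ⟨K, hK⟩ : ∃ K, ∀ x ∈ Icc (0:ℝ) 1, |w x| ≤ K := by
      obtain ⟨C, hC⟩ := isCompact_Icc.exists_bound_of_continuousOn
        (hwc.mono (fun x hx => hx.1))
      exact ⟨C, fun x hx => hC x hx⟩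
    have hK0 : 0 ≤ K := le_trans (abs_nonneg _) (hK 0 ⟨le_rfl, by norm_num⟩)
    set s₀ : ℝ := min 1 (|A| / (2 * M + 2)) with hs₀
    have hs₀pos : 0 < s₀ := lt_min one_pos (div_pos habs (by linarith))
    have hs₀le1 : s₀ ≤ 1 := min_le_left _ _
    set σ : ℝ := if 0 < A then 1 else -1 with hσ
    have hσA : σ * A = |A| := by
      rw [hσ]
      rcases lt_trichotomy 0 A with h | h | h
      · rw [if_pos h, abs_of_pos h]; ring
      · exact absurd h.symm hA0
      · rw [if_neg (by linarith), abs_of_neg h]; ring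
    have hσ1 : |σ| = 1 := by
      rw [hσ]
      rcases le_or_gt A 0 with h | h
      · rw [if_neg (by linarith)]; norm_num
      · rw [if_pos h]; norm_num
    have hlow : ∀ s : ℝ, 0 < s → s ≤ s₀ → |A| / 2 * (s ^ 2)⁻¹ ≤ σ * deriv w s := by
      intro s hs hss
      have hs1 : s ≤ 1 := le_trans hss hs₀le1
      have hGs' := hGs s hs hs1
      have hHs : |H s| ≤ M * s := by
        have h3 := hHb s hs hs1
        have h4 : M * s ^ 3 ≤ M * s := by
          nlinarith [mul_nonneg (mul_nonneg hM0 hs.le)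
            (mul_nonneg (sub_nonneg.mpr hs1) (by linarith : (0:ℝ) ≤ 1 + s))]
        linarith
      have hsA : M * s ≤ |A| / 2 := by
        have h1 : s ≤ |A| / (2 * M + 2) := le_trans hss (min_le_right _ _)
        have h2 : M * s ≤ M * (|A| / (2 * M + 2)) :=
          mul_le_mul_of_nonneg_left h1 hM0
        have h3 : M * (|A| / (2 * M + 2)) ≤ |A| / 2 := by
          rw [show M * (|A| / (2 * M + 2)) = M * |A| / (2 * M + 2) by ring,
            div_le_div_iff₀ (by linarith) (by norm_num)]
          nlinarith
        linarith
      have hσH : |A| / 2 ≤ σ * (s ^ 2 * deriv w s) := by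
        have hGval : G s = s ^ 2 * deriv w s := by rw [hG]
        rw [← hGval, hGs', mul_sub, hσA]
        have habsH : |σ * H s| ≤ M * s := by
          rw [abs_mul, hσ1, one_mul]; exact hHs
        have := (abs_le.mp habsH).2
        linarith
      have hs2 : 0 < s ^ 2 := by positivity
      have heq : |A| / 2 * (s ^ 2)⁻¹ * s ^ 2 = |A| / 2 := by field_simp
      nlinarith [hσH, hs2, heq]
    -- choose ε
    set R : ℝ := 2 * K + |A| / 2 * s₀⁻¹ with hR
    have hR0 : 0 < R + 1 := by positivity
    set ε : ℝ := min (s₀ / 2) (|A| / (2 * (R + 1))) with hε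
    have hεpos : 0 < ε := lt_min (by linarith) (div_pos habs (by positivity))
    have hεs₀ : ε < s₀ := lt_of_le_of_lt (min_le_left _ _) (by linarith)
    have hεA : ε ≤ |A| / (2 * (R + 1)) := min_le_right _ _
    have hinv : R + 1 ≤ |A| / 2 * ε⁻¹ := by
      have h2 : (R + 1) * ε ≤ |A| / 2 := by
        calc (R + 1) * ε ≤ (R + 1) * (|A| / (2 * (R + 1))) :=
              mul_le_mul_of_nonneg_left hεA (by linarith)
          _ = |A| / 2 := by field_simp
      have h3 := mul_le_mul_of_nonneg_right h2 (inv_nonneg.mpr hεpos.le)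
      calc R + 1 = (R + 1) * ε * ε⁻¹ := by field_simp
        _ ≤ |A| / 2 * ε⁻¹ := h3
    -- integral identities
    have hsub : uIcc ε s₀ ⊆ Ioi 0 := by
      rw [uIcc_of_le hεs₀.le]
      intro x hx; exact lt_of_lt_of_le hεpos hx.1
    have hintinv : IntervalIntegrable (fun s : ℝ => |A| / 2 * (s ^ 2)⁻¹) volume ε s₀ := by
      apply ContinuousOn.intervalIntegrable
      apply ContinuousOn.mul continuousOn_const
      apply ContinuousOn.inv₀ (continuousOn_pow 2)
      intro x hx
      exact pow_ne_zero 2 (hsub hx).ne'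
    have hFTCinv : ∫ s in ε..s₀, |A| / 2 * (s ^ 2)⁻¹ = |A| / 2 * ε⁻¹ - |A| / 2 * s₀⁻¹ := by
      have hderiv : ∀ x ∈ uIcc ε s₀,
          HasDerivAt (fun s : ℝ => -(|A| / 2) * s⁻¹) (|A| / 2 * (x ^ 2)⁻¹) x := by
        intro x hx
        have hx0 : 0 < x := hsub hx
        have h := (hasDerivAt_inv hx0.ne').const_mul (-(|A| / 2))
        refine h.congr_deriv ?_
        ring
      rw [intervalIntegral.integral_eq_sub_of_hasDerivAt hderiv hintinv]
      ring
    have hintw : IntervalIntegrable (fun s => σ * deriv w s) volume ε s₀ := by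
      apply ContinuousOn.intervalIntegrable
      exact continuousOn_const.mul (hdwc.mono hsub)
    have hwFTC : ∫ s in ε..s₀, σ * deriv w s = σ * (w s₀ - w ε) := by
      rw [intervalIntegral.integral_const_mul]
      congr 1
      apply intervalIntegral.integral_eq_sub_of_hasDerivAt
      · intro x hx; exact (hdiff x (hsub hx).le).hasDerivAt
      · exact (hdwc.mono hsub).intervalIntegrable
    have hmono := intervalIntegral.integral_mono_on hεs₀.le hintinv hintw
      (fun x hx => hlow x (lt_of_lt_of_le hεpos hx.1) hx.2)
    rw [hFTCinv, hwFTC] at hmono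
    have hb1 : |w s₀| ≤ K := hK s₀ ⟨hs₀pos.le, hs₀le1⟩
    have hb2 : |w ε| ≤ K := hK ε ⟨hεpos.le, by linarith⟩
    have hub : σ * (w s₀ - w ε) ≤ 2 * K := by
      calc σ * (w s₀ - w ε) ≤ |σ * (w s₀ - w ε)| := le_abs_self _
        _ = |w s₀ - w ε| := by rw [abs_mul, hσ1, one_mul]
        _ ≤ |w s₀| + |w ε| := abs_sub _ _
        _ ≤ 2 * K := by linarith
    linarith
  have hGint : ∀ t : ℝ, 0 < t → t ^ 2 * deriv w t = - ∫ r in (0:ℝ)..t, r ^ 2 * F r := by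
    intro t ht
    have hspos : 0 < min t 1 := lt_min ht one_pos
    have hsle1 : min t 1 ≤ 1 := min_le_right _ _
    have hslet : min t 1 ≤ t := min_le_left _ _
    have h1 := hFTC (min t 1) t hspos ht
    have h2 : H (min t 1) + ∫ r in (min t 1)..t, r ^ 2 * F r = H t :=
      intervalIntegral.integral_add_adjacent_intervals
        (hFint 0 (min t 1) le_rfl hspos.le) (hFint (min t 1) t hspos.le ht.le)
    have h3 := hGs (min t 1) hspos hsle1
    rw [hA0] at h3
    have hHt : H t = ∫ r in (0:ℝ)..t, r ^ 2 * F r := rfl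
    have hGt : G t = t ^ 2 * deriv w t := by rw [hG]
    linarith
  -- small-time bound on deriv w
  have hdwb : ∀ s : ℝ, 0 < s → s ≤ 1 → |deriv w s| ≤ M * s := by
    intro s hs hs1
    have hb : ∀ x ∈ Set.uIoc (0:ℝ) s, ‖x ^ 2 * F x‖ ≤ M * s ^ 2 := by
      intro x hx
      rw [Set.uIoc_of_le hs.le] at hx
      have hx0 : 0 < x := hx.1
      have hFx : |F x| ≤ M := hM x ⟨hx0.le, le_trans hx.2 hs1⟩
      rw [Real.norm_eq_abs, abs_mul, abs_pow, abs_of_pos hx0]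
      have h2 : x ^ 2 ≤ s ^ 2 := by nlinarith [hx.2]
      nlinarith [abs_nonneg (F x)]
    have h := intervalIntegral.norm_integral_le_of_norm_le_const hb
    rw [Real.norm_eq_abs] at h
    have h2 : |s ^ 2 * deriv w s| ≤ M * s ^ 3 := by
      rw [hGint s hs, abs_neg]
      calc |∫ r in (0:ℝ)..s, r ^ 2 * F r| ≤ M * s ^ 2 * |s - 0| := h
        _ = M * s ^ 3 := by rw [sub_zero, abs_of_pos hs]; ring
    rw [abs_mul, abs_pow, abs_of_pos hs] at h2
    have hs2 : 0 < s ^ 2 := by positivity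
    nlinarith [abs_nonneg (deriv w s)]
  have hdw0' : Tendsto (deriv w) (𝓝[>] (0:ℝ)) (𝓝 0) := by
    apply squeeze_zero_norm' (a := fun s => M * s)
    · filter_upwards [Ioc_mem_nhdsGT_of_mem (by constructor <;> norm_num : (0:ℝ) ∈ Ico 0 1)] with s hs
      exact hdwb s hs.1 hs.2
    · have : Tendsto (fun s : ℝ => M * s) (𝓝 0) (𝓝 (M * 0)) :=
        (continuous_const.mul continuous_id).tendsto 0
      rw [mul_zero] at this
      exact this.mono_left nhdsWithin_le_nhds
  have hwt : Tendsto w (𝓝[>] (0:ℝ)) (𝓝 1) := by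
    have h := (hdiff 0 le_rfl).continuousAt.tendsto
    rw [hw0] at h
    exact h.mono_left nhdsWithin_le_nhds
  -- energy
  set Ee : ℝ → ℝ := fun t =>
    1 / 2 * (deriv w t) ^ 2 + 1 / 4 * (w t) ^ 4 - β ^ 2 / 2 * (w t) ^ 2 with hEe
  have hEd : ∀ t : ℝ, 0 < t → HasDerivAt Ee (-(2 / t) * (deriv w t) ^ 2) t := by
    intro t ht
    have hww := (hdiff t ht.le).hasDerivAt
    have hdw := (hdiff' t ht).hasDerivAt
    have h1 := (hdw.pow 2).const_mul (1 / 2 : ℝ)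
    have h2 := (hww.pow 4).const_mul (1 / 4 : ℝ)
    have h3 := (hww.pow 2).const_mul (β ^ 2 / 2 : ℝ)
    have h := (h1.add h2).sub h3
    refine h.congr_deriv ?_
    have hode' : deriv (deriv w) t = -(2 / t) * deriv w t - ((w t) ^ 3 - β ^ 2 * w t) := by
      have := hode t ht; linarith
    rw [hode']
    push_cast
    ring
  have hEanti : AntitoneOn Ee (Ioi 0) := by
    apply antitoneOn_of_deriv_nonpos (convex_Ioi 0)
    · intro t ht
      exact (hEd t ht).continuousAt.continuousWithinAt
    · rw [interior_Ioi]
      intro t ht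
      exact (hEd t ht).differentiableAt.differentiableWithinAt
    · rw [interior_Ioi]
      intro t ht
      rw [(hEd t ht).deriv]
      have ht' : (0:ℝ) < t := ht
      have h2t : 0 ≤ 2 / t := by positivity
      nlinarith [sq_nonneg (deriv w t)]
  have hEt : Tendsto Ee (𝓝[>] (0:ℝ)) (𝓝 (1 / 4 - β ^ 2 / 2)) := by
    have h1 : Tendsto (fun t => 1 / 2 * (deriv w t) ^ 2) (𝓝[>] (0:ℝ)) (𝓝 0) := by
      have := (hdw0'.pow 2).const_mul (1 / 2 : ℝ)
      simpa using this
    have h2 : Tendsto (fun t => 1 / 4 * (w t) ^ 4) (𝓝[>] (0:ℝ)) (𝓝 (1 / 4)) := by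
      have := (hwt.pow 4).const_mul (1 / 4 : ℝ)
      simpa using this
    have h3 : Tendsto (fun t => β ^ 2 / 2 * (w t) ^ 2) (𝓝[>] (0:ℝ)) (𝓝 (β ^ 2 / 2)) := by
      have := (hwt.pow 2).const_mul (β ^ 2 / 2 : ℝ)
      simpa using this
    rw [hEe]
    convert (h1.add h2).sub h3 using 2
    norm_num
  have hEle : ∀ t : ℝ, 0 < t → Ee t ≤ 1 / 4 - β ^ 2 / 2 := by
    intro t ht
    apply ge_of_tendsto hEt
    filter_upwards [Ioo_mem_nhdsGT_of_mem (by constructor <;> [norm_num; exact ht] : (0:ℝ) ∈ Ico 0 t)] with s hs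
    exact hEanti hs.1 ht hs.2.le
  have hwle : ∀ t : ℝ, 0 ≤ t → (w t) ^ 2 ≤ 1 := by
    intro t ht
    rcases eq_or_lt_of_le ht with h | h
    · rw [← h, hw0]; norm_num
    · have h1 := hEle t h
      rw [hEe] at h1
      by_contra h2
      push_neg at h2
      nlinarith [sq_nonneg (deriv w t)]
  have hFle : ∀ s : ℝ, 0 ≤ s → F s ≤ c := by
    intro s hs
    have h := hwle s hs
    have h2 : w s ≤ 1 := by nlinarith
    have hfacpos : 0 ≤ 1 + w s + (w s) ^ 2 - β ^ 2 := by nlinarith [sq_nonneg (w s + 1/2)]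
    have hprod : 0 ≤ (1 - w s) * (1 + w s + (w s) ^ 2 - β ^ 2) :=
      mul_nonneg (by linarith) hfacpos
    rw [hF]
    dsimp only
    nlinarith [hprod]
  have hdlow : ∀ t : ℝ, 0 ≤ t → -(c / 3) * t ≤ deriv w t := by
    intro t ht
    rcases eq_or_lt_of_le ht with h | h
    · rw [← h, hdw0]; norm_num
    · have hGt := hGint t h
      have hmono : (∫ r in (0:ℝ)..t, r ^ 2 * F r) ≤ ∫ r in (0:ℝ)..t, c * r ^ 2 := by
        apply intervalIntegral.integral_mono_on h.le (hFint 0 t le_rfl h.le)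
          ((continuous_const.mul (continuous_pow 2)).intervalIntegrable _ _)
        intro x hx
        have h1 := hFle x hx.1
        show x ^ 2 * F x ≤ c * x ^ 2
        nlinarith [sq_nonneg x]
      have hval : (∫ r in (0:ℝ)..t, c * r ^ 2) = c * t ^ 3 / 3 := by
        rw [intervalIntegral.integral_const_mul, integral_pow]
        push_cast
        ring
      rw [hval] at hmono
      have key : -(c * t ^ 3 / 3) ≤ t ^ 2 * deriv w t := by rw [hGt]; linarith
      have ht2 : 0 < t ^ 2 := by positivity
      rw [← mul_le_mul_iff_right₀ ht2,
        show t ^ 2 * (-(c / 3) * t) = -(c * t ^ 3 / 3) from by ring]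
      exact key
  have hwlow : ∀ t : ℝ, 0 ≤ t → 1 - c / 6 * t ^ 2 ≤ w t := by
    have hmono : MonotoneOn (fun s => w s + c / 6 * s ^ 2) (Ici 0) := by
      apply monotoneOn_of_deriv_nonneg (convex_Ici 0)
      · exact hwc.add (Continuous.continuousOn (continuous_const.mul (continuous_pow 2)))
      · rw [interior_Ici]
        intro x hx
        exact ((hdiff x (le_of_lt hx)).add (by fun_prop)).differentiableWithinAt
      · rw [interior_Ici]
        intro x hx
        have hps : HasDerivAt (fun s : ℝ => c / 6 * s ^ 2) (c / 6 * (2 * x)) x := by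
          have := (hasDerivAt_pow 2 x).const_mul (c / 6 : ℝ)
          norm_num at this
          convert this using 1
          try ring
        have hd : HasDerivAt (fun s => w s + c / 6 * s ^ 2) (deriv w x + c / 6 * (2 * x)) x :=
          ((hdiff x hx.le).hasDerivAt).add hps
        rw [hd.deriv]
        have := hdlow x hx.le
        linarith
    intro t ht
    have h := hmono Set.self_mem_Ici ht ht
    norm_num [hw0] at h
    linarith
  have hFge : ∀ s : ℝ, 0 ≤ s → c * (1 - s ^ 2 / 2) ≤ F s := by
    intro s hs
    have h := hwle s hs
    have h2 : w s ≤ 1 := by nlinarith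
    have h1 : -1 ≤ w s := by nlinarith
    have hlow := hwlow s hs
    have hfac : 1 + w s + (w s) ^ 2 - β ^ 2 ≤ 3 := by nlinarith
    have hfacpos : 0 ≤ 1 + w s + (w s) ^ 2 - β ^ 2 := by nlinarith [sq_nonneg (w s + 1/2)]
    have hprod : (1 - w s) * (1 + w s + (w s) ^ 2 - β ^ 2) ≤ (c / 6 * s ^ 2) * 3 :=
      mul_le_mul (by linarith) hfac hfacpos (by positivity)
    rw [hF]
    dsimp only
    nlinarith [hprod]
  have hdup : ∀ t : ℝ, 0 ≤ t → deriv w t ≤ -(c / 3) * t + t ^ 3 / 10 := by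
    intro t ht
    rcases eq_or_lt_of_le ht with h | h
    · rw [← h, hdw0]; norm_num
    · have hGt := hGint t h
      have hmono : (∫ r in (0:ℝ)..t, c * (r ^ 2 - r ^ 4 / 2)) ≤ ∫ r in (0:ℝ)..t, r ^ 2 * F r := by
        apply intervalIntegral.integral_mono_on h.le
          ((continuous_const.mul ((continuous_pow 2).sub ((continuous_pow 4).div_const 2))).intervalIntegrable _ _)
          (hFint 0 t le_rfl h.le)
        intro x hx
        have h1 := hFge x hx.1
        have hx2 : (0:ℝ) ≤ x ^ 2 := sq_nonneg x
        show c * (x ^ 2 - x ^ 4 / 2) ≤ x ^ 2 * F x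
        nlinarith [mul_le_mul_of_nonneg_left h1 hx2]
      have hval : (∫ r in (0:ℝ)..t, c * (r ^ 2 - r ^ 4 / 2)) = c * (t ^ 3 / 3 - t ^ 5 / 10) := by
        rw [intervalIntegral.integral_const_mul]
        rw [intervalIntegral.integral_sub ((continuous_pow 2).intervalIntegrable _ _)
          (((continuous_pow 4).div_const 2).intervalIntegrable _ _)]
        rw [integral_pow]
        rw [intervalIntegral.integral_div, integral_pow]
        push_cast
        ring
      rw [hval] at hmono
      have key : t ^ 2 * deriv w t ≤ -(c * (t ^ 3 / 3 - t ^ 5 / 10)) := by rw [hGt]; linarith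
      have ht2 : 0 < t ^ 2 := by positivity
      have ht5 : 0 < t ^ 5 := pow_pos h 5
      rw [← mul_le_mul_iff_right₀ ht2]
      calc t ^ 2 * deriv w t ≤ -(c * (t ^ 3 / 3 - t ^ 5 / 10)) := key
        _ ≤ t ^ 2 * (-(c / 3) * t + t ^ 3 / 10) := by nlinarith [ht5, hc1]
  have hwup : ∀ t : ℝ, 0 ≤ t → w t ≤ 1 - c / 6 * t ^ 2 + t ^ 4 / 40 := by
    have hanti : AntitoneOn (fun s => w s + c / 6 * s ^ 2 - s ^ 4 / 40) (Ici 0) := by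
      apply antitoneOn_of_deriv_nonpos (convex_Ici 0)
      · exact (hwc.add (Continuous.continuousOn (continuous_const.mul (continuous_pow 2)))).sub
          (Continuous.continuousOn ((continuous_pow 4).div_const 40))
      · rw [interior_Ici]
        intro x hx
        exact (((hdiff x hx.le).add (by fun_prop)).sub (by fun_prop)).differentiableWithinAt
      · rw [interior_Ici]
        intro x hx
        have hps : HasDerivAt (fun s : ℝ => c / 6 * s ^ 2) (c / 6 * (2 * x)) x := by
          have := (hasDerivAt_pow 2 x).const_mul (c / 6 : ℝ)
          norm_num at this
          convert this using 1
          try ring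
        have hps4 : HasDerivAt (fun s : ℝ => s ^ 4 / 40) (4 * x ^ 3 / 40) x := by
          have := (hasDerivAt_pow 4 x).div_const (40 : ℝ)
          norm_num at this
          convert this using 1
          try ring
        have hd : HasDerivAt (fun s => w s + c / 6 * s ^ 2 - s ^ 4 / 40)
            (deriv w x + c / 6 * (2 * x) - 4 * x ^ 3 / 40) x := (((hdiff x hx.le).hasDerivAt).add hps).sub hps4
        rw [hd.deriv]
        have := hdup x hx.le
        linarith
    intro t ht
    have h := hanti Set.self_mem_Ici ht ht
    norm_num [hw0] at h
    linarith
  intro t ht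
  exact ⟨⟨hwlow t ht, hwup t ht⟩, hdlow t ht, hdup t ht⟩
end
end

section
/- For 0 < β < 1, let w solve the rescaled initial value problem. Then the energy E_β(t) = (1/2)ẇ(t)² + (1/4)w(t)⁴ − (1/2)β²w(t)² is nonincreasing on [0,∞), and consequently |w(t)| ≤ 1 for all t ≥ 0. -/
noncomputable section

set_option maxHeartbeats 1000000 in
theorem w_energy_monotone (β : ℝ) (hβ0 : 0 < β) (hβ1 : β < 1)
    (w : ℝ → ℝ) (hw : IsSolutionW β w) :
    AntitoneOn (fun t => (1 / 2) * (deriv w t) ^ 2 +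
      (1 / 4) * (w t) ^ 4 - (1 / 2) * β ^ 2 * (w t) ^ 2) (Set.Ici 0) ∧
    ∀ t : ℝ, 0 ≤ t → |w t| ≤ 1 := by
  obtain ⟨hw0, hw'0, hdiff, hdiff', hode⟩ := hw
  set E : ℝ → ℝ := fun t => (1 / 2) * (deriv w t) ^ 2 +
      (1 / 4) * (w t) ^ 4 - (1 / 2) * β ^ 2 * (w t) ^ 2 with hE
  -- derivative of the energy on (0,∞)
  have hEderiv : ∀ t : ℝ, 0 < t →
      HasDerivAt E (-(2 / t) * (deriv w t) ^ 2) t := by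
    intro t ht
    have h1 : HasDerivAt w (deriv w t) t := (hdiff t ht.le).hasDerivAt
    have h2 : HasDerivAt (deriv w) (deriv (deriv w) t) t := (hdiff' t ht).hasDerivAt
    have hA := (h2.pow 2).const_mul (1 / 2 : ℝ)
    have hB := (h1.pow 4).const_mul (1 / 4 : ℝ)
    have hC := (h1.pow 2).const_mul ((1 / 2 : ℝ) * β ^ 2)
    have hEd := (hA.add hB).sub hC
    have hdd : deriv (deriv w) t =
        -((2 / t) * deriv w t) - ((w t) ^ 3 - β ^ 2 * w t) := by
      have := hode t ht; linarith
    convert hEd using 1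
    case e'_4 => rfl
    case e'_5 => rfl
    case e'_8 => rfl
    rw [hdd]; ring
  -- antitone on every Ici a with a > 0
  have key : ∀ a b : ℝ, 0 < a → a ≤ b → E b ≤ E a := by
    intro a b ha hab
    have hanti : AntitoneOn E (Set.Ici a) := by
      apply antitoneOn_of_deriv_nonpos (convex_Ici a)
      · intro t ht
        exact ((hEderiv t (lt_of_lt_of_le ha ht)).differentiableAt).continuousAt.continuousWithinAt
      · intro t ht
        rw [interior_Ici] at ht
        exact (hEderiv t (ha.trans ht)).differentiableAt.differentiableWithinAt
      · intro t ht
        rw [interior_Ici] at ht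
        have htpos : 0 < t := ha.trans ht
        rw [(hEderiv t htpos).deriv]
        have : 0 ≤ (2 / t) * (deriv w t) ^ 2 := by positivity
        linarith
    exact hanti (Set.self_mem_Ici) hab hab
  -- E 0 value
  have hE0 : E 0 = 1 / 4 - (1 / 2) * β ^ 2 := by
    simp only [hE, hw0, hw'0]; ring
  -- E b ≤ E 0 for b > 0, via the ε-argument
  have key0 : ∀ b : ℝ, 0 < b → E b ≤ E 0 := by
    intro b hb
    refine le_of_forall_pos_le_add ?_
    intro ε hε
    -- continuity of the potential part at 0
    have hwc : ContinuousAt w 0 := (hdiff 0 le_rfl).continuousAt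
    have hVc : ContinuousAt (fun s => (1 / 4) * (w s) ^ 4 - (1 / 2) * β ^ 2 * (w s) ^ 2) 0 := by
      fun_prop
    obtain ⟨δ₁, hδ₁pos, hδ₁⟩ := Metric.continuousAt_iff.mp hVc (ε / 2) (by linarith)
    -- slope of w at 0 tends to deriv w 0 = 0
    have hslope : Filter.Tendsto (slope w 0) (nhdsWithin 0 {x | x ≠ 0}) (nhds 0) := by
      have := hasDerivAt_iff_tendsto_slope.mp ((hdiff 0 le_rfl).hasDerivAt)
      rwa [hw'0] at this
    obtain ⟨δ₂, hδ₂pos, hδ₂⟩ := Metric.tendsto_nhdsWithin_nhds.mp hslope (min 1 ε)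
      (lt_min one_pos hε)
    -- choose a small s
    set s : ℝ := min b (min δ₁ δ₂) / 2 with hs
    have hspos : 0 < s := by positivity
    have hsb : s ≤ b := by
      have : min b (min δ₁ δ₂) ≤ b := min_le_left _ _
      linarith
    have hsδ₁ : s < δ₁ := by
      have h1 : min b (min δ₁ δ₂) ≤ δ₁ := le_trans (min_le_right _ _) (min_le_left _ _)
      have := hδ₁pos; simp only [hs]; linarith
    have hsδ₂ : s < δ₂ := by
      have h1 : min b (min δ₁ δ₂) ≤ δ₂ := le_trans (min_le_right _ _) (min_le_right _ _)
      have := hδ₂pos; simp only [hs]; linarith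
    -- mean value theorem on [0, s]
    have hcont : ContinuousOn w (Set.Icc 0 s) := fun x hx =>
      ((hdiff x hx.1).continuousAt).continuousWithinAt
    have hdiffOn : DifferentiableOn ℝ w (Set.Ioo 0 s) := fun x hx =>
      (hdiff x hx.1.le).differentiableWithinAt
    obtain ⟨c, hc, hcd⟩ := exists_deriv_eq_slope w hspos hcont hdiffOn
    -- the slope at s is small
    have hslope_small : |(w s - w 0) / (s - 0)| < min 1 ε := by
      have hd : dist (slope w 0 s) 0 < min 1 ε := by
        apply hδ₂
        · exact ne_of_gt hspos
        · rw [Real.dist_eq, sub_zero, abs_of_pos hspos]; exact hsδ₂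
      rw [Real.dist_eq, sub_zero] at hd
      rw [slope_def_field] at hd
      exact hd
    have hcd' : |deriv w c| < min 1 ε := by rw [hcd]; exact hslope_small
    -- the derivative part of the energy at c is < ε/2
    have hderiv_small : (1 / 2) * (deriv w c) ^ 2 < ε / 2 := by
      have h1 : |deriv w c| < 1 := lt_of_lt_of_le hcd' (min_le_left _ _)
      have h2 : |deriv w c| < ε := lt_of_lt_of_le hcd' (min_le_right _ _)
      have h3 : (deriv w c) ^ 2 ≤ |deriv w c| := by
        rw [← sq_abs]
        nlinarith [abs_nonneg (deriv w c)]
      nlinarith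
    -- the potential part of the energy at c is < V(1) + ε/2
    have hpot_small : (1 / 4) * (w c) ^ 4 - (1 / 2) * β ^ 2 * (w c) ^ 2 <
        (1 / 4) - (1 / 2) * β ^ 2 + ε / 2 := by
      have hcδ₁ : dist c 0 < δ₁ := by
        rw [Real.dist_eq, sub_zero, abs_of_pos hc.1]
        exact hc.2.trans hsδ₁
      have := hδ₁ hcδ₁
      rw [Real.dist_eq] at this
      have h0 : (1 / 4) * (w 0) ^ 4 - (1 / 2) * β ^ 2 * (w 0) ^ 2 =
          (1 / 4) - (1 / 2) * β ^ 2 := by rw [hw0]; ring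
      have := abs_lt.mp this
      linarith [this.2]
    -- combine
    have hEc : E c < E 0 + ε := by
      rw [hE0]; simp only [hE]; linarith
    have hEbc : E b ≤ E c := key c b hc.1 (le_trans hc.2.le hsb)
    linarith
  -- full antitonicity on Ici 0
  have hanti : AntitoneOn E (Set.Ici 0) := by
    intro a ha b hb hab
    rcases eq_or_lt_of_le (Set.mem_Ici.mp ha) with h0a | h0a
    · rcases eq_or_lt_of_le hab with hab' | hab'
      · rw [hab']
      · rw [← h0a]
        exact key0 b (h0a ▸ hab'.trans_le le_rfl)
    · exact key a b h0a hab
  refine ⟨hanti, ?_⟩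
  intro t ht
  have hEt : E t ≤ E 0 := hanti Set.self_mem_Ici ht ht
  rw [hE0] at hEt
  simp only [hE] at hEt
  have hd2 : 0 ≤ (deriv w t) ^ 2 := sq_nonneg _
  have haw : |w t| ^ 2 = (w t) ^ 2 := sq_abs _
  have haw4 : |w t| ^ 4 = (w t) ^ 4 := by
    rw [show (4:ℕ) = 2 * 2 by norm_num, pow_mul, pow_mul, sq_abs]
  by_contra hcon
  push_neg at hcon
  have hu : 1 < (w t) ^ 2 := by nlinarith [abs_nonneg (w t)]
  have hprod : 0 < ((w t) ^ 2 - 1) * ((w t) ^ 2 + 1 - 2 * β ^ 2) :=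
    mul_pos (by linarith) (by nlinarith)
  nlinarith [hprod]
end
end

section
/- Let y = y_b be the global solution of the initial value problem for any b ∈ ℝ. Then there exists a strictly increasing unbounded sequence of times (t_j) such that (y(t_j), ẏ(t_j)) converges, as j → ∞, to one of the three points (0,0), (1,0), or (−1,0). -/
noncomputable section

open Filter Set

set_option maxHeartbeats 1000000

namespace CTaux

variable {y : ℝ → ℝ}

lemma mono_of_hasDerivAt {g G : ℝ → ℝ} {a : ℝ}
    (hg : ∀ t, a ≤ t → HasDerivAt g (G t) t)
    (hG : ∀ t, a ≤ t → 0 ≤ G t) : MonotoneOn g (Set.Ici a) := by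
  apply monotoneOn_of_deriv_nonneg (convex_Ici a)
  · exact fun t ht => (hg t ht).differentiableAt.continuousAt.continuousWithinAt
  · intro t ht
    rw [interior_Ici] at ht
    exact (hg t (le_of_lt ht)).differentiableAt.differentiableWithinAt
  · intro t ht
    rw [interior_Ici] at ht
    rw [(hg t (le_of_lt ht)).deriv]
    exact hG t (le_of_lt ht)

variable {y : ℝ → ℝ}

lemma energy_hasDerivAt
    (hd1 : ∀ t : ℝ, 0 ≤ t → DifferentiableAt ℝ y t)
    (hd2 : ∀ t : ℝ, 0 < t → DifferentiableAt ℝ (deriv y) t)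
    (hode : ∀ t : ℝ, 0 < t →
      deriv (deriv y) t + (2 / t) * deriv y t + ((y t) ^ 3 - y t) = 0)
    {t : ℝ} (ht : 0 < t) :
    HasDerivAt (energy y) (-((2 / t) * (deriv y t) ^ 2)) t := by
  have hyt : HasDerivAt y (deriv y t) t := (hd1 t ht.le).hasDerivAt
  have hvt : HasDerivAt (deriv y) (deriv (deriv y) t) t := (hd2 t ht).hasDerivAt
  have h := (((hvt.pow 2).const_mul ((1:ℝ)/2)).add
      ((hyt.pow 4).const_mul ((1:ℝ)/4))).sub ((hyt.pow 2).const_mul ((1:ℝ)/2))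
  have heq : deriv (deriv y) t = -((2 / t) * deriv y t + ((y t) ^ 3 - y t)) := by
    have := hode t ht; linarith
  have h2 : HasDerivAt (energy y)
      (1 / 2 * (↑2 * deriv y t ^ (2 - 1) * deriv (deriv y) t) +
        1 / 4 * (↑4 * y t ^ (4 - 1) * deriv y t) -
        1 / 2 * (↑2 * y t ^ (2 - 1) * deriv y t)) t := h
  convert h2 using 1
  rw [heq]
  push_cast
  ring

lemma W_hasDerivAt
    (hd1 : ∀ t : ℝ, 0 ≤ t → DifferentiableAt ℝ y t)
    (hd2 : ∀ t : ℝ, 0 < t → DifferentiableAt ℝ (deriv y) t)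
    (hode : ∀ t : ℝ, 0 < t →
      deriv (deriv y) t + (2 / t) * deriv y t + ((y t) ^ 3 - y t) = 0)
    {t : ℝ} (ht : 0 < t) :
    HasDerivAt (fun s => deriv y s * ((y s) ^ 3 - y s))
      (-(((y t) ^ 3 - y t) ^ 2) - (2 / t) * deriv y t * ((y t) ^ 3 - y t)
        + (3 * (y t) ^ 2 - 1) * (deriv y t) ^ 2) t := by
  have hyt : HasDerivAt y (deriv y t) t := (hd1 t ht.le).hasDerivAt
  have hvt : HasDerivAt (deriv y) (deriv (deriv y) t) t := (hd2 t ht).hasDerivAt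
  have h := hvt.mul ((hyt.pow 3).sub hyt)
  have heq : deriv (deriv y) t = -((2 / t) * deriv y t + ((y t) ^ 3 - y t)) := by
    have := hode t ht; linarith
  refine HasDerivAt.congr_deriv h ?_
  rw [heq]
  simp only [Pi.sub_apply, Pi.pow_apply]
  push_cast
  ring


lemma key {b : ℝ} {y : ℝ → ℝ} (hy : IsSolution b y) {ε : ℝ} (hε : 0 < ε) (T : ℝ) :
    ∃ t, T ≤ t ∧
      ((|y t - 0| < ε ∧ |deriv y t| < ε) ∨ (|y t - 1| < ε ∧ |deriv y t| < ε) ∨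
        (|y t - (-1)| < ε ∧ |deriv y t| < ε)) := by
  obtain ⟨hy0, hdy0, hd1, hd2, hode⟩ := hy
  by_contra hcon
  push_neg at hcon
  set T0 : ℝ := max T 1 with hT0def
  have hT0 : (1:ℝ) ≤ T0 := le_max_right _ _
  have hT0pos : (0:ℝ) < T0 := lt_of_lt_of_le one_pos hT0
  set e1 : ℝ := energy y 1 with he1def
  -- energy is monotone decreasing on [1, ∞)
  have hEmono : MonotoneOn (fun s => -energy y s) (Set.Ici 1) := by
    apply mono_of_hasDerivAt (G := fun t => (2 / t) * (deriv y t) ^ 2)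
    · intro t ht
      have h := (energy_hasDerivAt hd1 hd2 hode (lt_of_lt_of_le one_pos ht)).neg
      rwa [neg_neg] at h
    · intro t ht
      have htpos : (0:ℝ) < t := lt_of_lt_of_le one_pos ht
      positivity
  have hEle : ∀ t, 1 ≤ t → energy y t ≤ e1 := by
    intro t ht
    have := hEmono (self_mem_Ici) (mem_Ici.mpr ht) ht
    simp only at this
    linarith
  have hElb : ∀ t : ℝ, -(1/4 : ℝ) ≤ energy y t := by
    intro t
    unfold energy
    nlinarith [sq_nonneg ((y t) ^ 2 - 1), sq_nonneg (deriv y t)]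
  have he1lb : -(1/4 : ℝ) ≤ e1 := hElb 1
  -- pointwise bounds
  obtain ⟨R2, hR2def⟩ : ∃ x : ℝ, x = 2 * e1 + 2 := ⟨_, rfl⟩
  obtain ⟨P2, hP2def⟩ : ∃ x : ℝ, x = 2 * e1 + 1/2 := ⟨_, rfl⟩
  obtain ⟨B, hBdef⟩ : ∃ x : ℝ, x = 3 * R2 + 1 := ⟨_, rfl⟩
  obtain ⟨F2, hF2def⟩ : ∃ x : ℝ, x = R2 * (R2 + 1) ^ 2 := ⟨_, rfl⟩
  obtain ⟨C2, hC2def⟩ : ∃ x : ℝ, x = P2 + F2 := ⟨_, rfl⟩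
  obtain ⟨cc, hccdef⟩ : ∃ x : ℝ, x = min (ε ^ 2) (ε ^ 6) := ⟨_, rfl⟩
  have hR2pos : (0:ℝ) < R2 := by rw [hR2def]; linarith
  have hP2nonneg : (0:ℝ) ≤ P2 := by rw [hP2def]; linarith
  have hBpos : (0:ℝ) < 1 + B := by rw [hBdef]; linarith
  have hF2nonneg : (0:ℝ) ≤ F2 := by rw [hF2def]; positivity
  have hC2nonneg : (0:ℝ) ≤ C2 := by rw [hC2def]; linarith
  have hccpos : (0:ℝ) < cc := by
    rw [hccdef]; exact lt_min (by positivity) (by positivity)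
  have hP : ∀ t, 1 ≤ t → (deriv y t) ^ 2 ≤ P2 := by
    intro t ht
    have h1 := hEle t ht
    unfold energy at h1
    rw [hP2def]
    nlinarith [sq_nonneg ((y t) ^ 2 - 1)]
  have hR : ∀ t, 1 ≤ t → (y t) ^ 2 ≤ R2 := by
    intro t ht
    have h1 := hEle t ht
    unfold energy at h1
    rw [hR2def]
    nlinarith [sq_nonneg ((y t) ^ 2 - 2), sq_nonneg (deriv y t)]
  have hF : ∀ t, 1 ≤ t → ((y t) ^ 3 - y t) ^ 2 ≤ F2 := by
    intro t ht
    have h1 := hR t ht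
    have hR2' : (0:ℝ) < R2 := hR2pos
    have h2 : ((y t) ^ 2 - 1) ^ 2 ≤ (R2 + 1) ^ 2 := by
      nlinarith [sq_nonneg (y t)]
    have h3 : ((y t) ^ 3 - y t) ^ 2 = (y t) ^ 2 * ((y t) ^ 2 - 1) ^ 2 := by ring
    rw [h3, hF2def]
    nlinarith [sq_nonneg ((y t) ^ 2 - 1)]
  -- the angle condition
  have hlow : ∀ t, T0 ≤ t → cc ≤ (deriv y t) ^ 2 + ((y t) ^ 3 - y t) ^ 2 := by
    intro t ht
    have hTt : T ≤ t := le_trans (le_max_left _ _) ht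
    have hc := hcon t hTt
    rcases le_or_gt ε |deriv y t| with hv | hv
    · have : ε ^ 2 ≤ (deriv y t) ^ 2 := by
        have := sq_abs (deriv y t)
        nlinarith [abs_nonneg (deriv y t)]
      calc cc ≤ ε ^ 2 := by rw [hccdef]; exact min_le_left _ _
        _ ≤ (deriv y t) ^ 2 + ((y t) ^ 3 - y t) ^ 2 := by nlinarith [sq_nonneg ((y t)^3 - y t)]
    · have h0 : ε ≤ |y t - 0| := by
        by_contra h; exact absurd (hc.1 (not_le.mp h)) (not_le.mpr hv)
      have h1 : ε ≤ |y t - 1| := by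
        by_contra h; exact absurd (hc.2.1 (not_le.mp h)) (not_le.mpr hv)
      have h2 : ε ≤ |y t - (-1)| := by
        by_contra h; exact absurd (hc.2.2 (not_le.mp h)) (not_le.mpr hv)
      have e0 : ε ^ 2 ≤ (y t) ^ 2 := by
        have := sq_abs (y t - 0); nlinarith [abs_nonneg (y t - 0)]
      have e1' : ε ^ 2 ≤ (y t - 1) ^ 2 := by
        have := sq_abs (y t - 1); nlinarith [abs_nonneg (y t - 1)]
      have e2 : ε ^ 2 ≤ (y t + 1) ^ 2 := by
        have := sq_abs (y t - (-1)); nlinarith [abs_nonneg (y t - (-1))]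
      have hmul1 : ε ^ 2 * ε ^ 2 ≤ (y t) ^ 2 * (y t - 1) ^ 2 :=
        mul_le_mul e0 e1' (by positivity) (sq_nonneg _)
      have hmul2 : ε ^ 2 * ε ^ 2 * ε ^ 2 ≤ (y t) ^ 2 * (y t - 1) ^ 2 * (y t + 1) ^ 2 :=
        mul_le_mul hmul1 e2 (by positivity) (by positivity)
      have hfy : ((y t) ^ 3 - y t) ^ 2 = (y t) ^ 2 * (y t - 1) ^ 2 * (y t + 1) ^ 2 := by ring
      calc cc ≤ ε ^ 6 := by rw [hccdef]; exact min_le_right _ _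
        _ = ε ^ 2 * ε ^ 2 * ε ^ 2 := by ring
        _ ≤ ((y t) ^ 3 - y t) ^ 2 := by rw [hfy]; exact hmul2
        _ ≤ (deriv y t) ^ 2 + ((y t) ^ 3 - y t) ^ 2 := by nlinarith [sq_nonneg (deriv y t)]
  -- W and its bounds
  set W : ℝ → ℝ := fun s => deriv y s * ((y s) ^ 3 - y s) with hWdef
  have hWbd : ∀ t, 1 ≤ t → -C2 ≤ W t ∧ W t ≤ C2 := by
    intro t ht
    have h1 := hP t ht
    have h2 := hF t ht
    simp only [hWdef]
    rw [hC2def]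
    constructor
    · nlinarith [sq_nonneg (deriv y t + ((y t) ^ 3 - y t))]
    · nlinarith [sq_nonneg (deriv y t - ((y t) ^ 3 - y t))]
  -- continuity of (deriv y)^2 on (0,∞)
  have hvcont : ContinuousOn (fun s => (deriv y s) ^ 2) (Set.Ioi (0:ℝ)) := by
    intro s hs
    exact ((hd2 s hs).continuousAt.pow 2).continuousWithinAt
  set A : ℝ → ℝ := fun t => ∫ s in T0..t, (deriv y s) ^ 2 with hAdef
  have hA : ∀ t, 0 < t → HasDerivAt A ((deriv y t) ^ 2) t := by
    intro t ht
    apply intervalIntegral.integral_hasDerivAt_right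
    · apply ContinuousOn.intervalIntegrable
      apply hvcont.mono
      intro s hs
      rcases Set.mem_uIcc.mp hs with ⟨h1, _⟩ | ⟨h1, _⟩
      · exact lt_of_lt_of_le hT0pos h1
      · exact lt_of_lt_of_le ht h1
    · exact ContinuousOn.stronglyMeasurableAtFilter isOpen_Ioi hvcont t ht
    · exact (hd2 t ht).continuousAt.pow 2
  have hAnonneg : ∀ t, T0 ≤ t → 0 ≤ A t := by
    intro t ht
    exact intervalIntegral.integral_nonneg ht (fun u _ => sq_nonneg _)
  have hAT0 : A T0 = 0 := intervalIntegral.integral_same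
  -- Phi and its monotonicity
  set Φ : ℝ → ℝ := fun s => (1 + B) * A s - cc * s + C2 * Real.log s - W s with hΦdef
  set GΦ : ℝ → ℝ := fun s => ((deriv y s) ^ 2 + ((y s) ^ 3 - y s) ^ 2 - cc)
      + (B - (3 * (y s) ^ 2 - 1)) * (deriv y s) ^ 2
      + (C2 + 2 * deriv y s * ((y s) ^ 3 - y s)) * s⁻¹ with hGΦdef
  have hΦd : ∀ t, T0 ≤ t → HasDerivAt Φ (GΦ t) t := by
    intro t ht
    have htpos : (0:ℝ) < t := lt_of_lt_of_le hT0pos ht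
    have h1 := (hA t htpos).const_mul (1 + B)
    have h2 := (hasDerivAt_id t).const_mul cc
    have h3 := (Real.hasDerivAt_log (ne_of_gt htpos)).const_mul C2
    have h4 := W_hasDerivAt hd1 hd2 hode htpos
    have h := ((h1.sub h2).add h3).sub h4
    refine HasDerivAt.congr_deriv h ?_
    simp only [hGΦdef, div_eq_mul_inv]
    ring
  have hGΦnonneg : ∀ t, T0 ≤ t → 0 ≤ GΦ t := by
    intro t ht
    have ht1 : (1:ℝ) ≤ t := le_trans hT0 ht
    have htpos : (0:ℝ) < t := lt_of_lt_of_le hT0pos ht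
    have hlow' := hlow t ht
    have hP' := hP t ht1
    have hF' := hF t ht1
    have hR' := hR t ht1
    have hB1 : 0 ≤ (B - (3 * (y t) ^ 2 - 1)) * (deriv y t) ^ 2 := by
      apply mul_nonneg _ (sq_nonneg _)
      rw [hBdef]
      nlinarith [hR']
    have hB2 : 0 ≤ (C2 + 2 * deriv y t * ((y t) ^ 3 - y t)) * t⁻¹ := by
      apply mul_nonneg _ (inv_nonneg.mpr htpos.le)
      rw [hC2def]
      nlinarith [sq_nonneg (deriv y t + ((y t) ^ 3 - y t)), hP', hF']
    have h5 : 0 ≤ (deriv y t) ^ 2 + ((y t) ^ 3 - y t) ^ 2 - cc := by linarith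
    simp only [hGΦdef]
    linarith [h5, hB1, hB2]
  have hΦmono := mono_of_hasDerivAt hΦd hGΦnonneg
  have hAlb : ∀ t, T0 ≤ t →
      cc * t - C2 * Real.log t - (cc * T0 - C2 * Real.log T0 + W T0 + C2) ≤ (1 + B) * A t := by
    intro t ht
    have h := hΦmono (self_mem_Ici (a := T0)) (mem_Ici.mpr ht) ht
    simp only [hΦdef] at h
    rw [hAT0] at h
    have hw := (hWbd t (le_trans hT0 ht)).1
    linarith
  -- eventual linear growth of A
  obtain ⟨α, hαdef⟩ : ∃ x : ℝ, x = cc / (2 * (1 + B)) := ⟨_, rfl⟩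
  have hαpos : (0:ℝ) < α := by rw [hαdef]; positivity
  obtain ⟨K, hKdef⟩ : ∃ x : ℝ, x = cc * T0 - C2 * Real.log T0 + W T0 + C2 := ⟨_, rfl⟩
  have hev1 : ∀ᶠ t : ℝ in atTop, C2 * Real.log t ≤ cc/4 * t := by
    have h := (Real.isLittleO_log_id_atTop.const_mul_left C2).def
      (show (0:ℝ) < cc/4 by positivity)
    filter_upwards [h, eventually_ge_atTop (0:ℝ)] with t h1 h2
    simp only [Real.norm_eq_abs, id_eq] at h1
    calc C2 * Real.log t ≤ |C2 * Real.log t| := le_abs_self _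
      _ ≤ cc/4 * |t| := h1
      _ = cc/4 * t := by rw [abs_of_nonneg h2]
  have hev2 : ∀ᶠ t : ℝ in atTop, K ≤ cc/4 * t := by
    have h : Tendsto (fun t : ℝ => cc/4 * t) atTop atTop :=
      Tendsto.const_mul_atTop (by positivity) tendsto_id
    exact h.eventually_ge_atTop K
  obtain ⟨T2, hT2⟩ : ∃ T2, ∀ t, T2 ≤ t → (T0 ≤ t ∧ α * t ≤ A t) := by
    obtain ⟨a, ha⟩ := eventually_atTop.mp ((hev1.and hev2).and (eventually_ge_atTop T0))
    refine ⟨a, fun t ht => ?_⟩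
    obtain ⟨⟨h1, h2⟩, h3⟩ := ha t ht
    refine ⟨h3, ?_⟩
    have h4 := hAlb t h3
    have h5 : (1 + B) * (α * t) = cc/2 * t := by
      rw [hαdef]; field_simp
    have h6 : (1 + B) * (α * t) ≤ (1 + B) * A t := by
      rw [h5]
      have := hKdef ▸ h4
      linarith
    exact le_of_mul_le_mul_left h6 hBpos
  set Θ : ℝ → ℝ := fun s => -(energy y s)/2 - A s / s - α/2 * Real.log s with hΘdef
  set GΘ : ℝ → ℝ := fun s => (A s - α/2 * s) / s^2 with hGΘdef
  have hΘd : ∀ t, T2 ≤ t → HasDerivAt Θ (GΘ t) t := by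
    intro t ht
    obtain ⟨hT0t, hAt⟩ := hT2 t ht
    have htpos : (0:ℝ) < t := lt_of_lt_of_le hT0pos hT0t
    have htne : t ≠ 0 := ne_of_gt htpos
    have h1 := (energy_hasDerivAt hd1 hd2 hode htpos).neg.div_const 2
    have h2 := (hA t htpos).div (hasDerivAt_id t) htne
    have h3 := (Real.hasDerivAt_log htne).const_mul (α/2)
    have h := (h1.sub h2).sub h3
    refine HasDerivAt.congr_deriv h ?_
    simp only [hGΘdef, id_eq]
    field_simp
    ring
  have hGΘnonneg : ∀ t, T2 ≤ t → 0 ≤ GΘ t := by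
    intro t ht
    obtain ⟨hT0t, hAt⟩ := hT2 t ht
    have htpos : (0:ℝ) < t := lt_of_lt_of_le hT0pos hT0t
    simp only [hGΘdef]
    apply div_nonneg _ (sq_nonneg t)
    have h1 : 0 ≤ α/2 * t := by positivity
    nlinarith [hAt]
  have hΘmono := mono_of_hasDerivAt hΘd hGΘnonneg
  obtain ⟨M0, hM0⟩ : ∃ x : ℝ, x = Θ T2 := ⟨_, rfl⟩
  have hfinal : ∀ t, T2 ≤ t → α/2 * Real.log t ≤ 1/8 - M0 := by
    intro t ht
    have h := hΘmono (self_mem_Ici (a := T2)) (mem_Ici.mpr ht) ht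
    rw [← hM0] at h
    obtain ⟨hT0t, hAt⟩ := hT2 t ht
    have htpos : (0:ℝ) < t := lt_of_lt_of_le hT0pos hT0t
    have hE := hElb t
    have hAn : 0 ≤ A t / t := div_nonneg (hAnonneg t hT0t) htpos.le
    have hΘt : Θ t = -(energy y t)/2 - A t / t - α/2 * Real.log t := by
      simp only [hΘdef]
    rw [hΘt] at h
    linarith
  obtain ⟨t, htlog, htT2⟩ : ∃ t : ℝ,
      ((1/8 - M0 + 1) / (α/2)) ≤ Real.log t ∧ T2 ≤ t :=
    ((Real.tendsto_log_atTop.eventually_ge_atTop _).and (eventually_ge_atTop T2)).exists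
  have h1 := hfinal t htT2
  have h2 : α/2 * ((1/8 - M0 + 1)/(α/2)) ≤ α/2 * Real.log t :=
    mul_le_mul_of_nonneg_left htlog (by positivity)
  have h3 : α/2 * ((1/8 - M0 + 1)/(α/2)) = 1/8 - M0 + 1 := by
    rw [mul_comm, div_mul_cancel₀ _ (ne_of_gt (show (0:ℝ) < α/2 by positivity))]
  linarith




lemma conv_of_infinite (y : ℝ → ℝ) (t : ℕ → ℝ) (hmono : StrictMono t)
    (htend : Tendsto t atTop atTop) (r : ℝ) (S : Set ℕ) (hS : S.Infinite)
    (hmem : ∀ n ∈ S, |y (t n) - r| < 1/((n:ℝ)+1) ∧ |deriv y (t n)| < 1/((n:ℝ)+1)) :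
    ∃ u : ℕ → ℝ, StrictMono u ∧ Tendsto u atTop atTop ∧
      Tendsto (fun j => (y (u j), deriv y (u j))) atTop (nhds (r, 0)) := by
  obtain ⟨φ, hφ, hφS⟩ :=
    Filter.extraction_of_frequently_atTop (Nat.frequently_atTop_iff_infinite.mpr hS)
  refine ⟨t ∘ φ, hmono.comp hφ, htend.comp hφ.tendsto_atTop, ?_⟩
  have h1 : Tendsto (fun j : ℕ => 1/((φ j : ℝ)+1)) atTop (nhds 0) := by
    apply squeeze_zero (fun j => by positivity) (g := fun j : ℕ => 1/((j:ℝ)+1))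
      (fun j => ?_) tendsto_one_div_add_atTop_nhds_zero_nat
    apply one_div_le_one_div_of_le (by positivity)
    have h2 : ((j:ℝ)) ≤ ((φ j : ℕ) : ℝ) := Nat.cast_le.mpr (hφ.le_apply (x := j))
    linarith
  have hy' : Tendsto (fun j => y ((t ∘ φ) j)) atTop (nhds r) := by
    rw [tendsto_iff_dist_tendsto_zero]
    apply squeeze_zero (fun _ => dist_nonneg) (fun j => ?_) h1
    rw [Real.dist_eq]
    exact (hmem (φ j) (hφS j)).1.le
  have hv' : Tendsto (fun j => deriv y ((t ∘ φ) j)) atTop (nhds 0) := by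
    rw [tendsto_iff_dist_tendsto_zero]
    apply squeeze_zero (fun _ => dist_nonneg) (fun j => ?_) h1
    rw [Real.dist_eq, sub_zero]
    exact (hmem (φ j) (hφS j)).2.le
  exact hy'.prodMk_nhds hv'


end CTaux

open CTaux in
theorem convergent_timestamps (b : ℝ) (y : ℝ → ℝ) (hy : IsSolution b y) :
    ∃ t : ℕ → ℝ, StrictMono t ∧ Filter.Tendsto t Filter.atTop Filter.atTop ∧
      (Filter.Tendsto (fun j => (y (t j), deriv y (t j))) Filter.atTop
          (nhds (0, 0)) ∨
       Filter.Tendsto (fun j => (y (t j), deriv y (t j))) Filter.atTop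
          (nhds (1, 0)) ∨
       Filter.Tendsto (fun j => (y (t j), deriv y (t j))) Filter.atTop
          (nhds (-1, 0))) := by
  have hex : ∀ (n : ℕ) (T : ℝ), ∃ t, T ≤ t ∧
      ((|y t - 0| < 1/((n:ℝ)+1) ∧ |deriv y t| < 1/((n:ℝ)+1)) ∨
       (|y t - 1| < 1/((n:ℝ)+1) ∧ |deriv y t| < 1/((n:ℝ)+1)) ∨
       (|y t - (-1)| < 1/((n:ℝ)+1) ∧ |deriv y t| < 1/((n:ℝ)+1))) :=
    fun n T => key hy (by positivity) T
  choose g hg1 hg2 using hex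
  let t : ℕ → ℝ := fun n => Nat.rec (g 0 1) (fun n tn => g (n+1) (tn + 1)) n
  have htsucc : ∀ n, t (n+1) = g (n+1) (t n + 1) := fun n => rfl
  have hstep : ∀ n, t n + 1 ≤ t (n+1) := fun n => by
    rw [htsucc]; exact hg1 (n+1) (t n + 1)
  have hmono : StrictMono t :=
    strictMono_nat_of_lt_succ (fun n => lt_of_lt_of_le (lt_add_one _) (hstep n))
  have hlb : ∀ n : ℕ, t 0 + n ≤ t n := by
    intro n
    induction n with
    | zero => simp
    | succ n ih =>
      have := hstep n
      push_cast
      push_cast at ih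
      linarith
  have htend : Tendsto t atTop atTop :=
    tendsto_atTop_mono hlb (tendsto_atTop_add_const_left _ _ tendsto_natCast_atTop_atTop)
  have hprop : ∀ n : ℕ,
      ((|y (t n) - 0| < 1/((n:ℝ)+1) ∧ |deriv y (t n)| < 1/((n:ℝ)+1)) ∨
       (|y (t n) - 1| < 1/((n:ℝ)+1) ∧ |deriv y (t n)| < 1/((n:ℝ)+1)) ∨
       (|y (t n) - (-1)| < 1/((n:ℝ)+1) ∧ |deriv y (t n)| < 1/((n:ℝ)+1))) := by
    intro n
    cases n with
    | zero => exact hg2 0 1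
    | succ n => rw [htsucc]; exact hg2 (n+1) (t n + 1)
  set S0 : Set ℕ := {n | |y (t n) - 0| < 1/((n:ℝ)+1) ∧ |deriv y (t n)| < 1/((n:ℝ)+1)} with hS0
  set S1 : Set ℕ := {n | |y (t n) - 1| < 1/((n:ℝ)+1) ∧ |deriv y (t n)| < 1/((n:ℝ)+1)} with hS1
  set S2 : Set ℕ := {n | |y (t n) - (-1)| < 1/((n:ℝ)+1) ∧ |deriv y (t n)| < 1/((n:ℝ)+1)} with hS2
  have hinf : S0.Infinite ∨ S1.Infinite ∨ S2.Infinite := by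
    by_contra h
    push_neg at h
    obtain ⟨h0, h1, h2⟩ := h
    have huniv : (Set.univ : Set ℕ).Finite := by
      apply Set.Finite.subset ((h0.union h1).union h2)
      intro n _
      rcases hprop n with h | h | h
      · exact Or.inl (Or.inl h)
      · exact Or.inl (Or.inr h)
      · exact Or.inr h
    exact Set.infinite_univ huniv
  rcases hinf with h | h | h
  · obtain ⟨u, h1, h2, h3⟩ := conv_of_infinite y t hmono htend 0 S0 h (fun n hn => hn)
    exact ⟨u, h1, h2, Or.inl h3⟩
  · obtain ⟨u, h1, h2, h3⟩ := conv_of_infinite y t hmono htend 1 S1 h (fun n hn => hn)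
    exact ⟨u, h1, h2, Or.inr (Or.inl h3)⟩
  · obtain ⟨u, h1, h2, h3⟩ := conv_of_infinite y t hmono htend (-1) S2 h (fun n hn => hn)
    exact ⟨u, h1, h2, Or.inr (Or.inr h3)⟩
end
end
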